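/- arXiv:2504.11978 — 5 statements merged into one kernel-verified Lean document; each statement's English description precedes it below -/
import Mathlib

section
/- Let A, X, Y, G be jointly distributed random variables on a probability space, each taking values in a finite nonempty set. If I[X : G | (A, Y)] = 0 and I[A : Y | X] = 0, then I[A : X | G] = 0 and I[A : Y | G] = 0 together imply I[A : (X, Y) | G] = 0 (dual conditional Ingleton criterion for Composition, case (ii)). -/
open MeasureTheory ProbabilityTheory

/-- Shannon entropy (natural logarithm) of a random variable with values in a
finite set, computed from its distribution under `μ`. -/
noncomputable def Hshannon {Ω : Type*} [MeasurableSpace Ω] (μ : Measure Ω)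
    {S : Type*} [Fintype S] (X : Ω → S) : ℝ :=
  ∑ x : S, Real.negMulLog (μ (X ⁻¹' {x})).toReal

/-- Conditional entropy `H[X | Y] = H[X, Y] - H[Y]`. -/
noncomputable def condH {Ω : Type*} [MeasurableSpace Ω] (μ : Measure Ω)
    {S T : Type*} [Fintype S] [Fintype T] (X : Ω → S) (Y : Ω → T) : ℝ :=
  Hshannon μ (fun ω => (X ω, Y ω)) - Hshannon μ Y

/-- Mutual information `I[X : Y] = H[X] + H[Y] - H[X, Y]`. -/
noncomputable def mutInfo {Ω : Type*} [MeasurableSpace Ω] (μ : Measure Ω)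
    {S T : Type*} [Fintype S] [Fintype T] (X : Ω → S) (Y : Ω → T) : ℝ :=
  Hshannon μ X + Hshannon μ Y - Hshannon μ (fun ω => (X ω, Y ω))

/-- Conditional mutual information
`I[X : Y | Z] = H[X, Z] + H[Y, Z] - H[X, Y, Z] - H[Z]`. -/
noncomputable def cmi {Ω : Type*} [MeasurableSpace Ω] (μ : Measure Ω)
    {S T U : Type*} [Fintype S] [Fintype T] [Fintype U]
    (X : Ω → S) (Y : Ω → T) (Z : Ω → U) : ℝ :=
  Hshannon μ (fun ω => (X ω, Z ω)) + Hshannon μ (fun ω => (Y ω, Z ω))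
    - Hshannon μ (fun ω => (X ω, Y ω, Z ω)) - Hshannon μ Z

open scoped Classical

set_option linter.unusedSectionVars false
set_option linter.unusedVariables false
set_option maxHeartbeats 1000000

namespace DualIngletonAux


/-- Gibbs' inequality, equality case. -/
lemma gibbs_eq {ι : Type*} [Fintype ι] {u q : ι → ℝ}
    (hu : ∀ i, 0 ≤ u i) (hq : ∀ i, 0 ≤ q i)
    (hsum : ∑ i, q i ≤ ∑ i, u i)
    (hac : ∀ i, 0 < u i → 0 < q i)
    (hzero : ∑ i, u i * (Real.log (u i) - Real.log (q i)) = 0) :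
    ∀ i, u i = q i := by
  set φ : ι → ℝ := fun i => u i * (Real.log (u i) - Real.log (q i)) - (u i - q i) with hφdef
  have hφ : ∀ i, 0 ≤ φ i := by
    intro i
    rcases eq_or_lt_of_le (hu i) with h | h
    · simp only [hφdef, ← h, zero_mul, zero_sub, sub_neg_eq_add, zero_add]
      exact hq i
    · have hqi := hac i h
      have hlog : Real.log (q i / u i) ≤ q i / u i - 1 :=
        Real.log_le_sub_one_of_pos (by positivity)
      have hld : Real.log (q i / u i) = Real.log (q i) - Real.log (u i) :=
        Real.log_div (ne_of_gt hqi) (ne_of_gt h)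
      have : 1 - q i / u i ≤ Real.log (u i) - Real.log (q i) := by
        linarith [hlog, hld]
      have h2 : u i * (1 - q i / u i) ≤ u i * (Real.log (u i) - Real.log (q i)) :=
        mul_le_mul_of_nonneg_left this (le_of_lt h)
      have h3 : u i * (1 - q i / u i) = u i - q i := by
        field_simp
      simp only [hφdef]
      linarith
  have hsumφ : ∑ i, φ i = 0 := by
    have h1 : ∑ i, φ i = (∑ i, u i * (Real.log (u i) - Real.log (q i))) - ((∑ i, u i) - ∑ i, q i) := by
      rw [Finset.sum_sub_distrib, Finset.sum_sub_distrib]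
    have h2 : 0 ≤ ∑ i, φ i := Finset.sum_nonneg fun i _ => hφ i
    rw [h1, hzero] at h2 ⊢
    linarith
  have hall : ∀ i ∈ Finset.univ, φ i = 0 :=
    (Finset.sum_eq_zero_iff_of_nonneg fun i _ => hφ i).1 hsumφ
  intro i
  have hi := hall i (Finset.mem_univ i)
  rcases eq_or_lt_of_le (hu i) with h | h
  · -- u i = 0 : φ i = q i
    simp only [hφdef, ← h, zero_mul, zero_sub, sub_neg_eq_add, zero_add] at hi
    rw [← h, hi]
  · have hqi := hac i h
    by_contra hne
    have hstrict : Real.log (q i / u i) < q i / u i - 1 := by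
      apply Real.log_lt_sub_one_of_pos (by positivity)
      intro hone
      apply hne
      field_simp at hone
      linarith
    have hld : Real.log (q i / u i) = Real.log (q i) - Real.log (u i) :=
      Real.log_div (ne_of_gt hqi) (ne_of_gt h)
    have h4 : 1 - q i / u i < Real.log (u i) - Real.log (q i) := by
      linarith [hstrict, hld]
    have h2 : u i * (1 - q i / u i) < u i * (Real.log (u i) - Real.log (q i)) :=
      (mul_lt_mul_iff_right₀ h).2 h4
    have h3 : u i * (1 - q i / u i) = u i - q i := by field_simp
    simp only [hφdef] at hi
    linarith

/-- Uniqueness of Sinkhorn-type scalings with equal marginals. -/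
lemma sinkhorn {ιX ιY : Type*} [Fintype ιX] [Fintype ιY]
    (K : ιX → ιY → ℝ) (f f' : ιX → ℝ) (h h' : ιY → ℝ)
    (hK : ∀ x y, 0 ≤ K x y) (hf : ∀ x, 0 ≤ f x) (hf' : ∀ x, 0 ≤ f' x)
    (hh : ∀ y, 0 ≤ h y) (hh' : ∀ y, 0 ≤ h' y)
    (hrow : ∀ x, ∑ y, f x * K x y * h y = ∑ y, f' x * K x y * h' y)
    (hcol : ∀ y, ∑ x, f x * K x y * h y = ∑ x, f' x * K x y * h' y) :
    ∀ x y, f x * K x y * h y = f' x * K x y * h' y := by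
  set r : ιX → ιY → ℝ := fun x y => f x * K x y * h y with hrdef
  set r' : ιX → ιY → ℝ := fun x y => f' x * K x y * h' y with hr'def
  have hrpos : ∀ x y, 0 ≤ r x y := fun x y => by
    exact mul_nonneg (mul_nonneg (hf x) (hK x y)) (hh y)
  have hr'pos : ∀ x y, 0 ≤ r' x y := fun x y => by
    exact mul_nonneg (mul_nonneg (hf' x) (hK x y)) (hh' y)
  set Φ : ιX → ιY → ℝ := fun x y =>
    (Real.log (f x) - Real.log (f' x)) + (Real.log (h y) - Real.log (h' y)) with hΦdef
  -- the total sum is zero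
  have hS : ∑ x, ∑ y, (r x y - r' x y) * Φ x y = 0 := by
    have e1 : ∑ x, ∑ y, (r x y - r' x y) * (Real.log (f x) - Real.log (f' x)) = 0 := by
      apply Finset.sum_eq_zero; intro x _
      rw [← Finset.sum_mul]
      have : ∑ y, (r x y - r' x y) = 0 := by
        rw [Finset.sum_sub_distrib, hrow x]; ring
      rw [this, zero_mul]
    have e2 : ∑ x, ∑ y, (r x y - r' x y) * (Real.log (h y) - Real.log (h' y)) = 0 := by
      rw [Finset.sum_comm]
      apply Finset.sum_eq_zero; intro y _
      rw [← Finset.sum_mul]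
      have : ∑ x, (r x y - r' x y) = 0 := by
        rw [Finset.sum_sub_distrib, hcol y]; ring
      rw [this, zero_mul]
    calc ∑ x, ∑ y, (r x y - r' x y) * Φ x y
        = (∑ x, ∑ y, (r x y - r' x y) * (Real.log (f x) - Real.log (f' x)))
          + ∑ x, ∑ y, (r x y - r' x y) * (Real.log (h y) - Real.log (h' y)) := by
          rw [← Finset.sum_add_distrib]
          apply Finset.sum_congr rfl; intro x _
          rw [← Finset.sum_add_distrib]
          apply Finset.sum_congr rfl; intro y _
          simp only [hΦdef]; ring
      _ = 0 := by rw [e1, e2, add_zero]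
  -- pointwise analysis
  have key : ∀ x y, 0 ≤ (r x y - r' x y) * Φ x y ∧
      ((r x y - r' x y) * Φ x y = 0 → r x y = r' x y) := by
    intro x y
    rcases eq_or_lt_of_le (hrpos x y) with hr0 | hrp
    · rcases eq_or_lt_of_le (hr'pos x y) with hr'0 | hr'p
      · constructor
        · rw [← hr0, ← hr'0]; simp
        · intro _; rw [← hr0, ← hr'0]
      · -- r = 0 < r' : impossible
        exfalso
        have hKpos : 0 < K x y := by
          rcases (hK x y).lt_or_eq with hk | hk
          · exact hk
          · exfalso; simp only [hr'def, ← hk, mul_zero, zero_mul] at hr'p; exact lt_irrefl 0 hr'p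
        have hfh : f x = 0 ∨ h y = 0 := by
          by_contra hcon
          push_neg at hcon
          have : 0 < r x y := by
            simp only [hrdef]
            have h1 : 0 < f x := lt_of_le_of_ne (hf x) (Ne.symm hcon.1)
            have h2 : 0 < h y := lt_of_le_of_ne (hh y) (Ne.symm hcon.2)
            positivity
          linarith [this, hr0.symm ▸ this]
        rcases hfh with hfx | hhy
        · -- f x = 0 : row sums contradict
          have h1 : ∑ y', r x y' = 0 := by
            apply Finset.sum_eq_zero; intro y' _
            simp [hrdef, hfx]
          have h2 : 0 < ∑ y', r' x y' := by
            have := Finset.single_le_sum (f := fun y' => r' x y') (fun y' _ => hr'pos x y')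
              (Finset.mem_univ y)
            linarith
          have := hrow x
          simp only [hrdef, hr'def] at h1 h2
          linarith [h1, h2, this]
        · have h1 : ∑ x', r x' y = 0 := by
            apply Finset.sum_eq_zero; intro x' _
            simp [hrdef, hhy]
          have h2 : 0 < ∑ x', r' x' y := by
            have := Finset.single_le_sum (f := fun x' => r' x' y) (fun x' _ => hr'pos x' y)
              (Finset.mem_univ x)
            linarith
          have := hcol y
          simp only [hrdef, hr'def] at h1 h2
          linarith [h1, h2, this]
    · rcases eq_or_lt_of_le (hr'pos x y) with hr'0 | hr'p
      · -- r' = 0 < r : impossible, symmetric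
        exfalso
        have hKpos : 0 < K x y := by
          rcases (hK x y).lt_or_eq with hk | hk
          · exact hk
          · exfalso; simp only [hrdef, ← hk, mul_zero, zero_mul] at hrp; exact lt_irrefl 0 hrp
        have hfh : f' x = 0 ∨ h' y = 0 := by
          by_contra hcon
          push_neg at hcon
          have : 0 < r' x y := by
            simp only [hr'def]
            have h1 : 0 < f' x := lt_of_le_of_ne (hf' x) (Ne.symm hcon.1)
            have h2 : 0 < h' y := lt_of_le_of_ne (hh' y) (Ne.symm hcon.2)
            positivity
          linarith [this, hr'0.symm ▸ this]
        rcases hfh with hfx | hhy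
        · have h1 : ∑ y', r' x y' = 0 := by
            apply Finset.sum_eq_zero; intro y' _
            simp [hr'def, hfx]
          have h2 : 0 < ∑ y', r x y' := by
            have := Finset.single_le_sum (f := fun y' => r x y') (fun y' _ => hrpos x y')
              (Finset.mem_univ y)
            linarith
          have := hrow x
          simp only [hrdef, hr'def] at h1 h2
          linarith [h1, h2, this]
        · have h1 : ∑ x', r' x' y = 0 := by
            apply Finset.sum_eq_zero; intro x' _
            simp [hr'def, hhy]
          have h2 : 0 < ∑ x', r x' y := by
            have := Finset.single_le_sum (f := fun x' => r x' y) (fun x' _ => hrpos x' y)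
              (Finset.mem_univ x)
            linarith
          have := hcol y
          simp only [hrdef, hr'def] at h1 h2
          linarith [h1, h2, this]
      · -- both positive
        have hKpos : 0 < K x y := by
          rcases (hK x y).lt_or_eq with hk | hk
          · exact hk
          · exfalso; simp only [hrdef, ← hk, mul_zero, zero_mul] at hrp; exact lt_irrefl 0 hrp
        have hfx : 0 < f x := by
          rcases (hf x).lt_or_eq with hk | hk
          · exact hk
          · exfalso; simp only [hrdef, ← hk, mul_zero, zero_mul] at hrp; exact lt_irrefl 0 hrp
        have hhy : 0 < h y := by
          rcases (hh y).lt_or_eq with hk | hk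
          · exact hk
          · exfalso; simp only [hrdef, ← hk, mul_zero, zero_mul] at hrp; exact lt_irrefl 0 hrp
        have hf'x : 0 < f' x := by
          rcases (hf' x).lt_or_eq with hk | hk
          · exact hk
          · exfalso; simp only [hr'def, ← hk, mul_zero, zero_mul] at hr'p; exact lt_irrefl 0 hr'p
        have hh'y : 0 < h' y := by
          rcases (hh' y).lt_or_eq with hk | hk
          · exact hk
          · exfalso; simp only [hr'def, ← hk, mul_zero, zero_mul] at hr'p; exact lt_irrefl 0 hr'p
        have hΦeq : Φ x y = Real.log (r x y) - Real.log (r' x y) := by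
          simp only [hΦdef, hrdef, hr'def]
          rw [Real.log_mul (by positivity) (ne_of_gt hhy),
              Real.log_mul (ne_of_gt hfx) (ne_of_gt hKpos),
              Real.log_mul (by positivity) (ne_of_gt hh'y),
              Real.log_mul (ne_of_gt hf'x) (ne_of_gt hKpos)]
          ring
        constructor
        · rw [hΦeq]
          rcases le_total (r x y) (r' x y) with hle | hle
          · have ha : r x y - r' x y ≤ 0 := by linarith
            have hb : Real.log (r x y) - Real.log (r' x y) ≤ 0 := by
              have := Real.log_le_log hrp hle
              linarith
            have := mul_nonneg (neg_nonneg.2 ha) (neg_nonneg.2 hb)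
            rw [neg_mul_neg] at this
            exact this
          · apply mul_nonneg
            · linarith
            · have := Real.log_le_log hr'p hle
              linarith
        · rw [hΦeq]
          intro h0
          rcases mul_eq_zero.1 h0 with h1 | h1
          · linarith
          · have hle : Real.log (r x y) = Real.log (r' x y) := by linarith
            exact Real.log_injOn_pos (Set.mem_Ioi.2 hrp) (Set.mem_Ioi.2 hr'p) hle
  -- conclude
  have hterm : ∀ x ∈ Finset.univ, ∀ y ∈ Finset.univ, (r x y - r' x y) * Φ x y = 0 := by
    have h1 : ∀ x ∈ Finset.univ, (0:ℝ) ≤ ∑ y, (r x y - r' x y) * Φ x y := by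
      intro x _
      exact Finset.sum_nonneg fun y _ => (key x y).1
    have h2 := (Finset.sum_eq_zero_iff_of_nonneg h1).1 hS
    intro x hx y hy
    have h3 : ∀ y ∈ Finset.univ, (0:ℝ) ≤ (r x y - r' x y) * Φ x y := fun y _ => (key x y).1
    exact (Finset.sum_eq_zero_iff_of_nonneg h3).1 (h2 x hx) y hy
  intro x y
  exact (key x y).2 (hterm x (Finset.mem_univ x) y (Finset.mem_univ y))


lemma comb4 {ι : Type*} [Fintype ι] (f1 f2 f3 f4 g : ι → ℝ)
    (h : ∀ i, g i = f3 i + f4 i - f1 i - f2 i) :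
    (-∑ i, f1 i) + (-∑ i, f2 i) - (-∑ i, f3 i) - (-∑ i, f4 i) = ∑ i, g i := by
  rw [show (∑ i, g i) = ∑ i, (f3 i + f4 i - f1 i - f2 i) from
    Finset.sum_congr rfl fun i _ => h i]
  rw [Finset.sum_sub_distrib, Finset.sum_sub_distrib, Finset.sum_add_distrib]
  ring


section PMF

variable {SA SX SY SG : Type*} [Fintype SA] [Fintype SX] [Fintype SY] [Fintype SG]

variable (p : SA × SX × SY × SG → ℝ)

def mAXY (a : SA) (x : SX) (y : SY) : ℝ := ∑ g, p (a,x,y,g)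
def mAXG (a : SA) (x : SX) (g : SG) : ℝ := ∑ y, p (a,x,y,g)
def mAYG (a : SA) (y : SY) (g : SG) : ℝ := ∑ x, p (a,x,y,g)
def mXYG (x : SX) (y : SY) (g : SG) : ℝ := ∑ a, p (a,x,y,g)
def mAX (a : SA) (x : SX) : ℝ := ∑ y, ∑ g, p (a,x,y,g)
def mAY (a : SA) (y : SY) : ℝ := ∑ x, ∑ g, p (a,x,y,g)
def mAG (a : SA) (g : SG) : ℝ := ∑ x, ∑ y, p (a,x,y,g)
def mXY (x : SX) (y : SY) : ℝ := ∑ a, ∑ g, p (a,x,y,g)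
def mXG (x : SX) (g : SG) : ℝ := ∑ a, ∑ y, p (a,x,y,g)
def mYG (y : SY) (g : SG) : ℝ := ∑ a, ∑ x, p (a,x,y,g)
def mX (x : SX) : ℝ := ∑ a, ∑ y, ∑ g, p (a,x,y,g)
def mG (g : SG) : ℝ := ∑ a, ∑ x, ∑ y, p (a,x,y,g)

variable {p} (hp : ∀ s, 0 ≤ p s)
include hp

-- nonnegativity of marginals
lemma mAXY_nonneg : ∀ a x y, 0 ≤ mAXY p a x y := fun a x y =>
  Finset.sum_nonneg fun _ _ => hp _
lemma mAXG_nonneg : ∀ a x g, 0 ≤ mAXG p a x g := fun a x g =>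
  Finset.sum_nonneg fun _ _ => hp _
lemma mAYG_nonneg : ∀ a y g, 0 ≤ mAYG p a y g := fun a y g =>
  Finset.sum_nonneg fun _ _ => hp _
lemma mXYG_nonneg : ∀ x y g, 0 ≤ mXYG p x y g := fun x y g =>
  Finset.sum_nonneg fun _ _ => hp _
lemma mAX_nonneg : ∀ a x, 0 ≤ mAX p a x := fun a x =>
  Finset.sum_nonneg fun _ _ => Finset.sum_nonneg fun _ _ => hp _
lemma mAY_nonneg : ∀ a y, 0 ≤ mAY p a y := fun a y =>
  Finset.sum_nonneg fun _ _ => Finset.sum_nonneg fun _ _ => hp _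
lemma mAG_nonneg : ∀ a g, 0 ≤ mAG p a g := fun a g =>
  Finset.sum_nonneg fun _ _ => Finset.sum_nonneg fun _ _ => hp _
lemma mXY_nonneg : ∀ x y, 0 ≤ mXY p x y := fun x y =>
  Finset.sum_nonneg fun _ _ => Finset.sum_nonneg fun _ _ => hp _
lemma mXG_nonneg : ∀ x g, 0 ≤ mXG p x g := fun x g =>
  Finset.sum_nonneg fun _ _ => Finset.sum_nonneg fun _ _ => hp _
lemma mYG_nonneg : ∀ y g, 0 ≤ mYG p y g := fun y g =>
  Finset.sum_nonneg fun _ _ => Finset.sum_nonneg fun _ _ => hp _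
lemma mX_nonneg : ∀ x, 0 ≤ mX p x := fun x =>
  Finset.sum_nonneg fun _ _ => Finset.sum_nonneg fun _ _ => Finset.sum_nonneg fun _ _ => hp _
lemma mG_nonneg : ∀ g, 0 ≤ mG p g := fun g =>
  Finset.sum_nonneg fun _ _ => Finset.sum_nonneg fun _ _ => Finset.sum_nonneg fun _ _ => hp _

-- helpers to bound a single term by sums
omit hp in
private lemma le_sum1 {κ : Type*} [Fintype κ] {f : κ → ℝ} (hf : ∀ i, 0 ≤ f i) (i : κ) :
    f i ≤ ∑ j, f j :=
  Finset.single_le_sum (fun j _ => hf j) (Finset.mem_univ i)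

omit hp in
private lemma le_sum2 {κ1 κ2 : Type*} [Fintype κ1] [Fintype κ2] {f : κ1 → κ2 → ℝ}
    (hf : ∀ i j, 0 ≤ f i j) (i : κ1) (j : κ2) :
    f i j ≤ ∑ i', ∑ j', f i' j' :=
  le_trans (le_sum1 (hf i) j) (le_sum1 (fun i' => Finset.sum_nonneg fun j' _ => hf i' j') i)

omit hp in
private lemma le_sum3 {κ1 κ2 κ3 : Type*} [Fintype κ1] [Fintype κ2] [Fintype κ3]
    {f : κ1 → κ2 → κ3 → ℝ} (hf : ∀ i j k, 0 ≤ f i j k) (i : κ1) (j : κ2) (k : κ3) :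
    f i j k ≤ ∑ i', ∑ j', ∑ k', f i' j' k' :=
  le_trans (le_sum2 (hf i) j k)
    (le_sum1 (f := fun i' => ∑ j', ∑ k', f i' j' k')
      (fun i' => Finset.sum_nonneg fun _ _ => Finset.sum_nonneg fun _ _ => hf i' _ _) i)

-- pointwise bounds
lemma p_le_mAXY (a x y g) : p (a,x,y,g) ≤ mAXY p a x y := by
  unfold mAXY; exact le_sum1 (fun g' => hp (a,x,y,g')) g
lemma p_le_mAYG (a x y g) : p (a,x,y,g) ≤ mAYG p a y g := by
  unfold mAYG; exact le_sum1 (fun x' => hp (a,x',y,g)) x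
lemma p_le_mAY (a x y g) : p (a,x,y,g) ≤ mAY p a y := by
  unfold mAY; exact le_sum2 (fun x' g' => hp (a,x',y,g')) x g
lemma p_le_mX (a x y g) : p (a,x,y,g) ≤ mX p x := by
  unfold mX; exact le_sum3 (fun a' y' g' => hp (a',x,y',g')) a y g
lemma p_le_mG (a x y g) : p (a,x,y,g) ≤ mG p g := by
  unfold mG; exact le_sum3 (fun a' x' y' => hp (a',x',y',g)) a x y
lemma mAXY_le_mAX (a x y) : mAXY p a x y ≤ mAX p a x := by
  unfold mAXY mAX
  exact le_sum1 (f := fun y' => ∑ g', p (a,x,y',g')) (fun y' => Finset.sum_nonneg fun _ _ => hp _) y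
lemma mAXY_le_mXY (a x y) : mAXY p a x y ≤ mXY p x y := by
  unfold mAXY mXY
  exact le_sum1 (f := fun a' => ∑ g', p (a',x,y,g')) (fun a' => Finset.sum_nonneg fun _ _ => hp _) a
lemma mAXY_le_mX (a x y) : mAXY p a x y ≤ mX p x := by
  unfold mAXY mX
  exact le_sum2 (f := fun a' y' => ∑ g', p (a',x,y',g'))
    (fun a' y' => Finset.sum_nonneg fun _ _ => hp _) a y
lemma mAXG_le_mAG (a x g) : mAXG p a x g ≤ mAG p a g := by
  unfold mAXG mAG
  exact le_sum1 (f := fun x' => ∑ y', p (a,x',y',g)) (fun x' => Finset.sum_nonneg fun _ _ => hp _) x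
lemma mAXG_le_mXG (a x g) : mAXG p a x g ≤ mXG p x g := by
  unfold mAXG mXG
  exact le_sum1 (f := fun a' => ∑ y', p (a',x,y',g)) (fun a' => Finset.sum_nonneg fun _ _ => hp _) a
lemma mAXG_le_mG (a x g) : mAXG p a x g ≤ mG p g := by
  refine le_trans (mAXG_le_mAG hp a x g) ?_
  unfold mAG mG
  exact le_sum1 (f := fun a' => ∑ x', ∑ y', p (a',x',y',g))
    (fun a' => Finset.sum_nonneg fun _ _ => Finset.sum_nonneg fun _ _ => hp _) a
lemma mAYG_le_mAG (a y g) : mAYG p a y g ≤ mAG p a g := by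
  unfold mAYG mAG
  rw [Finset.sum_comm]
  exact le_sum1 (f := fun y' => ∑ x', p (a,x',y',g)) (fun y' => Finset.sum_nonneg fun _ _ => hp _) y
lemma mAYG_le_mYG (a y g) : mAYG p a y g ≤ mYG p y g := by
  unfold mAYG mYG
  rw [Finset.sum_comm]
  apply Finset.sum_le_sum; intro x' _
  exact le_sum1 (f := fun a' => p (a',x',y,g)) (fun a' => hp _) a
lemma mAYG_le_mG (a y g) : mAYG p a y g ≤ mG p g := by
  refine le_trans (mAYG_le_mAG hp a y g) ?_
  unfold mAG mG
  exact le_sum1 (f := fun a' => ∑ x', ∑ y', p (a',x',y',g))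
    (fun a' => Finset.sum_nonneg fun _ _ => Finset.sum_nonneg fun _ _ => hp _) a
lemma mXYG_le_mG (x y g) : mXYG p x y g ≤ mG p g := by
  unfold mXYG mG
  calc (∑ a, p (a,x,y,g)) ≤ ∑ a, ∑ x', p (a,x',y,g) := by
        apply Finset.sum_le_sum; intro a _
        exact le_sum1 (fun x' => hp (a,x',y,g)) x
    _ ≤ ∑ a, ∑ x', ∑ y', p (a,x',y',g) := by
        apply Finset.sum_le_sum; intro a _
        apply Finset.sum_le_sum; intro x' _
        exact le_sum1 (fun y' => hp (a,x',y',g)) y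

omit hp
-- marginal consistency (for sums)
lemma sum_mAXY_x (a y) : ∑ x, mAXY p a x y = mAY p a y := rfl
lemma sum_mAXY_y (a x) : ∑ y, mAXY p a x y = mAX p a x := rfl
lemma sum_mAYG_g (a y) : ∑ g, mAYG p a y g = mAY p a y := by
  unfold mAYG mAY; rw [Finset.sum_comm]
lemma sum_mAX_a (x) : ∑ a, mAX p a x = mX p x := rfl
lemma sum_mXY_y (x) : ∑ y, mXY p x y = mX p x := by
  unfold mXY mX
  rw [Finset.sum_comm]
lemma sum_mAG_a (g) : ∑ a, mAG p a g = mG p g := rfl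
lemma sum_mXG_x (g) : ∑ x, mXG p x g = mG p g := by
  unfold mXG mG; rw [Finset.sum_comm]
lemma sum_mYG_y (g) : ∑ y, mYG p y g = mG p g := by
  unfold mYG mG
  rw [Finset.sum_comm]
  apply Finset.sum_congr rfl; intro a _
  rw [Finset.sum_comm]


omit hp in
lemma sum_mAXG_x (a g) : ∑ x, mAXG p a x g = mAG p a g := rfl
omit hp in
lemma sum_mAYG_y (a g) : ∑ y, mAYG p a y g = mAG p a g := by
  unfold mAYG mAG; rw [Finset.sum_comm]

include hp
-- the core combinatorial lemma
lemma core
    (F1 : ∀ a x y g, p (a,x,y,g) * mAY p a y = mAXY p a x y * mAYG p a y g)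
    (F2 : ∀ a x y, mAXY p a x y * mX p x = mAX p a x * mXY p x y)
    (F3 : ∀ a x g, mAXG p a x g * mG p g = mAG p a g * mXG p x g)
    (F4 : ∀ a y g, mAYG p a y g * mG p g = mAG p a g * mYG p y g) :
    ∀ a x y g, p (a,x,y,g) * mG p g = mAG p a g * mXYG p x y g := by
  intro a x y g
  rcases eq_or_lt_of_le (mG_nonneg hp g) with hg | hg
  · -- mG g = 0
    have hb1 := p_le_mG hp a x y g
    have hb2 := mXYG_le_mG hp x y g
    have h1 : p (a,x,y,g) = 0 := by linarith [hp (a,x,y,g)]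
    have h2 : mXYG p x y g = 0 := by linarith [mXYG_nonneg hp x y g]
    rw [h1, h2, zero_mul, mul_zero]
  · -- mG g > 0 : use the cross claim
    have claim : ∀ a' : SA, p (a,x,y,g) * mAG p a' g = p (a',x,y,g) * mAG p a g := by
      intro a'
      -- Sinkhorn setup
      set K : SX → SY → ℝ := fun x y => mXY p x y with hK
      set f1 : SX → ℝ := fun x => if mX p x = 0 then 0 else mAX p a x / mX p x with hf1
      set f2 : SX → ℝ := fun x => if mX p x = 0 then 0 else mAX p a' x / mX p x with hf2
      set h1 : SY → ℝ := fun y =>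
        if mAY p a y = 0 then 0 else mAYG p a y g * mAG p a' g / mAY p a y with hh1
      set h2 : SY → ℝ := fun y =>
        if mAY p a' y = 0 then 0 else mAYG p a' y g * mAG p a g / mAY p a' y with hh2
      -- the product representations
      have rep : ∀ (b : SA) (c : SA) (x' : SX) (y' : SY),
          (if mX p x' = 0 then 0 else mAX p b x' / mX p x') * mXY p x' y' *
          (if mAY p b y' = 0 then 0 else mAYG p b y' g * mAG p c g / mAY p b y') =
          p (b,x',y',g) * mAG p c g := by
        intro b c x' y'
        by_cases hx : mX p x' = 0
        · simp only [hx, if_true, zero_mul]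
          have : p (b,x',y',g) = 0 :=
            le_antisymm (hx ▸ p_le_mX hp b x' y' g) (hp _)
          rw [this, zero_mul]
        · by_cases hy : mAY p b y' = 0
          · simp only [hx, hy, if_true, if_false, mul_zero]
            have : p (b,x',y',g) = 0 :=
              le_antisymm (hy ▸ p_le_mAY hp b x' y' g) (hp _)
            rw [this, zero_mul]
          · simp only [hx, hy, if_false]
            have e2 := F2 b x' y'
            have e1 := F1 b x' y' g
            field_simp
            rw [show mX p x' * mAG p c g * mAY p b y' * p (b, x', y', g) = p (b,x',y',g) * mAG p c g * (mX p x' * mAY p b y') by ring, mul_assoc (mAX p b x' * mXY p x' y')]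
            -- goal: mAX p b x' * mXY p x' y' * (mAYG p b y' g * mAG p c g) =
            --       p (b,x',y',g) * mAG p c g * (mX p x' * mAY p b y')
            calc mAX p b x' * mXY p x' y' * (mAYG p b y' g * mAG p c g)
                = (mAXY p b x' y' * mX p x') * (mAYG p b y' g * mAG p c g) := by rw [← e2]
              _ = (mAXY p b x' y' * mAYG p b y' g) * mX p x' * mAG p c g := by ring
              _ = (p (b,x',y',g) * mAY p b y') * mX p x' * mAG p c g := by rw [← e1]
              _ = p (b,x',y',g) * mAG p c g * (mX p x' * mAY p b y') := by ring
      have hrow : ∀ x', ∑ y', f1 x' * K x' y' * h1 y' = ∑ y', f2 x' * K x' y' * h2 y' := by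
        intro x'
        have l1 : ∑ y', f1 x' * K x' y' * h1 y' = mAXG p a x' g * mAG p a' g := by
          simp only [hf1, hK, hh1]
          rw [show (∑ y', (if mX p x' = 0 then 0 else mAX p a x' / mX p x') * mXY p x' y' *
            (if mAY p a y' = 0 then 0 else mAYG p a y' g * mAG p a' g / mAY p a y')) =
            ∑ y', p (a,x',y',g) * mAG p a' g from Finset.sum_congr rfl fun y' _ => rep a a' x' y']
          rw [← Finset.sum_mul]; rfl
        have l2 : ∑ y', f2 x' * K x' y' * h2 y' = mAXG p a' x' g * mAG p a g := by
          simp only [hf2, hK, hh2]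
          rw [show (∑ y', (if mX p x' = 0 then 0 else mAX p a' x' / mX p x') * mXY p x' y' *
            (if mAY p a' y' = 0 then 0 else mAYG p a' y' g * mAG p a g / mAY p a' y')) =
            ∑ y', p (a',x',y',g) * mAG p a g from Finset.sum_congr rfl fun y' _ => rep a' a x' y']
          rw [← Finset.sum_mul]; rfl
        rw [l1, l2]
        -- mAXG a x' g * mAG a' g = mAXG a' x' g * mAG a g  via F3
        have e3 := F3 a x' g
        have e3' := F3 a' x' g
        apply mul_right_cancel₀ (ne_of_gt hg)
        calc mAXG p a x' g * mAG p a' g * mG p g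
            = (mAXG p a x' g * mG p g) * mAG p a' g := by ring
          _ = (mAG p a g * mXG p x' g) * mAG p a' g := by rw [e3]
          _ = (mAG p a' g * mXG p x' g) * mAG p a g := by ring
          _ = (mAXG p a' x' g * mG p g) * mAG p a g := by rw [← e3']
          _ = mAXG p a' x' g * mAG p a g * mG p g := by ring
      have hcol : ∀ y', ∑ x', f1 x' * K x' y' * h1 y' = ∑ x', f2 x' * K x' y' * h2 y' := by
        intro y'
        have l1 : ∑ x', f1 x' * K x' y' * h1 y' = mAYG p a y' g * mAG p a' g := by
          simp only [hf1, hK, hh1]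
          rw [show (∑ x', (if mX p x' = 0 then 0 else mAX p a x' / mX p x') * mXY p x' y' *
            (if mAY p a y' = 0 then 0 else mAYG p a y' g * mAG p a' g / mAY p a y')) =
            ∑ x', p (a,x',y',g) * mAG p a' g from Finset.sum_congr rfl fun x' _ => rep a a' x' y']
          rw [← Finset.sum_mul]; rfl
        have l2 : ∑ x', f2 x' * K x' y' * h2 y' = mAYG p a' y' g * mAG p a g := by
          simp only [hf2, hK, hh2]
          rw [show (∑ x', (if mX p x' = 0 then 0 else mAX p a' x' / mX p x') * mXY p x' y' *
            (if mAY p a' y' = 0 then 0 else mAYG p a' y' g * mAG p a g / mAY p a' y')) =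
            ∑ x', p (a',x',y',g) * mAG p a g from Finset.sum_congr rfl fun x' _ => rep a' a x' y']
          rw [← Finset.sum_mul]; rfl
        rw [l1, l2]
        have e4 := F4 a y' g
        have e4' := F4 a' y' g
        apply mul_right_cancel₀ (ne_of_gt hg)
        calc mAYG p a y' g * mAG p a' g * mG p g
            = (mAYG p a y' g * mG p g) * mAG p a' g := by ring
          _ = (mAG p a g * mYG p y' g) * mAG p a' g := by rw [e4]
          _ = (mAG p a' g * mYG p y' g) * mAG p a g := by ring
          _ = (mAYG p a' y' g * mG p g) * mAG p a g := by rw [← e4']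
          _ = mAYG p a' y' g * mAG p a g * mG p g := by ring
      have hfn : ∀ x', 0 ≤ f1 x' := by
        intro x'; simp only [hf1]
        split
        · exact le_refl 0
        · exact div_nonneg (mAX_nonneg hp a x') (mX_nonneg hp x')
      have hfn2 : ∀ x', 0 ≤ f2 x' := by
        intro x'; simp only [hf2]
        split
        · exact le_refl 0
        · exact div_nonneg (mAX_nonneg hp a' x') (mX_nonneg hp x')
      have hhn : ∀ y', 0 ≤ h1 y' := by
        intro y'; simp only [hh1]
        split
        · exact le_refl 0
        · exact div_nonneg (mul_nonneg (mAYG_nonneg hp a y' g) (mAG_nonneg hp a' g))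
            (mAY_nonneg hp a y')
      have hhn2 : ∀ y', 0 ≤ h2 y' := by
        intro y'; simp only [hh2]
        split
        · exact le_refl 0
        · exact div_nonneg (mul_nonneg (mAYG_nonneg hp a' y' g) (mAG_nonneg hp a g))
            (mAY_nonneg hp a' y')
      have := sinkhorn K f1 f2 h1 h2 (fun x y => mXY_nonneg hp x y)
        hfn hfn2 hhn hhn2 hrow hcol x y
      have r1 : f1 x * K x y * h1 y = p (a,x,y,g) * mAG p a' g := rep a a' x y
      have r2 : f2 x * K x y * h2 y = p (a',x,y,g) * mAG p a g := rep a' a x y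
      rw [r1, r2] at this
      exact this
    -- sum the claim over a'
    have hsum := Finset.sum_congr rfl (fun a' (_ : a' ∈ Finset.univ) => claim a')
    rw [← Finset.mul_sum, ← Finset.sum_mul] at hsum
    rw [sum_mAG_a] at hsum
    rw [hsum]
    unfold mXYG
    ring


/-- Conversion for hypothesis I(X:G|A,Y) = 0. -/
lemma convG1
    (hzero : ∑ s : SA × SX × SY × SG, p s *
      (Real.log (p s) + Real.log (mAY p s.1 s.2.2.1)
        - Real.log (mAXY p s.1 s.2.1 s.2.2.1) - Real.log (mAYG p s.1 s.2.2.1 s.2.2.2)) = 0) :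
    ∀ a x y g, p (a,x,y,g) * mAY p a y = mAXY p a x y * mAYG p a y g := by
  set q : SA × SX × SY × SG → ℝ := fun s =>
    if mAY p s.1 s.2.2.1 = 0 then 0
    else mAXY p s.1 s.2.1 s.2.2.1 * mAYG p s.1 s.2.2.1 s.2.2.2 / mAY p s.1 s.2.2.1 with hq
  have hqn : ∀ s, 0 ≤ q s := by
    rintro ⟨a,x,y,g⟩
    simp only [hq]
    split
    · exact le_refl 0
    · exact div_nonneg (mul_nonneg (mAXY_nonneg hp a x y) (mAYG_nonneg hp a y g))
        (mAY_nonneg hp a y)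
  have hpt : ∀ s, p s * (Real.log (p s) - Real.log (q s)) = p s *
      (Real.log (p s) + Real.log (mAY p s.1 s.2.2.1)
        - Real.log (mAXY p s.1 s.2.1 s.2.2.1) - Real.log (mAYG p s.1 s.2.2.1 s.2.2.2)) := by
    rintro ⟨a,x,y,g⟩
    rcases eq_or_lt_of_le (hp (a,x,y,g)) with h0 | h0
    · rw [← h0]; ring
    · have h1 : 0 < mAY p a y := lt_of_lt_of_le h0 (p_le_mAY hp a x y g)
      have h2 : 0 < mAXY p a x y := lt_of_lt_of_le h0 (p_le_mAXY hp a x y g)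
      have h3 : 0 < mAYG p a y g := lt_of_lt_of_le h0 (p_le_mAYG hp a x y g)
      simp only [hq, if_neg (ne_of_gt h1)]
      rw [Real.log_div (by positivity) (ne_of_gt h1), Real.log_mul (ne_of_gt h2) (ne_of_gt h3)]
      ring
  have hzero' : ∑ s, p s * (Real.log (p s) - Real.log (q s)) = 0 := by
    rw [Finset.sum_congr rfl fun s _ => hpt s]; exact hzero
  have hsum : ∑ s, q s ≤ ∑ s, p s := by
    have inner : ∀ a y, (∑ x, ∑ g, q (a,x,y,g)) ≤ mAY p a y := by
      intro a y
      by_cases h : mAY p a y = 0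
      · simp only [hq, h]
        simp
      · have heqv : (∑ x, ∑ g, q (a,x,y,g)) = mAY p a y := by
          simp only [hq, if_neg h]
          rw [show (∑ x, ∑ g : SG, mAXY p a x y * mAYG p a y g / mAY p a y)
              = (∑ x, mAXY p a x y) * (∑ g, mAYG p a y g) / mAY p a y by
            rw [Finset.sum_mul, Finset.sum_div]
            apply Finset.sum_congr rfl; intro x _
            rw [Finset.mul_sum, Finset.sum_div]]
          rw [sum_mAXY_x, sum_mAYG_g]
          field_simp
        rw [heqv]
    calc ∑ s, q s = ∑ a, ∑ y, ∑ x, ∑ g, q (a,x,y,g) := by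
          simp only [Fintype.sum_prod_type]
          apply Finset.sum_congr rfl; intro a _
          rw [Finset.sum_comm]
      _ ≤ ∑ a, ∑ y, mAY p a y := by
          apply Finset.sum_le_sum; intro a _
          apply Finset.sum_le_sum; intro y _
          exact inner a y
      _ = ∑ s, p s := by
          simp only [Fintype.sum_prod_type]
          unfold mAY
          apply Finset.sum_congr rfl; intro a _
          rw [Finset.sum_comm]
  have hac : ∀ s, 0 < p s → 0 < q s := by
    rintro ⟨a,x,y,g⟩ h0
    have h1 : 0 < mAY p a y := lt_of_lt_of_le h0 (p_le_mAY hp a x y g)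
    have h2 : 0 < mAXY p a x y := lt_of_lt_of_le h0 (p_le_mAXY hp a x y g)
    have h3 : 0 < mAYG p a y g := lt_of_lt_of_le h0 (p_le_mAYG hp a x y g)
    simp only [hq, if_neg (ne_of_gt h1)]
    positivity
  have heq := gibbs_eq hp hqn hsum hac hzero'
  intro a x y g
  have hthis := heq (a,x,y,g)
  by_cases h : mAY p a y = 0
  · simp only [hq, h] at hthis
    simp at hthis
    have hxy0 : mAXY p a x y = 0 := by
      have hb : mAXY p a x y ≤ mAY p a y := by
        rw [← sum_mAXY_x (p := p) a y]
        exact Finset.single_le_sum (f := fun x' => mAXY p a x' y)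
          (fun x' _ => mAXY_nonneg hp a x' y) (Finset.mem_univ x)
      exact le_antisymm (h ▸ hb) (mAXY_nonneg hp a x y)
    rw [h, hxy0, mul_zero, zero_mul]
  · simp only [hq, if_neg h] at hthis
    rw [hthis]
    field_simp

/-- Conversion for hypothesis I(A:Y|X) = 0. -/
lemma convG2
    (hzero : ∑ s : SA × SX × SY × SG, p s *
      (Real.log (mAXY p s.1 s.2.1 s.2.2.1) + Real.log (mX p s.2.1)
        - Real.log (mAX p s.1 s.2.1) - Real.log (mXY p s.2.1 s.2.2.1)) = 0) :
    ∀ a x y, mAXY p a x y * mX p x = mAX p a x * mXY p x y := by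
  set u : SA × SX × SY → ℝ := fun t => mAXY p t.1 t.2.1 t.2.2 with hu
  set q : SA × SX × SY → ℝ := fun t =>
    if mX p t.2.1 = 0 then 0 else mAX p t.1 t.2.1 * mXY p t.2.1 t.2.2 / mX p t.2.1 with hq
  have hun : ∀ t, 0 ≤ u t := by rintro ⟨a,x,y⟩; exact mAXY_nonneg hp a x y
  have hqn : ∀ t, 0 ≤ q t := by
    rintro ⟨a,x,y⟩
    simp only [hq]
    split
    · exact le_refl 0
    · exact div_nonneg (mul_nonneg (mAX_nonneg hp a x) (mXY_nonneg hp x y)) (mX_nonneg hp x)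
  have hregroup : ∑ t : SA × SX × SY, u t *
      (Real.log (mAXY p t.1 t.2.1 t.2.2) + Real.log (mX p t.2.1)
        - Real.log (mAX p t.1 t.2.1) - Real.log (mXY p t.2.1 t.2.2)) = 0 := by
    rw [← hzero]
    simp only [Fintype.sum_prod_type, hu]
    apply Finset.sum_congr rfl; intro a _
    apply Finset.sum_congr rfl; intro x _
    apply Finset.sum_congr rfl; intro y _
    rw [← Finset.sum_mul]
    rfl
  have hpt : ∀ t, u t * (Real.log (u t) - Real.log (q t)) = u t *
      (Real.log (mAXY p t.1 t.2.1 t.2.2) + Real.log (mX p t.2.1)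
        - Real.log (mAX p t.1 t.2.1) - Real.log (mXY p t.2.1 t.2.2)) := by
    rintro ⟨a,x,y⟩
    rcases eq_or_lt_of_le (hun (a,x,y)) with h0 | h0
    · rw [← h0]; ring
    · have h0' : 0 < mAXY p a x y := h0
      have h1 : 0 < mX p x := lt_of_lt_of_le h0' (mAXY_le_mX hp a x y)
      have h2 : 0 < mAX p a x := lt_of_lt_of_le h0' (mAXY_le_mAX hp a x y)
      have h3 : 0 < mXY p x y := lt_of_lt_of_le h0' (mAXY_le_mXY hp a x y)
      simp only [hq, hu, if_neg (ne_of_gt h1)]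
      rw [Real.log_div (by positivity) (ne_of_gt h1), Real.log_mul (ne_of_gt h2) (ne_of_gt h3)]
      ring
  have hzero' : ∑ t, u t * (Real.log (u t) - Real.log (q t)) = 0 := by
    rw [Finset.sum_congr rfl fun t _ => hpt t]; exact hregroup
  have hsum : ∑ t, q t ≤ ∑ t, u t := by
    have inner : ∀ x, (∑ a, ∑ y, q (a,x,y)) ≤ mX p x := by
      intro x
      by_cases h : mX p x = 0
      · simp only [hq, h]
        simp
      · have heqv : (∑ a, ∑ y, q (a,x,y)) = mX p x := by
          simp only [hq, if_neg h]
          rw [show (∑ a, ∑ y : SY, mAX p a x * mXY p x y / mX p x)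
              = (∑ a, mAX p a x) * (∑ y, mXY p x y) / mX p x by
            rw [Finset.sum_mul, Finset.sum_div]
            apply Finset.sum_congr rfl; intro a _
            rw [Finset.mul_sum, Finset.sum_div]]
          rw [sum_mAX_a, sum_mXY_y]
          field_simp
        rw [heqv]
    calc ∑ t, q t = ∑ x, ∑ a, ∑ y, q (a,x,y) := by
          simp only [Fintype.sum_prod_type]
          rw [Finset.sum_comm]
      _ ≤ ∑ x, mX p x := by
          apply Finset.sum_le_sum; intro x _
          exact inner x
      _ = ∑ t, u t := by
          simp only [Fintype.sum_prod_type, hu]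
          have e1 : ∀ a x, (∑ y, mAXY p a x y) = mAX p a x := fun a x => sum_mAXY_y (p := p) a x
          calc ∑ x, mX p x = ∑ x, ∑ a, mAX p a x := by
                apply Finset.sum_congr rfl; intro x _
                rw [sum_mAX_a]
            _ = ∑ a, ∑ x, mAX p a x := Finset.sum_comm
            _ = ∑ a, ∑ x, ∑ y, mAXY p a x y := by
                apply Finset.sum_congr rfl; intro a _
                apply Finset.sum_congr rfl; intro x _
                rw [e1]
  have hac : ∀ t, 0 < u t → 0 < q t := by
    rintro ⟨a,x,y⟩ h0
    have h0' : 0 < mAXY p a x y := h0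
    have h1 : 0 < mX p x := lt_of_lt_of_le h0' (mAXY_le_mX hp a x y)
    have h2 : 0 < mAX p a x := lt_of_lt_of_le h0' (mAXY_le_mAX hp a x y)
    have h3 : 0 < mXY p x y := lt_of_lt_of_le h0' (mAXY_le_mXY hp a x y)
    simp only [hq, if_neg (ne_of_gt h1)]
    positivity
  have heq := gibbs_eq hun hqn hsum hac hzero'
  intro a x y
  have hthis := heq (a,x,y)
  by_cases h : mX p x = 0
  · simp only [hq, hu, h] at hthis
    simp at hthis
    have hax0 : mAX p a x = 0 := by
      have hb : mAX p a x ≤ mX p x := by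
        rw [← sum_mAX_a (p := p) x]
        exact Finset.single_le_sum (f := fun a' => mAX p a' x)
          (fun a' _ => mAX_nonneg hp a' x) (Finset.mem_univ a)
      exact le_antisymm (h ▸ hb) (mAX_nonneg hp a x)
    rw [h, hax0, mul_zero, zero_mul]
  · simp only [hq, hu, if_neg h] at hthis
    rw [hthis]
    field_simp

/-- Conversion for hypothesis I(A:X|G) = 0. -/
lemma convG3
    (hzero : ∑ s : SA × SX × SY × SG, p s *
      (Real.log (mAXG p s.1 s.2.1 s.2.2.2) + Real.log (mG p s.2.2.2)
        - Real.log (mAG p s.1 s.2.2.2) - Real.log (mXG p s.2.1 s.2.2.2)) = 0) :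
    ∀ a x g, mAXG p a x g * mG p g = mAG p a g * mXG p x g := by
  set u : SA × SX × SG → ℝ := fun t => mAXG p t.1 t.2.1 t.2.2 with hu
  set q : SA × SX × SG → ℝ := fun t =>
    if mG p t.2.2 = 0 then 0 else mAG p t.1 t.2.2 * mXG p t.2.1 t.2.2 / mG p t.2.2 with hq
  have hun : ∀ t, 0 ≤ u t := by rintro ⟨a,x,g⟩; exact mAXG_nonneg hp a x g
  have hqn : ∀ t, 0 ≤ q t := by
    rintro ⟨a,x,g⟩
    simp only [hq]
    split
    · exact le_refl 0
    · exact div_nonneg (mul_nonneg (mAG_nonneg hp a g) (mXG_nonneg hp x g)) (mG_nonneg hp g)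
  have hregroup : ∑ t : SA × SX × SG, u t *
      (Real.log (mAXG p t.1 t.2.1 t.2.2) + Real.log (mG p t.2.2)
        - Real.log (mAG p t.1 t.2.2) - Real.log (mXG p t.2.1 t.2.2)) = 0 := by
    rw [← hzero]
    simp only [Fintype.sum_prod_type, hu]
    apply Finset.sum_congr rfl; intro a _
    apply Finset.sum_congr rfl; intro x _
    rw [Finset.sum_comm]
    apply Finset.sum_congr rfl; intro g _
    rw [← Finset.sum_mul]
    rfl
  have hpt : ∀ t, u t * (Real.log (u t) - Real.log (q t)) = u t *
      (Real.log (mAXG p t.1 t.2.1 t.2.2) + Real.log (mG p t.2.2)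
        - Real.log (mAG p t.1 t.2.2) - Real.log (mXG p t.2.1 t.2.2)) := by
    rintro ⟨a,x,g⟩
    rcases eq_or_lt_of_le (hun (a,x,g)) with h0 | h0
    · rw [← h0]; ring
    · have h0' : 0 < mAXG p a x g := h0
      have h1 : 0 < mG p g := lt_of_lt_of_le h0' (mAXG_le_mG hp a x g)
      have h2 : 0 < mAG p a g := lt_of_lt_of_le h0' (mAXG_le_mAG hp a x g)
      have h3 : 0 < mXG p x g := lt_of_lt_of_le h0' (mAXG_le_mXG hp a x g)
      simp only [hq, hu, if_neg (ne_of_gt h1)]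
      rw [Real.log_div (by positivity) (ne_of_gt h1), Real.log_mul (ne_of_gt h2) (ne_of_gt h3)]
      ring
  have hzero' : ∑ t, u t * (Real.log (u t) - Real.log (q t)) = 0 := by
    rw [Finset.sum_congr rfl fun t _ => hpt t]; exact hregroup
  have hsum : ∑ t, q t ≤ ∑ t, u t := by
    have inner : ∀ g, (∑ a, ∑ x, q (a,x,g)) ≤ mG p g := by
      intro g
      by_cases h : mG p g = 0
      · simp only [hq, h]
        simp
      · have heqv : (∑ a, ∑ x, q (a,x,g)) = mG p g := by
          simp only [hq, if_neg h]
          rw [show (∑ a, ∑ x : SX, mAG p a g * mXG p x g / mG p g)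
              = (∑ a, mAG p a g) * (∑ x, mXG p x g) / mG p g by
            rw [Finset.sum_mul, Finset.sum_div]
            apply Finset.sum_congr rfl; intro a _
            rw [Finset.mul_sum, Finset.sum_div]]
          rw [sum_mAG_a, sum_mXG_x]
          field_simp
        rw [heqv]
    calc ∑ t, q t = ∑ g, ∑ a, ∑ x, q (a,x,g) := by
          simp only [Fintype.sum_prod_type]
          rw [show (∑ a, ∑ x, ∑ g, q (a,x,g)) = ∑ a, ∑ g, ∑ x, q (a,x,g) from
            Finset.sum_congr rfl fun a _ => Finset.sum_comm]
          exact Finset.sum_comm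
      _ ≤ ∑ g, mG p g := by
          apply Finset.sum_le_sum; intro g _
          exact inner g
      _ = ∑ t, u t := by
          simp only [Fintype.sum_prod_type, hu]
          calc ∑ g, mG p g = ∑ g, ∑ a, mAG p a g := by
                apply Finset.sum_congr rfl; intro g _
                rw [sum_mAG_a]
            _ = ∑ a, ∑ g, mAG p a g := Finset.sum_comm
            _ = ∑ a, ∑ g, ∑ x, mAXG p a x g := by
                apply Finset.sum_congr rfl; intro a _
                apply Finset.sum_congr rfl; intro g _
                rw [sum_mAXG_x]
            _ = ∑ a, ∑ x, ∑ g, mAXG p a x g := by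
                apply Finset.sum_congr rfl; intro a _
                exact Finset.sum_comm
  have hac : ∀ t, 0 < u t → 0 < q t := by
    rintro ⟨a,x,g⟩ h0
    have h0' : 0 < mAXG p a x g := h0
    have h1 : 0 < mG p g := lt_of_lt_of_le h0' (mAXG_le_mG hp a x g)
    have h2 : 0 < mAG p a g := lt_of_lt_of_le h0' (mAXG_le_mAG hp a x g)
    have h3 : 0 < mXG p x g := lt_of_lt_of_le h0' (mAXG_le_mXG hp a x g)
    simp only [hq, if_neg (ne_of_gt h1)]
    positivity
  have heq := gibbs_eq hun hqn hsum hac hzero'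
  intro a x g
  have hthis := heq (a,x,g)
  by_cases h : mG p g = 0
  · simp only [hq, hu, h] at hthis
    simp at hthis
    have hag0 : mAG p a g = 0 := by
      have hb : mAG p a g ≤ mG p g := by
        rw [← sum_mAG_a (p := p) g]
        exact Finset.single_le_sum (f := fun a' => mAG p a' g)
          (fun a' _ => mAG_nonneg hp a' g) (Finset.mem_univ a)
      exact le_antisymm (h ▸ hb) (mAG_nonneg hp a g)
    rw [h, hag0, mul_zero, zero_mul]
  · simp only [hq, hu, if_neg h] at hthis
    rw [hthis]
    field_simp

/-- Conversion for hypothesis I(A:Y|G) = 0. -/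
lemma convG4
    (hzero : ∑ s : SA × SX × SY × SG, p s *
      (Real.log (mAYG p s.1 s.2.2.1 s.2.2.2) + Real.log (mG p s.2.2.2)
        - Real.log (mAG p s.1 s.2.2.2) - Real.log (mYG p s.2.2.1 s.2.2.2)) = 0) :
    ∀ a y g, mAYG p a y g * mG p g = mAG p a g * mYG p y g := by
  set u : SA × SY × SG → ℝ := fun t => mAYG p t.1 t.2.1 t.2.2 with hu
  set q : SA × SY × SG → ℝ := fun t =>
    if mG p t.2.2 = 0 then 0 else mAG p t.1 t.2.2 * mYG p t.2.1 t.2.2 / mG p t.2.2 with hq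
  have hun : ∀ t, 0 ≤ u t := by rintro ⟨a,y,g⟩; exact mAYG_nonneg hp a y g
  have hqn : ∀ t, 0 ≤ q t := by
    rintro ⟨a,y,g⟩
    simp only [hq]
    split
    · exact le_refl 0
    · exact div_nonneg (mul_nonneg (mAG_nonneg hp a g) (mYG_nonneg hp y g)) (mG_nonneg hp g)
  have hregroup : ∑ t : SA × SY × SG, u t *
      (Real.log (mAYG p t.1 t.2.1 t.2.2) + Real.log (mG p t.2.2)
        - Real.log (mAG p t.1 t.2.2) - Real.log (mYG p t.2.1 t.2.2)) = 0 := by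
    rw [← hzero]
    simp only [Fintype.sum_prod_type, hu]
    apply Finset.sum_congr rfl; intro a _
    calc ∑ y, ∑ g, mAYG p a y g * (Real.log (mAYG p a y g) + Real.log (mG p g)
            - Real.log (mAG p a g) - Real.log (mYG p y g))
        = ∑ y, ∑ g, (∑ x, p (a,x,y,g)) * (Real.log (mAYG p a y g) + Real.log (mG p g)
            - Real.log (mAG p a g) - Real.log (mYG p y g)) := rfl
      _ = ∑ y, ∑ g, ∑ x, p (a,x,y,g) * (Real.log (mAYG p a y g) + Real.log (mG p g)
            - Real.log (mAG p a g) - Real.log (mYG p y g)) := by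
          apply Finset.sum_congr rfl; intro y _
          apply Finset.sum_congr rfl; intro g _
          rw [Finset.sum_mul]
      _ = ∑ y, ∑ x, ∑ g, p (a,x,y,g) * (Real.log (mAYG p a y g) + Real.log (mG p g)
            - Real.log (mAG p a g) - Real.log (mYG p y g)) := by
          apply Finset.sum_congr rfl; intro y _
          exact Finset.sum_comm
      _ = ∑ x, ∑ y, ∑ g, p (a,x,y,g) * (Real.log (mAYG p a y g) + Real.log (mG p g)
            - Real.log (mAG p a g) - Real.log (mYG p y g)) := Finset.sum_comm
  have hpt : ∀ t, u t * (Real.log (u t) - Real.log (q t)) = u t *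
      (Real.log (mAYG p t.1 t.2.1 t.2.2) + Real.log (mG p t.2.2)
        - Real.log (mAG p t.1 t.2.2) - Real.log (mYG p t.2.1 t.2.2)) := by
    rintro ⟨a,y,g⟩
    rcases eq_or_lt_of_le (hun (a,y,g)) with h0 | h0
    · rw [← h0]; ring
    · have h0' : 0 < mAYG p a y g := h0
      have h1 : 0 < mG p g := lt_of_lt_of_le h0' (mAYG_le_mG hp a y g)
      have h2 : 0 < mAG p a g := lt_of_lt_of_le h0' (mAYG_le_mAG hp a y g)
      have h3 : 0 < mYG p y g := lt_of_lt_of_le h0' (mAYG_le_mYG hp a y g)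
      simp only [hq, hu, if_neg (ne_of_gt h1)]
      rw [Real.log_div (by positivity) (ne_of_gt h1), Real.log_mul (ne_of_gt h2) (ne_of_gt h3)]
      ring
  have hzero' : ∑ t, u t * (Real.log (u t) - Real.log (q t)) = 0 := by
    rw [Finset.sum_congr rfl fun t _ => hpt t]; exact hregroup
  have hsum : ∑ t, q t ≤ ∑ t, u t := by
    have inner : ∀ g, (∑ a, ∑ y, q (a,y,g)) ≤ mG p g := by
      intro g
      by_cases h : mG p g = 0
      · simp only [hq, h]
        simp
      · have heqv : (∑ a, ∑ y, q (a,y,g)) = mG p g := by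
          simp only [hq, if_neg h]
          rw [show (∑ a, ∑ y : SY, mAG p a g * mYG p y g / mG p g)
              = (∑ a, mAG p a g) * (∑ y, mYG p y g) / mG p g by
            rw [Finset.sum_mul, Finset.sum_div]
            apply Finset.sum_congr rfl; intro a _
            rw [Finset.mul_sum, Finset.sum_div]]
          rw [sum_mAG_a, sum_mYG_y]
          field_simp
        rw [heqv]
    calc ∑ t, q t = ∑ g, ∑ a, ∑ y, q (a,y,g) := by
          simp only [Fintype.sum_prod_type]
          rw [show (∑ a, ∑ y, ∑ g, q (a,y,g)) = ∑ a, ∑ g, ∑ y, q (a,y,g) from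
            Finset.sum_congr rfl fun a _ => Finset.sum_comm]
          exact Finset.sum_comm
      _ ≤ ∑ g, mG p g := by
          apply Finset.sum_le_sum; intro g _
          exact inner g
      _ = ∑ t, u t := by
          simp only [Fintype.sum_prod_type, hu]
          calc ∑ g, mG p g = ∑ g, ∑ a, mAG p a g := by
                apply Finset.sum_congr rfl; intro g _
                rw [sum_mAG_a]
            _ = ∑ a, ∑ g, mAG p a g := Finset.sum_comm
            _ = ∑ a, ∑ g, ∑ y, mAYG p a y g := by
                apply Finset.sum_congr rfl; intro a _
                apply Finset.sum_congr rfl; intro g _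
                rw [sum_mAYG_y]
            _ = ∑ a, ∑ y, ∑ g, mAYG p a y g := by
                apply Finset.sum_congr rfl; intro a _
                exact Finset.sum_comm
  have hac : ∀ t, 0 < u t → 0 < q t := by
    rintro ⟨a,y,g⟩ h0
    have h0' : 0 < mAYG p a y g := h0
    have h1 : 0 < mG p g := lt_of_lt_of_le h0' (mAYG_le_mG hp a y g)
    have h2 : 0 < mAG p a g := lt_of_lt_of_le h0' (mAYG_le_mAG hp a y g)
    have h3 : 0 < mYG p y g := lt_of_lt_of_le h0' (mAYG_le_mYG hp a y g)
    simp only [hq, if_neg (ne_of_gt h1)]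
    positivity
  have heq := gibbs_eq hun hqn hsum hac hzero'
  intro a y g
  have hthis := heq (a,y,g)
  by_cases h : mG p g = 0
  · simp only [hq, hu, h] at hthis
    simp at hthis
    have hag0 : mAG p a g = 0 := by
      have hb : mAG p a g ≤ mG p g := by
        rw [← sum_mAG_a (p := p) g]
        exact Finset.single_le_sum (f := fun a' => mAG p a' g)
          (fun a' _ => mAG_nonneg hp a' g) (Finset.mem_univ a)
      exact le_antisymm (h ▸ hb) (mAG_nonneg hp a g)
    rw [h, hag0, mul_zero, zero_mul]
  · simp only [hq, hu, if_neg h] at hthis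
    rw [hthis]
    field_simp

/-- The target factorization makes the goal conditional mutual information vanish. -/
lemma final_cmi
    (hFT : ∀ a x y g, p (a,x,y,g) * mG p g = mAG p a g * mXYG p x y g) :
    ∑ s : SA × SX × SY × SG, p s *
      (Real.log (p s) + Real.log (mG p s.2.2.2)
        - Real.log (mAG p s.1 s.2.2.2) - Real.log (mXYG p s.2.1 s.2.2.1 s.2.2.2)) = 0 := by
  apply Finset.sum_eq_zero
  rintro ⟨a,x,y,g⟩ _
  rcases eq_or_lt_of_le (hp (a,x,y,g)) with h0 | h0
  · rw [← h0, zero_mul]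
  · have hg : 0 < mG p g := lt_of_lt_of_le h0 (p_le_mG hp a x y g)
    have hfe := hFT a x y g
    have hprod : 0 < mAG p a g * mXYG p x y g := by rw [← hfe]; positivity
    have hag : 0 < mAG p a g := by
      rcases (mAG_nonneg hp a g).lt_or_eq with h | h
      · exact h
      · exfalso; rw [← h, zero_mul] at hprod; exact lt_irrefl 0 hprod
    have hxyg : 0 < mXYG p x y g := by
      rcases (mXYG_nonneg hp x y g).lt_or_eq with h | h
      · exact h
      · exfalso; rw [← h, mul_zero] at hprod; exact lt_irrefl 0 hprod
    have hlogs : Real.log (p (a,x,y,g)) + Real.log (mG p g)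
        = Real.log (mAG p a g) + Real.log (mXYG p x y g) := by
      rw [← Real.log_mul (ne_of_gt h0) (ne_of_gt hg),
        ← Real.log_mul (ne_of_gt hag) (ne_of_gt hxyg), hfe]
    have hz : Real.log (p (a,x,y,g)) + Real.log (mG p g)
        - Real.log (mAG p a g) - Real.log (mXYG p x y g) = 0 := by linarith
    rw [hz, mul_zero]

end PMF



section MeasurePart

variable {Ω : Type*} [MeasurableSpace Ω] (μ : Measure Ω) [IsProbabilityMeasure μ]
variable {SA SX SY SG : Type*}
    [Fintype SA] [MeasurableSpace SA] [MeasurableSingletonClass SA]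
    [Fintype SX] [MeasurableSpace SX] [MeasurableSingletonClass SX]
    [Fintype SY] [MeasurableSpace SY] [MeasurableSingletonClass SY]
    [Fintype SG] [MeasurableSpace SG] [MeasurableSingletonClass SG]
variable (A : Ω → SA) (X : Ω → SX) (Y : Ω → SY) (G : Ω → SG)

/-- joint pmf -/
noncomputable def p4 : SA × SX × SY × SG → ℝ :=
  fun s => (μ ((fun ω => (A ω, X ω, Y ω, G ω)) ⁻¹' {s})).toReal

lemma p4_nonneg : ∀ s, 0 ≤ p4 μ A X Y G s := fun _ => ENNReal.toReal_nonneg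

variable (hA : Measurable A) (hX : Measurable X) (hY : Measurable Y) (hG : Measurable G)
include hA hX hY hG

lemma measure_fiber {T : Type*} (f : SA × SX × SY × SG → T) (t : T) :
    (μ ((fun ω => f (A ω, X ω, Y ω, G ω)) ⁻¹' {t})).toReal
      = ∑ s, if f s = t then p4 μ A X Y G s else 0 := by
  have hWm : ∀ s : SA × SX × SY × SG,
      MeasurableSet ((fun ω => (A ω, X ω, Y ω, G ω)) ⁻¹' {s}) := fun s =>
    (hA.prodMk (hX.prodMk (hY.prodMk hG))) (measurableSet_singleton s)
  have hset : (fun ω => f (A ω, X ω, Y ω, G ω)) ⁻¹' {t}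
      = ⋃ s ∈ (Finset.univ.filter (fun s => f s = t) : Finset (SA × SX × SY × SG)),
          ((fun ω => (A ω, X ω, Y ω, G ω)) ⁻¹' {s}) := by
    ext ω
    simp only [Set.mem_preimage, Set.mem_singleton_iff, Set.mem_iUnion,
      Finset.mem_filter, Finset.mem_univ, true_and]
    constructor
    · intro h
      exact ⟨(A ω, X ω, Y ω, G ω), h, rfl⟩
    · rintro ⟨s, hs, h⟩
      rw [← h] at hs; exact hs
  have hdisj : Set.PairwiseDisjoint
      ((Finset.univ.filter (fun s => f s = t) : Finset (SA × SX × SY × SG)) : Set (SA × SX × SY × SG))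
      (fun s => ((fun ω => (A ω, X ω, Y ω, G ω)) ⁻¹' {s})) := by
    intro s1 _ s2 _ hne
    apply Set.disjoint_left.2
    intro ω h1 h2
    simp only [Set.mem_preimage, Set.mem_singleton_iff] at h1 h2
    exact hne (h1 ▸ h2 ▸ rfl)
  rw [hset, measure_biUnion_finset hdisj (fun s _ => hWm s), ENNReal.toReal_sum
    (fun s _ => measure_ne_top μ _), Finset.sum_filter]
  rfl

lemma hshannon_repr {T : Type*} [Fintype T] (f : SA × SX × SY × SG → T)
    (M : SA × SX × SY × SG → ℝ)
    (hM : ∀ s, M s = ∑ s', if f s' = f s then p4 μ A X Y G s' else 0) :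
    Hshannon μ (fun ω => f (A ω, X ω, Y ω, G ω)) = -∑ s, p4 μ A X Y G s * Real.log (M s) := by
  set p := p4 μ A X Y G with hpdef
  set Q : T → ℝ := fun t => ∑ s, if f s = t then p s else 0 with hQdef
  have step1 : Hshannon μ (fun ω => f (A ω, X ω, Y ω, G ω)) = ∑ t, Real.negMulLog (Q t) := by
    unfold Hshannon
    apply Finset.sum_congr rfl
    intro t _
    rw [measure_fiber μ A X Y G hA hX hY hG f t]
  rw [step1]
  have step2 : ∀ t, Real.negMulLog (Q t) = -∑ s, if f s = t then p s * Real.log (Q t) else 0 := by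
    intro t
    rw [Real.negMulLog, hQdef]
    simp only [neg_mul, neg_inj]
    rw [Finset.sum_mul]
    apply Finset.sum_congr rfl
    intro s _
    rw [ite_mul, zero_mul]
  calc ∑ t, Real.negMulLog (Q t)
      = ∑ t, -∑ s, (if f s = t then p s * Real.log (Q t) else 0) := by
        exact Finset.sum_congr rfl fun t _ => step2 t
    _ = -∑ t, ∑ s, (if f s = t then p s * Real.log (Q t) else 0) := by
        rw [← Finset.sum_neg_distrib]
    _ = -∑ s, ∑ t, (if f s = t then p s * Real.log (Q t) else 0) := by
        rw [Finset.sum_comm]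
    _ = -∑ s, p s * Real.log (Q (f s)) := by
        congr 1
        apply Finset.sum_congr rfl
        intro s _
        rw [Finset.sum_ite_eq]
        simp
    _ = -∑ s, p s * Real.log (M s) := by
        congr 1
        apply Finset.sum_congr rfl
        intro s _
        rw [hM s]


lemma repr_XAY :
    Hshannon μ (fun ω => (X ω, A ω, Y ω)) =
      -∑ s, p4 μ A X Y G s * Real.log (mAXY (p4 μ A X Y G) s.1 s.2.1 s.2.2.1) := by
  apply hshannon_repr μ A X Y G hA hX hY hG (fun s => (s.2.1, s.1, s.2.2.1))
  rintro ⟨a, x, y, g⟩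
  unfold mAXY
  have clean : (∑ g', p4 μ A X Y G (a,x,y,g')) =
      ∑ a' : SA, ∑ x' : SX, ∑ y' : SY, ∑ g' : SG, (if x' = x then (if a' = a then (if y' = y then p4 μ A X Y G (a',x',y',g') else 0) else 0) else 0) := by
    simp only [Finset.sum_ite_irrel, Finset.sum_ite_eq', Finset.sum_const_zero,
      Finset.mem_univ, if_true]
  simp only [Fintype.sum_prod_type, Prod.mk.injEq, ite_and]
  exact clean

lemma repr_GAY :
    Hshannon μ (fun ω => (G ω, A ω, Y ω)) =
      -∑ s, p4 μ A X Y G s * Real.log (mAYG (p4 μ A X Y G) s.1 s.2.2.1 s.2.2.2) := by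
  apply hshannon_repr μ A X Y G hA hX hY hG (fun s => (s.2.2.2, s.1, s.2.2.1))
  rintro ⟨a, x, y, g⟩
  unfold mAYG
  have clean : (∑ x', p4 μ A X Y G (a,x',y,g)) =
      ∑ a' : SA, ∑ x' : SX, ∑ y' : SY, ∑ g' : SG, (if g' = g then (if a' = a then (if y' = y then p4 μ A X Y G (a',x',y',g') else 0) else 0) else 0) := by
    simp only [Finset.sum_ite_irrel, Finset.sum_ite_eq', Finset.sum_const_zero,
      Finset.mem_univ, if_true]
  simp only [Fintype.sum_prod_type, Prod.mk.injEq, ite_and]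
  exact clean

lemma repr_XGAY :
    Hshannon μ (fun ω => (X ω, G ω, A ω, Y ω)) =
      -∑ s, p4 μ A X Y G s * Real.log (p4 μ A X Y G s) := by
  apply hshannon_repr μ A X Y G hA hX hY hG (fun s => (s.2.1, s.2.2.2, s.1, s.2.2.1))
  rintro ⟨a, x, y, g⟩
  have clean : (p4 μ A X Y G (a,x,y,g)) =
      ∑ a' : SA, ∑ x' : SX, ∑ y' : SY, ∑ g' : SG, (if x' = x then (if g' = g then (if a' = a then (if y' = y then p4 μ A X Y G (a',x',y',g') else 0) else 0) else 0) else 0) := by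
    simp only [Finset.sum_ite_irrel, Finset.sum_ite_eq', Finset.sum_const_zero,
      Finset.mem_univ, if_true]
  simp only [Fintype.sum_prod_type, Prod.mk.injEq, ite_and]
  exact clean

lemma repr_AY :
    Hshannon μ (fun ω => (A ω, Y ω)) =
      -∑ s, p4 μ A X Y G s * Real.log (mAY (p4 μ A X Y G) s.1 s.2.2.1) := by
  apply hshannon_repr μ A X Y G hA hX hY hG (fun s => (s.1, s.2.2.1))
  rintro ⟨a, x, y, g⟩
  unfold mAY
  have clean : (∑ x', ∑ g', p4 μ A X Y G (a,x',y,g')) =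
      ∑ a' : SA, ∑ x' : SX, ∑ y' : SY, ∑ g' : SG, (if a' = a then (if y' = y then p4 μ A X Y G (a',x',y',g') else 0) else 0) := by
    simp only [Finset.sum_ite_irrel, Finset.sum_ite_eq', Finset.sum_const_zero,
      Finset.mem_univ, if_true]
  simp only [Fintype.sum_prod_type, Prod.mk.injEq, ite_and]
  exact clean

lemma repr_AX :
    Hshannon μ (fun ω => (A ω, X ω)) =
      -∑ s, p4 μ A X Y G s * Real.log (mAX (p4 μ A X Y G) s.1 s.2.1) := by
  apply hshannon_repr μ A X Y G hA hX hY hG (fun s => (s.1, s.2.1))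
  rintro ⟨a, x, y, g⟩
  unfold mAX
  have clean : (∑ y', ∑ g', p4 μ A X Y G (a,x,y',g')) =
      ∑ a' : SA, ∑ x' : SX, ∑ y' : SY, ∑ g' : SG, (if a' = a then (if x' = x then p4 μ A X Y G (a',x',y',g') else 0) else 0) := by
    simp only [Finset.sum_ite_irrel, Finset.sum_ite_eq', Finset.sum_const_zero,
      Finset.mem_univ, if_true]
  simp only [Fintype.sum_prod_type, Prod.mk.injEq, ite_and]
  exact clean

lemma repr_YX :
    Hshannon μ (fun ω => (Y ω, X ω)) =
      -∑ s, p4 μ A X Y G s * Real.log (mXY (p4 μ A X Y G) s.2.1 s.2.2.1) := by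
  apply hshannon_repr μ A X Y G hA hX hY hG (fun s => (s.2.2.1, s.2.1))
  rintro ⟨a, x, y, g⟩
  unfold mXY
  have clean : (∑ a', ∑ g', p4 μ A X Y G (a',x,y,g')) =
      ∑ a' : SA, ∑ x' : SX, ∑ y' : SY, ∑ g' : SG, (if y' = y then (if x' = x then p4 μ A X Y G (a',x',y',g') else 0) else 0) := by
    simp only [Finset.sum_ite_irrel, Finset.sum_ite_eq', Finset.sum_const_zero,
      Finset.mem_univ, if_true]
  simp only [Fintype.sum_prod_type, Prod.mk.injEq, ite_and]
  exact clean

lemma repr_AYX :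
    Hshannon μ (fun ω => (A ω, Y ω, X ω)) =
      -∑ s, p4 μ A X Y G s * Real.log (mAXY (p4 μ A X Y G) s.1 s.2.1 s.2.2.1) := by
  apply hshannon_repr μ A X Y G hA hX hY hG (fun s => (s.1, s.2.2.1, s.2.1))
  rintro ⟨a, x, y, g⟩
  unfold mAXY
  have clean : (∑ g', p4 μ A X Y G (a,x,y,g')) =
      ∑ a' : SA, ∑ x' : SX, ∑ y' : SY, ∑ g' : SG, (if a' = a then (if y' = y then (if x' = x then p4 μ A X Y G (a',x',y',g') else 0) else 0) else 0) := by
    simp only [Finset.sum_ite_irrel, Finset.sum_ite_eq', Finset.sum_const_zero,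
      Finset.mem_univ, if_true]
  simp only [Fintype.sum_prod_type, Prod.mk.injEq, ite_and]
  exact clean

lemma repr_Xonly :
    Hshannon μ (fun ω => X ω) =
      -∑ s, p4 μ A X Y G s * Real.log (mX (p4 μ A X Y G) s.2.1) := by
  apply hshannon_repr μ A X Y G hA hX hY hG (fun s => s.2.1)
  rintro ⟨a, x, y, g⟩
  unfold mX
  have clean : (∑ a', ∑ y', ∑ g', p4 μ A X Y G (a',x,y',g')) =
      ∑ a' : SA, ∑ x' : SX, ∑ y' : SY, ∑ g' : SG, (if x' = x then p4 μ A X Y G (a',x',y',g') else 0) := by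
    simp only [Finset.sum_ite_irrel, Finset.sum_ite_eq', Finset.sum_const_zero,
      Finset.mem_univ, if_true]
  simp only [Fintype.sum_prod_type, Prod.mk.injEq, ite_and]
  exact clean

lemma repr_AG :
    Hshannon μ (fun ω => (A ω, G ω)) =
      -∑ s, p4 μ A X Y G s * Real.log (mAG (p4 μ A X Y G) s.1 s.2.2.2) := by
  apply hshannon_repr μ A X Y G hA hX hY hG (fun s => (s.1, s.2.2.2))
  rintro ⟨a, x, y, g⟩
  unfold mAG
  have clean : (∑ x', ∑ y', p4 μ A X Y G (a,x',y',g)) =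
      ∑ a' : SA, ∑ x' : SX, ∑ y' : SY, ∑ g' : SG, (if a' = a then (if g' = g then p4 μ A X Y G (a',x',y',g') else 0) else 0) := by
    simp only [Finset.sum_ite_irrel, Finset.sum_ite_eq', Finset.sum_const_zero,
      Finset.mem_univ, if_true]
  simp only [Fintype.sum_prod_type, Prod.mk.injEq, ite_and]
  exact clean

lemma repr_XG :
    Hshannon μ (fun ω => (X ω, G ω)) =
      -∑ s, p4 μ A X Y G s * Real.log (mXG (p4 μ A X Y G) s.2.1 s.2.2.2) := by
  apply hshannon_repr μ A X Y G hA hX hY hG (fun s => (s.2.1, s.2.2.2))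
  rintro ⟨a, x, y, g⟩
  unfold mXG
  have clean : (∑ a', ∑ y', p4 μ A X Y G (a',x,y',g)) =
      ∑ a' : SA, ∑ x' : SX, ∑ y' : SY, ∑ g' : SG, (if x' = x then (if g' = g then p4 μ A X Y G (a',x',y',g') else 0) else 0) := by
    simp only [Finset.sum_ite_irrel, Finset.sum_ite_eq', Finset.sum_const_zero,
      Finset.mem_univ, if_true]
  simp only [Fintype.sum_prod_type, Prod.mk.injEq, ite_and]
  exact clean

lemma repr_AXG :
    Hshannon μ (fun ω => (A ω, X ω, G ω)) =
      -∑ s, p4 μ A X Y G s * Real.log (mAXG (p4 μ A X Y G) s.1 s.2.1 s.2.2.2) := by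
  apply hshannon_repr μ A X Y G hA hX hY hG (fun s => (s.1, s.2.1, s.2.2.2))
  rintro ⟨a, x, y, g⟩
  unfold mAXG
  have clean : (∑ y', p4 μ A X Y G (a,x,y',g)) =
      ∑ a' : SA, ∑ x' : SX, ∑ y' : SY, ∑ g' : SG, (if a' = a then (if x' = x then (if g' = g then p4 μ A X Y G (a',x',y',g') else 0) else 0) else 0) := by
    simp only [Finset.sum_ite_irrel, Finset.sum_ite_eq', Finset.sum_const_zero,
      Finset.mem_univ, if_true]
  simp only [Fintype.sum_prod_type, Prod.mk.injEq, ite_and]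
  exact clean

lemma repr_Gonly :
    Hshannon μ (fun ω => G ω) =
      -∑ s, p4 μ A X Y G s * Real.log (mG (p4 μ A X Y G) s.2.2.2) := by
  apply hshannon_repr μ A X Y G hA hX hY hG (fun s => s.2.2.2)
  rintro ⟨a, x, y, g⟩
  unfold mG
  have clean : (∑ a', ∑ x', ∑ y', p4 μ A X Y G (a',x',y',g)) =
      ∑ a' : SA, ∑ x' : SX, ∑ y' : SY, ∑ g' : SG, (if g' = g then p4 μ A X Y G (a',x',y',g') else 0) := by
    simp only [Finset.sum_ite_irrel, Finset.sum_ite_eq', Finset.sum_const_zero,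
      Finset.mem_univ, if_true]
  simp only [Fintype.sum_prod_type, Prod.mk.injEq, ite_and]
  exact clean

lemma repr_YG :
    Hshannon μ (fun ω => (Y ω, G ω)) =
      -∑ s, p4 μ A X Y G s * Real.log (mYG (p4 μ A X Y G) s.2.2.1 s.2.2.2) := by
  apply hshannon_repr μ A X Y G hA hX hY hG (fun s => (s.2.2.1, s.2.2.2))
  rintro ⟨a, x, y, g⟩
  unfold mYG
  have clean : (∑ a', ∑ x', p4 μ A X Y G (a',x',y,g)) =
      ∑ a' : SA, ∑ x' : SX, ∑ y' : SY, ∑ g' : SG, (if y' = y then (if g' = g then p4 μ A X Y G (a',x',y',g') else 0) else 0) := by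
    simp only [Finset.sum_ite_irrel, Finset.sum_ite_eq', Finset.sum_const_zero,
      Finset.mem_univ, if_true]
  simp only [Fintype.sum_prod_type, Prod.mk.injEq, ite_and]
  exact clean

lemma repr_AYG :
    Hshannon μ (fun ω => (A ω, Y ω, G ω)) =
      -∑ s, p4 μ A X Y G s * Real.log (mAYG (p4 μ A X Y G) s.1 s.2.2.1 s.2.2.2) := by
  apply hshannon_repr μ A X Y G hA hX hY hG (fun s => (s.1, s.2.2.1, s.2.2.2))
  rintro ⟨a, x, y, g⟩
  unfold mAYG
  have clean : (∑ x', p4 μ A X Y G (a,x',y,g)) =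
      ∑ a' : SA, ∑ x' : SX, ∑ y' : SY, ∑ g' : SG, (if a' = a then (if y' = y then (if g' = g then p4 μ A X Y G (a',x',y',g') else 0) else 0) else 0) := by
    simp only [Finset.sum_ite_irrel, Finset.sum_ite_eq', Finset.sum_const_zero,
      Finset.mem_univ, if_true]
  simp only [Fintype.sum_prod_type, Prod.mk.injEq, ite_and]
  exact clean

lemma repr_XY_G :
    Hshannon μ (fun ω => ((X ω, Y ω), G ω)) =
      -∑ s, p4 μ A X Y G s * Real.log (mXYG (p4 μ A X Y G) s.2.1 s.2.2.1 s.2.2.2) := by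
  apply hshannon_repr μ A X Y G hA hX hY hG (fun s => ((s.2.1, s.2.2.1), s.2.2.2))
  rintro ⟨a, x, y, g⟩
  unfold mXYG
  have clean : (∑ a', p4 μ A X Y G (a',x,y,g)) =
      ∑ a' : SA, ∑ x' : SX, ∑ y' : SY, ∑ g' : SG, (if x' = x then (if y' = y then (if g' = g then p4 μ A X Y G (a',x',y',g') else 0) else 0) else 0) := by
    simp only [Finset.sum_ite_irrel, Finset.sum_ite_eq', Finset.sum_const_zero,
      Finset.mem_univ, if_true]
  simp only [Fintype.sum_prod_type, Prod.mk.injEq, ite_and]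
  exact clean

lemma repr_AXY_G :
    Hshannon μ (fun ω => (A ω, (X ω, Y ω), G ω)) =
      -∑ s, p4 μ A X Y G s * Real.log (p4 μ A X Y G s) := by
  apply hshannon_repr μ A X Y G hA hX hY hG (fun s => (s.1, (s.2.1, s.2.2.1), s.2.2.2))
  rintro ⟨a, x, y, g⟩
  have clean : (p4 μ A X Y G (a,x,y,g)) =
      ∑ a' : SA, ∑ x' : SX, ∑ y' : SY, ∑ g' : SG, (if a' = a then (if x' = x then (if y' = y then (if g' = g then p4 μ A X Y G (a',x',y',g') else 0) else 0) else 0) else 0) := by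
    simp only [Finset.sum_ite_irrel, Finset.sum_ite_eq', Finset.sum_const_zero,
      Finset.mem_univ, if_true]
  simp only [Fintype.sum_prod_type, Prod.mk.injEq, ite_and]
  exact clean

-- cmi representations (inside measure section, after repr lemmas)
lemma cmi1_repr :
    cmi μ X G (fun ω => (A ω, Y ω)) = ∑ s, p4 μ A X Y G s *
      (Real.log (p4 μ A X Y G s) + Real.log (mAY (p4 μ A X Y G) s.1 s.2.2.1)
        - Real.log (mAXY (p4 μ A X Y G) s.1 s.2.1 s.2.2.1)
        - Real.log (mAYG (p4 μ A X Y G) s.1 s.2.2.1 s.2.2.2)) := by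
  show Hshannon μ (fun ω => (X ω, A ω, Y ω)) + Hshannon μ (fun ω => (G ω, A ω, Y ω))
      - Hshannon μ (fun ω => (X ω, G ω, A ω, Y ω)) - Hshannon μ (fun ω => (A ω, Y ω)) = _
  rw [repr_XAY μ A X Y G hA hX hY hG, repr_GAY μ A X Y G hA hX hY hG,
    repr_XGAY μ A X Y G hA hX hY hG, repr_AY μ A X Y G hA hX hY hG]
  exact comb4 _ _ _ _ _ (fun s => by ring)

lemma cmi2_repr :
    cmi μ A Y X = ∑ s, p4 μ A X Y G s *
      (Real.log (mAXY (p4 μ A X Y G) s.1 s.2.1 s.2.2.1) + Real.log (mX (p4 μ A X Y G) s.2.1)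
        - Real.log (mAX (p4 μ A X Y G) s.1 s.2.1)
        - Real.log (mXY (p4 μ A X Y G) s.2.1 s.2.2.1)) := by
  show Hshannon μ (fun ω => (A ω, X ω)) + Hshannon μ (fun ω => (Y ω, X ω))
      - Hshannon μ (fun ω => (A ω, Y ω, X ω)) - Hshannon μ (fun ω => X ω) = _
  rw [repr_AX μ A X Y G hA hX hY hG, repr_YX μ A X Y G hA hX hY hG,
    repr_AYX μ A X Y G hA hX hY hG, repr_Xonly μ A X Y G hA hX hY hG]
  exact comb4 _ _ _ _ _ (fun s => by ring)

lemma cmi3_repr :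
    cmi μ A X G = ∑ s, p4 μ A X Y G s *
      (Real.log (mAXG (p4 μ A X Y G) s.1 s.2.1 s.2.2.2) + Real.log (mG (p4 μ A X Y G) s.2.2.2)
        - Real.log (mAG (p4 μ A X Y G) s.1 s.2.2.2)
        - Real.log (mXG (p4 μ A X Y G) s.2.1 s.2.2.2)) := by
  show Hshannon μ (fun ω => (A ω, G ω)) + Hshannon μ (fun ω => (X ω, G ω))
      - Hshannon μ (fun ω => (A ω, X ω, G ω)) - Hshannon μ (fun ω => G ω) = _
  rw [repr_AG μ A X Y G hA hX hY hG, repr_XG μ A X Y G hA hX hY hG,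
    repr_AXG μ A X Y G hA hX hY hG, repr_Gonly μ A X Y G hA hX hY hG]
  exact comb4 _ _ _ _ _ (fun s => by ring)

lemma cmi4_repr :
    cmi μ A Y G = ∑ s, p4 μ A X Y G s *
      (Real.log (mAYG (p4 μ A X Y G) s.1 s.2.2.1 s.2.2.2) + Real.log (mG (p4 μ A X Y G) s.2.2.2)
        - Real.log (mAG (p4 μ A X Y G) s.1 s.2.2.2)
        - Real.log (mYG (p4 μ A X Y G) s.2.2.1 s.2.2.2)) := by
  show Hshannon μ (fun ω => (A ω, G ω)) + Hshannon μ (fun ω => (Y ω, G ω))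
      - Hshannon μ (fun ω => (A ω, Y ω, G ω)) - Hshannon μ (fun ω => G ω) = _
  rw [repr_AG μ A X Y G hA hX hY hG, repr_YG μ A X Y G hA hX hY hG,
    repr_AYG μ A X Y G hA hX hY hG, repr_Gonly μ A X Y G hA hX hY hG]
  exact comb4 _ _ _ _ _ (fun s => by ring)

lemma cmi_goal_repr :
    cmi μ A (fun ω => (X ω, Y ω)) G = ∑ s, p4 μ A X Y G s *
      (Real.log (p4 μ A X Y G s) + Real.log (mG (p4 μ A X Y G) s.2.2.2)
        - Real.log (mAG (p4 μ A X Y G) s.1 s.2.2.2)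
        - Real.log (mXYG (p4 μ A X Y G) s.2.1 s.2.2.1 s.2.2.2)) := by
  show Hshannon μ (fun ω => (A ω, G ω)) + Hshannon μ (fun ω => ((X ω, Y ω), G ω))
      - Hshannon μ (fun ω => (A ω, (X ω, Y ω), G ω)) - Hshannon μ (fun ω => G ω) = _
  rw [repr_AG μ A X Y G hA hX hY hG, repr_XY_G μ A X Y G hA hX hY hG,
    repr_AXY_G μ A X Y G hA hX hY hG, repr_Gonly μ A X Y G hA hX hY hG]
  exact comb4 _ _ _ _ _ (fun s => by ring)

end MeasurePart
end DualIngletonAux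

/-- **Dual conditional Ingleton criterion for Composition, case ii.** -/
theorem dual_cond_ingleton_composition_ii
    {Ω : Type*} [MeasurableSpace Ω] (μ : Measure Ω) [IsProbabilityMeasure μ]
    {SA SX SY SG : Type*}
    [Fintype SA] [Nonempty SA] [MeasurableSpace SA] [MeasurableSingletonClass SA]
    [Fintype SX] [Nonempty SX] [MeasurableSpace SX] [MeasurableSingletonClass SX]
    [Fintype SY] [Nonempty SY] [MeasurableSpace SY] [MeasurableSingletonClass SY]
    [Fintype SG] [Nonempty SG] [MeasurableSpace SG] [MeasurableSingletonClass SG]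
    (A : Ω → SA) (X : Ω → SX) (Y : Ω → SY) (G : Ω → SG)
    (hA : Measurable A) (hX : Measurable X) (hY : Measurable Y) (hG : Measurable G)
    (hG1 : cmi μ X G (fun ω => (A ω, Y ω)) = 0) (hG2 : cmi μ A Y X = 0)
    (h1 : cmi μ A X G = 0) (h2 : cmi μ A Y G = 0) :
    cmi μ A (fun ω => (X ω, Y ω)) G = 0 := by
  have hp := DualIngletonAux.p4_nonneg μ A X Y G
  have F1 := DualIngletonAux.convG1 hp
    (by rw [← DualIngletonAux.cmi1_repr μ A X Y G hA hX hY hG]; exact hG1)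
  have F2 := DualIngletonAux.convG2 hp
    (by rw [← DualIngletonAux.cmi2_repr μ A X Y G hA hX hY hG]; exact hG2)
  have F3 := DualIngletonAux.convG3 hp
    (by rw [← DualIngletonAux.cmi3_repr μ A X Y G hA hX hY hG]; exact h1)
  have F4 := DualIngletonAux.convG4 hp
    (by rw [← DualIngletonAux.cmi4_repr μ A X Y G hA hX hY hG]; exact h2)
  have FT := DualIngletonAux.core hp F1 F2 F3 F4
  rw [DualIngletonAux.cmi_goal_repr μ A X Y G hA hX hY hG]
  exact DualIngletonAux.final_cmi hp FT
end

section
/- Let A, X, Y be jointly distributed random variables on a probability space, each taking values in a finite nonempty set. If there exists a random variable G on the same probability space, taking values in a finite set, such that I[A : Y | G] = 0 and I[Y : G | X] = 0, then I[A : X] = 0 and I[A : X | Y] = 0 together imply I[A : (X, Y)] = 0. -/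
open MeasureTheory ProbabilityTheory

section sumhelp
open Finset
variable {S T U M : Type*} [Fintype S] [Fintype T] [Fintype U] [AddCommMonoid M]

lemma flatten3 (f : S × T × U → M) : ∑ s, f s = ∑ x, ∑ y, ∑ z, f (x, y, z) := by
  rw [Fintype.sum_prod_type]
  exact Finset.sum_congr rfl fun x _ => Fintype.sum_prod_type _

lemma sum_rotate (f : S → T → U → M) :
    ∑ x, ∑ y, ∑ z, f x y z = ∑ z, ∑ x, ∑ y, f x y z := by
  calc ∑ x, ∑ y, ∑ z, f x y z = ∑ x, ∑ z, ∑ y, f x y z :=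
        Finset.sum_congr rfl fun x _ => Finset.sum_comm
    _ = ∑ z, ∑ x, ∑ y, f x y z := Finset.sum_comm

end sumhelp
open MeasureTheory ProbabilityTheory Finset Real

section helpers

lemma negMulLog_sum_expand {I : Type*} [Fintype I] (f : I → ℝ) (c : ℝ) (h : c = ∑ i, f i) :
    Real.negMulLog c = ∑ i, -(f i * Real.log c) := by
  have : (∑ i, -(f i * Real.log c)) = -((∑ i, f i) * Real.log c) := by
    rw [Finset.sum_mul]; simp
  rw [this, ← h, Real.negMulLog]; ring

lemma gibbs_eq {I : Type*} [Fintype I] (p q : I → ℝ) (hp : ∀ i, 0 ≤ p i) (hq : ∀ i, 0 ≤ q i)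
    (hp1 : ∑ i, p i = 1) (hq1 : ∑ i, q i = 1) (hsupp : ∀ i, q i = 0 → p i = 0)
    (h : ∑ i, (p i * Real.log (p i) - p i * Real.log (q i)) ≤ 0) : ∀ i, p i = q i := by
  set D : I → ℝ := fun i => (p i * Real.log (p i) - p i * Real.log (q i)) - (p i - q i) with hD
  have hqpos : ∀ i, 0 < p i → 0 < q i := by
    intro i hpi
    rcases (hq i).lt_or_eq with h' | h'
    · exact h'
    · exact absurd (hsupp i h'.symm) (by linarith)
  have hDkey : ∀ i, 0 < p i → p i ≠ q i → 0 < D i := by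
    intro i hpi hne
    have hqi := hqpos i hpi
    have hx : (0:ℝ) < q i / p i := by positivity
    have hx1 : q i / p i ≠ 1 := by
      intro e
      exact hne (by field_simp at e; linarith)
    have hlog := Real.log_lt_sub_one_of_pos hx hx1
    rw [Real.log_div hqi.ne' hpi.ne'] at hlog
    have := mul_lt_mul_of_pos_left hlog hpi
    have hcd : p i * (q i / p i - 1) = q i - p i := by field_simp
    rw [hcd] at this
    simp only [hD]
    nlinarith
  have hDnn : ∀ i, 0 ≤ D i := by
    intro i
    rcases (hp i).lt_or_eq with hpi | hpi
    · rcases eq_or_ne (p i) (q i) with he | hne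
      · simp [hD, he]
      · exact (hDkey i hpi hne).le
    · simp [hD, ← hpi, hq i]
  have hsumD : ∑ i, D i ≤ 0 := by
    have : ∑ i, D i = (∑ i, (p i * Real.log (p i) - p i * Real.log (q i))) - ((∑ i, p i) - (∑ i, q i)) := by
      simp [hD, Finset.sum_sub_distrib]
    rw [this, hp1, hq1]; simpa using h
  have hall := (Finset.sum_eq_zero_iff_of_nonneg (fun i _ => hDnn i)).mp
    (le_antisymm hsumD (Finset.sum_nonneg (fun i _ => hDnn i)))
  intro i
  by_contra hne
  rcases (hp i).lt_or_eq with hpi | hpi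
  · exact absurd (hall i (mem_univ i)) (hDkey i hpi hne).ne'
  · have h0 := hall i (mem_univ i)
    simp [hD, ← hpi] at h0
    exact hne (by rw [← hpi, h0])

variable {Ω : Type*} [MeasurableSpace Ω] {μ : Measure Ω} [IsProbabilityMeasure μ]

lemma toReal_measure_eq_sum {S I : Type*} [MeasurableSpace S] [MeasurableSingletonClass S]
    [Fintype I] {W : Ω → S} (hW : Measurable W) {g : I → S} (hg : Function.Injective g)
    {B : Set Ω} (hB : B = ⋃ i, W ⁻¹' {g i}) :
    (μ B).toReal = ∑ i, (μ (W ⁻¹' {g i})).toReal := by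
  have hd : Pairwise (Function.onFun Disjoint fun i => W ⁻¹' ({g i} : Set S)) := by
    intro i j hij
    exact Disjoint.preimage W (by simp [Set.disjoint_singleton, hg.ne hij])
  rw [hB, measure_iUnion hd (fun i => hW (measurableSet_singleton _)), tsum_fintype]
  exact ENNReal.toReal_sum (fun i _ => measure_ne_top μ _)

lemma sum_dist_one {S : Type*} [MeasurableSpace S] [MeasurableSingletonClass S] [Fintype S]
    {W : Ω → S} (hW : Measurable W) : ∑ s, (μ (W ⁻¹' {s})).toReal = 1 := by
  have := toReal_measure_eq_sum (μ := μ) hW (g := fun s : S => s) Function.injective_id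
    (B := Set.univ) (by ext ω; simp)
  simp at this
  exact this.symm

end helpers
set_option linter.unusedSectionVars false
section margs
open MeasureTheory Finset
variable {Ω : Type*} [MeasurableSpace Ω] {μ : Measure Ω} [IsProbabilityMeasure μ]
variable {S T U : Type*}
  [Fintype S] [MeasurableSpace S] [MeasurableSingletonClass S]
  [Fintype T] [MeasurableSpace T] [MeasurableSingletonClass T]
  [Fintype U] [MeasurableSpace U] [MeasurableSingletonClass U]

lemma marg_fst (X : Ω → S) (Y : Ω → T) (hX : Measurable X) (hY : Measurable Y) (x : S) :
    (μ (X ⁻¹' {x})).toReal = ∑ y, (μ ((fun ω => (X ω, Y ω)) ⁻¹' {(x, y)})).toReal :=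
  toReal_measure_eq_sum (hX.prodMk hY)
    (g := fun y : T => ((x, y) : S × T)) (fun a b h => by simpa using h)
    (by ext ω; simp [Prod.ext_iff])

lemma marg_snd (X : Ω → S) (Y : Ω → T) (hX : Measurable X) (hY : Measurable Y) (y : T) :
    (μ (Y ⁻¹' {y})).toReal = ∑ x, (μ ((fun ω => (X ω, Y ω)) ⁻¹' {(x, y)})).toReal :=
  toReal_measure_eq_sum (hX.prodMk hY)
    (g := fun x : S => ((x, y) : S × T)) (fun a b h => by simpa using h)
    (by ext ω; simp [Prod.ext_iff])

lemma marg3_last (X : Ω → S) (Y : Ω → T) (Z : Ω → U)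
    (hX : Measurable X) (hY : Measurable Y) (hZ : Measurable Z) (x : S) (y : T) :
    (μ ((fun ω => (X ω, Y ω)) ⁻¹' {(x, y)})).toReal
      = ∑ z, (μ ((fun ω => (X ω, Y ω, Z ω)) ⁻¹' {(x, y, z)})).toReal :=
  toReal_measure_eq_sum (hX.prodMk (hY.prodMk hZ))
    (g := fun z : U => ((x, y, z) : S × T × U)) (fun a b h => by simpa using h)
    (by ext ω; simp [Prod.ext_iff])

lemma marg3_mid (X : Ω → S) (Y : Ω → T) (Z : Ω → U)
    (hX : Measurable X) (hY : Measurable Y) (hZ : Measurable Z) (x : S) (z : U) :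
    (μ ((fun ω => (X ω, Z ω)) ⁻¹' {(x, z)})).toReal
      = ∑ y, (μ ((fun ω => (X ω, Y ω, Z ω)) ⁻¹' {(x, y, z)})).toReal :=
  toReal_measure_eq_sum (hX.prodMk (hY.prodMk hZ))
    (g := fun y : T => ((x, y, z) : S × T × U)) (fun a b h => by simpa using h)
    (by ext ω; simp [Prod.ext_iff])

lemma marg3_first (X : Ω → S) (Y : Ω → T) (Z : Ω → U)
    (hX : Measurable X) (hY : Measurable Y) (hZ : Measurable Z) (y : T) (z : U) :
    (μ ((fun ω => (Y ω, Z ω)) ⁻¹' {(y, z)})).toReal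
      = ∑ x, (μ ((fun ω => (X ω, Y ω, Z ω)) ⁻¹' {(x, y, z)})).toReal :=
  toReal_measure_eq_sum (hX.prodMk (hY.prodMk hZ))
    (g := fun x : S => ((x, y, z) : S × T × U)) (fun a b h => by simpa using h)
    (by ext ω; simp [Prod.ext_iff])

lemma marg3_third (X : Ω → S) (Y : Ω → T) (Z : Ω → U)
    (hX : Measurable X) (hY : Measurable Y) (hZ : Measurable Z) (z : U) :
    (μ (Z ⁻¹' {z})).toReal
      = ∑ t : S × T, (μ ((fun ω => (X ω, Y ω, Z ω)) ⁻¹' {(t.1, t.2, z)})).toReal :=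
  toReal_measure_eq_sum (hX.prodMk (hY.prodMk hZ))
    (g := fun t : S × T => ((t.1, t.2, z) : S × T × U))
    (fun a b h => by simpa [Prod.ext_iff] using h)
    (by ext ω; simp [Prod.ext_iff])

lemma dist_swap (X : Ω → S) (Y : Ω → T) (x : S) (y : T) :
    (μ ((fun ω => (Y ω, X ω)) ⁻¹' {(y, x)})).toReal
      = (μ ((fun ω => (X ω, Y ω)) ⁻¹' {(x, y)})).toReal := by
  have h : ((fun ω => (Y ω, X ω)) ⁻¹' {(y, x)} : Set Ω) = (fun ω => (X ω, Y ω)) ⁻¹' {(x, y)} := by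
    ext ω; simp [Prod.ext_iff, and_comm]
  rw [h]

end margs
section info
open MeasureTheory Finset Real
variable {Ω : Type*} [MeasurableSpace Ω] {μ : Measure Ω} [IsProbabilityMeasure μ]
variable {S T U : Type*}
  [Fintype S] [MeasurableSpace S] [MeasurableSingletonClass S]
  [Fintype T] [MeasurableSpace T] [MeasurableSingletonClass T]
  [Fintype U] [MeasurableSpace U] [MeasurableSingletonClass U]

lemma cmi_zero_factor (X : Ω → S) (Y : Ω → T) (Z : Ω → U)
    (hX : Measurable X) (hY : Measurable Y) (hZ : Measurable Z)
    (h : cmi μ X Y Z = 0) :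
    ∀ x y z, (μ ((fun ω => (X ω, Y ω, Z ω)) ⁻¹' {(x, y, z)})).toReal * (μ (Z ⁻¹' {z})).toReal
      = (μ ((fun ω => (X ω, Z ω)) ⁻¹' {(x, z)})).toReal
        * (μ ((fun ω => (Y ω, Z ω)) ⁻¹' {(y, z)})).toReal := by
  set p : S × T × U → ℝ := fun s => (μ ((fun ω => (X ω, Y ω, Z ω)) ⁻¹' {s})).toReal with hp_def
  set dXZ : S → U → ℝ := fun x z => (μ ((fun ω => (X ω, Z ω)) ⁻¹' {(x, z)})).toReal with hdXZ_def
  set dYZ : T → U → ℝ := fun y z => (μ ((fun ω => (Y ω, Z ω)) ⁻¹' {(y, z)})).toReal with hdYZ_def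
  set dZ : U → ℝ := fun z => (μ (Z ⁻¹' {z})).toReal with hdZ_def
  have hp0 : ∀ s, 0 ≤ p s := fun s => ENNReal.toReal_nonneg
  have hm1 : ∀ x z, dXZ x z = ∑ y, p (x, y, z) := fun x z => marg3_mid X Y Z hX hY hZ x z
  have hm2 : ∀ y z, dYZ y z = ∑ x, p (x, y, z) := fun y z => marg3_first X Y Z hX hY hZ y z
  have hm4 : ∀ z, dZ z = ∑ x, dXZ x z := fun z => marg_snd X Z hX hZ z
  have hm5 : ∀ z, dZ z = ∑ y, dYZ y z := fun z => marg_snd Y Z hY hZ z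
  have hXZ0 : ∀ x z, 0 ≤ dXZ x z := fun x z => ENNReal.toReal_nonneg
  have hYZ0 : ∀ y z, 0 ≤ dYZ y z := fun y z => ENNReal.toReal_nonneg
  have hZ0 : ∀ z, 0 ≤ dZ z := fun z => ENNReal.toReal_nonneg
  have hpXZ : ∀ x y z, p (x, y, z) ≤ dXZ x z := fun x y z => by
    rw [hm1]; exact Finset.single_le_sum (fun i _ => hp0 (x, i, z)) (mem_univ y)
  have hpYZ : ∀ x y z, p (x, y, z) ≤ dYZ y z := fun x y z => by
    rw [hm2]; exact Finset.single_le_sum (fun i _ => hp0 (i, y, z)) (mem_univ x)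
  have hXZZ : ∀ x z, dXZ x z ≤ dZ z := fun x z => by
    rw [hm4]; exact Finset.single_le_sum (fun i _ => hXZ0 i z) (mem_univ x)
  set q : S × T × U → ℝ := fun s => dXZ s.1 s.2.2 * dYZ s.2.1 s.2.2 / dZ s.2.2 with hq_def
  have hq0 : ∀ s, 0 ≤ q s := fun s => by
    apply div_nonneg (mul_nonneg (hXZ0 _ _) (hYZ0 _ _)) (hZ0 _)
  have hp1 : ∑ s, p s = 1 := sum_dist_one (hX.prodMk (hY.prodMk hZ))
  have hq1 : ∑ s, q s = 1 := by
    have hz : ∀ z, (∑ x, ∑ y, q (x, y, z)) = dZ z := by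
      intro z
      by_cases hz0 : dZ z = 0
      · simp only [hq_def, hz0, div_zero, Finset.sum_const_zero]
      · have : ∀ x, ∑ y, q (x, y, z) = dXZ x z * dZ z / dZ z := by
          intro x
          simp only [hq_def]
          rw [← Finset.sum_div, ← Finset.mul_sum, ← hm5]
        rw [Finset.sum_congr rfl fun x _ => this x, ← Finset.sum_div, ← Finset.sum_mul, ← hm4]
        field_simp
    calc ∑ s : S × T × U, q s = ∑ x, ∑ y, ∑ z, q (x, y, z) := flatten3 q
      _ = ∑ z, ∑ x, ∑ y, q (x, y, z) := sum_rotate _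
      _ = ∑ z, dZ z := Finset.sum_congr rfl fun z _ => hz z
      _ = 1 := sum_dist_one hZ
  have hsupp : ∀ s, q s = 0 → p s = 0 := by
    rintro ⟨x, y, z⟩ hqs
    simp only [hq_def] at hqs
    rcases div_eq_zero_iff.mp hqs with h0 | h0
    · rcases mul_eq_zero.mp h0 with h1 | h1
      · exact le_antisymm (h1 ▸ hpXZ x y z) (hp0 _)
      · exact le_antisymm (h1 ▸ hpYZ x y z) (hp0 _)
    · have : dXZ x z = 0 := le_antisymm (h0 ▸ hXZZ x z) (hXZ0 x z)
      exact le_antisymm (this ▸ hpXZ x y z) (hp0 _)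
  have hcmi : cmi μ X Y Z = ∑ s, (p s * Real.log (p s) - p s * Real.log (q s)) := by
    have e13 : Hshannon μ (fun ω => (X ω, Z ω))
        = ∑ s : S × T × U, -(p s * Real.log (dXZ s.1 s.2.2)) := by
      have l1 : Hshannon μ (fun ω => (X ω, Z ω)) = ∑ x, ∑ z, Real.negMulLog (dXZ x z) := by
        rw [Hshannon, Fintype.sum_prod_type]
      have l2 : ∑ s : S × T × U, -(p s * Real.log (dXZ s.1 s.2.2))
          = ∑ x, ∑ y, ∑ z, -(p (x, y, z) * Real.log (dXZ x z)) := flatten3 _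
      rw [l1, l2]
      refine Finset.sum_congr rfl fun x _ => ?_
      rw [Finset.sum_comm]
      refine Finset.sum_congr rfl fun z _ => ?_
      exact negMulLog_sum_expand (fun y => p (x, y, z)) _ (hm1 x z)
    have e23 : Hshannon μ (fun ω => (Y ω, Z ω))
        = ∑ s : S × T × U, -(p s * Real.log (dYZ s.2.1 s.2.2)) := by
      have l1 : Hshannon μ (fun ω => (Y ω, Z ω)) = ∑ y, ∑ z, Real.negMulLog (dYZ y z) := by
        rw [Hshannon, Fintype.sum_prod_type]
      have l2 : ∑ s : S × T × U, -(p s * Real.log (dYZ s.2.1 s.2.2))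
          = ∑ y, ∑ z, ∑ x, -(p (x, y, z) * Real.log (dYZ y z)) := by
        rw [flatten3, sum_rotate (f := fun y z x => -(p (x, y, z) * Real.log (dYZ y z)))]
      rw [l1, l2]
      refine Finset.sum_congr rfl fun y _ => ?_
      refine Finset.sum_congr rfl fun z _ => ?_
      exact negMulLog_sum_expand (fun x => p (x, y, z)) _ (hm2 y z)
    have e3 : Hshannon μ Z = ∑ s : S × T × U, -(p s * Real.log (dZ s.2.2)) := by
      have hm3 : ∀ z, dZ z = ∑ t : S × T, p (t.1, t.2, z) := fun z =>
        marg3_third X Y Z hX hY hZ z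
      have l1 : Hshannon μ Z = ∑ z, ∑ t : S × T, -(p (t.1, t.2, z) * Real.log (dZ z)) := by
        rw [Hshannon]
        exact Finset.sum_congr rfl fun z _ =>
          negMulLog_sum_expand (fun t : S × T => p (t.1, t.2, z)) _ (hm3 z)
      have l2 : ∑ s : S × T × U, -(p s * Real.log (dZ s.2.2))
          = ∑ z, ∑ t : S × T, -(p (t.1, t.2, z) * Real.log (dZ z)) := by
        rw [flatten3]
        rw [show (∑ z, ∑ t : S × T, -(p (t.1, t.2, z) * Real.log (dZ z)))
            = ∑ z, ∑ x, ∑ y, -(p (x, y, z) * Real.log (dZ z)) from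
          Finset.sum_congr rfl fun z _ => Fintype.sum_prod_type _]
        exact (sum_rotate (f := fun x y z => -(p (x, y, z) * Real.log (dZ z))))
      rw [l1]
      exact l2.symm
    have e123 : Hshannon μ (fun ω => (X ω, Y ω, Z ω)) = ∑ s : S × T × U, Real.negMulLog (p s) := rfl
    rw [cmi, e13, e23, e3, e123, ← Finset.sum_add_distrib, ← Finset.sum_sub_distrib,
      ← Finset.sum_sub_distrib]
    refine Finset.sum_congr rfl fun s _ => ?_
    obtain ⟨x, y, z⟩ := s
    by_cases hps : p (x, y, z) = 0
    · simp [hps, Real.negMulLog]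
    · have hppos : 0 < p (x, y, z) := (hp0 _).lt_of_ne (Ne.symm hps)
      have hxz : 0 < dXZ x z := lt_of_lt_of_le hppos (hpXZ x y z)
      have hyz : 0 < dYZ y z := lt_of_lt_of_le hppos (hpYZ x y z)
      have hz : 0 < dZ z := lt_of_lt_of_le hxz (hXZZ x z)
      have hlq : Real.log (q (x, y, z))
          = Real.log (dXZ x z) + Real.log (dYZ y z) - Real.log (dZ z) := by
        simp only [hq_def]
        rw [Real.log_div (by positivity) hz.ne', Real.log_mul hxz.ne' hyz.ne']
      rw [hlq, Real.negMulLog]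
      ring
  have hle : ∑ s, (p s * Real.log (p s) - p s * Real.log (q s)) ≤ 0 := by
    rw [← hcmi, h]
  have heq := gibbs_eq p q hp0 hq0 hp1 hq1 hsupp hle
  intro x y z
  have := heq (x, y, z)
  simp only [hq_def] at this
  by_cases hz0 : dZ z = 0
  · have h1 : dXZ x z = 0 := le_antisymm (hz0 ▸ hXZZ x z) (hXZ0 x z)
    show p (x, y, z) * dZ z = dXZ x z * dYZ y z
    rw [hz0, h1, mul_zero, zero_mul]
  · show p (x, y, z) * dZ z = dXZ x z * dYZ y z
    rw [this, div_mul_cancel₀ _ hz0]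

end info
section info2
open MeasureTheory Finset Real
variable {Ω : Type*} [MeasurableSpace Ω] {μ : Measure Ω} [IsProbabilityMeasure μ]
variable {S T : Type*}
  [Fintype S] [MeasurableSpace S] [MeasurableSingletonClass S]
  [Fintype T] [MeasurableSpace T] [MeasurableSingletonClass T]

lemma mutInfo_zero_factor (X : Ω → S) (Y : Ω → T)
    (hX : Measurable X) (hY : Measurable Y) (h : mutInfo μ X Y = 0) :
    ∀ x y, (μ ((fun ω => (X ω, Y ω)) ⁻¹' {(x, y)})).toReal
      = (μ (X ⁻¹' {x})).toReal * (μ (Y ⁻¹' {y})).toReal := by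
  set p : S × T → ℝ := fun s => (μ ((fun ω => (X ω, Y ω)) ⁻¹' {s})).toReal with hp_def
  set dX : S → ℝ := fun x => (μ (X ⁻¹' {x})).toReal with hdX_def
  set dY : T → ℝ := fun y => (μ (Y ⁻¹' {y})).toReal with hdY_def
  have hp0 : ∀ s, 0 ≤ p s := fun s => ENNReal.toReal_nonneg
  have hX0 : ∀ x, 0 ≤ dX x := fun x => ENNReal.toReal_nonneg
  have hY0 : ∀ y, 0 ≤ dY y := fun y => ENNReal.toReal_nonneg
  have hmX : ∀ x, dX x = ∑ y, p (x, y) := fun x => marg_fst X Y hX hY x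
  have hmY : ∀ y, dY y = ∑ x, p (x, y) := fun y => marg_snd X Y hX hY y
  have hpX : ∀ x y, p (x, y) ≤ dX x := fun x y => by
    rw [hmX]; exact Finset.single_le_sum (fun i _ => hp0 (x, i)) (mem_univ y)
  have hpY : ∀ x y, p (x, y) ≤ dY y := fun x y => by
    rw [hmY]; exact Finset.single_le_sum (fun i _ => hp0 (i, y)) (mem_univ x)
  set q : S × T → ℝ := fun s => dX s.1 * dY s.2 with hq_def
  have hq0 : ∀ s, 0 ≤ q s := fun s => mul_nonneg (hX0 _) (hY0 _)
  have hp1 : ∑ s, p s = 1 := sum_dist_one (hX.prodMk hY)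
  have hq1 : ∑ s, q s = 1 := by
    rw [Fintype.sum_prod_type]
    simp only [hq_def]
    rw [show (∑ x, ∑ y, dX x * dY y) = (∑ x, dX x) * (∑ y, dY y) by
      rw [Finset.sum_mul]; exact Finset.sum_congr rfl fun x _ => (Finset.mul_sum _ _ _).symm]
    rw [sum_dist_one hX, sum_dist_one hY, one_mul]
  have hsupp : ∀ s, q s = 0 → p s = 0 := by
    rintro ⟨x, y⟩ hqs
    rcases mul_eq_zero.mp hqs with h0 | h0
    · exact le_antisymm (h0 ▸ hpX x y) (hp0 _)
    · exact le_antisymm (h0 ▸ hpY x y) (hp0 _)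
  have hmi : mutInfo μ X Y = ∑ s, (p s * Real.log (p s) - p s * Real.log (q s)) := by
    have e1 : Hshannon μ X = ∑ s : S × T, -(p s * Real.log (dX s.1)) := by
      rw [Fintype.sum_prod_type, Hshannon]
      exact Finset.sum_congr rfl fun x _ => negMulLog_sum_expand (fun y => p (x, y)) _ (hmX x)
    have e2 : Hshannon μ Y = ∑ s : S × T, -(p s * Real.log (dY s.2)) := by
      rw [show (∑ s : S × T, -(p s * Real.log (dY s.2)))
          = ∑ y, ∑ x, -(p (x, y) * Real.log (dY y)) by
        rw [Fintype.sum_prod_type]; exact Finset.sum_comm]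
      rw [Hshannon]
      exact Finset.sum_congr rfl fun y _ => negMulLog_sum_expand (fun x => p (x, y)) _ (hmY y)
    have e12 : Hshannon μ (fun ω => (X ω, Y ω)) = ∑ s : S × T, Real.negMulLog (p s) := rfl
    rw [mutInfo, e1, e2, e12, ← Finset.sum_add_distrib, ← Finset.sum_sub_distrib]
    refine Finset.sum_congr rfl fun s _ => ?_
    obtain ⟨x, y⟩ := s
    by_cases hps : p (x, y) = 0
    · simp [hps, Real.negMulLog]
    · have hppos : 0 < p (x, y) := (hp0 _).lt_of_ne (Ne.symm hps)
      have hx : 0 < dX x := lt_of_lt_of_le hppos (hpX x y)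
      have hy : 0 < dY y := lt_of_lt_of_le hppos (hpY x y)
      have hlq : Real.log (q (x, y)) = Real.log (dX x) + Real.log (dY y) := by
        simp only [hq_def]
        exact Real.log_mul hx.ne' hy.ne'
      rw [hlq, Real.negMulLog]
      ring
  have hle : ∑ s, (p s * Real.log (p s) - p s * Real.log (q s)) ≤ 0 := by rw [← hmi, h]
  have heq := gibbs_eq p q hp0 hq0 hp1 hq1 hsupp hle
  intro x y
  exact heq (x, y)

lemma mutInfo_eq_zero_of_factor (X : Ω → S) (Y : Ω → T)
    (hX : Measurable X) (hY : Measurable Y)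
    (h : ∀ x y, (μ ((fun ω => (X ω, Y ω)) ⁻¹' {(x, y)})).toReal
      = (μ (X ⁻¹' {x})).toReal * (μ (Y ⁻¹' {y})).toReal) :
    mutInfo μ X Y = 0 := by
  set dX : S → ℝ := fun x => (μ (X ⁻¹' {x})).toReal with hdX_def
  set dY : T → ℝ := fun y => (μ (Y ⁻¹' {y})).toReal with hdY_def
  have hpair : Hshannon μ (fun ω => (X ω, Y ω)) = Hshannon μ X + Hshannon μ Y := by
    have : Hshannon μ (fun ω => (X ω, Y ω))
        = ∑ x, ∑ y, (dY y * Real.negMulLog (dX x) + dX x * Real.negMulLog (dY y)) := by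
      rw [Hshannon, Fintype.sum_prod_type]
      refine Finset.sum_congr rfl fun x _ => Finset.sum_congr rfl fun y _ => ?_
      rw [h x y]
      exact Real.negMulLog_mul _ _
    rw [this]
    have hsx : ∑ x, dX x = 1 := sum_dist_one hX
    have hsy : ∑ y, dY y = 1 := sum_dist_one hY
    rw [show (∑ x, ∑ y, (dY y * Real.negMulLog (dX x) + dX x * Real.negMulLog (dY y)))
        = ∑ x, ((∑ y, dY y) * Real.negMulLog (dX x) + dX x * ∑ y, Real.negMulLog (dY y)) from
      Finset.sum_congr rfl fun x _ => by
        rw [Finset.sum_add_distrib, ← Finset.sum_mul, ← Finset.mul_sum]]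
    rw [hsy]
    simp only [one_mul]
    rw [Finset.sum_add_distrib, ← Finset.sum_mul, hsx, one_mul]
    rfl
  rw [mutInfo, hpair]
  ring

end info2

section keyalg
open Finset

theorem key_alg {SA SX SY SG : Type*} [Fintype SA] [Fintype SX] [Fintype SY] [Fintype SG]
    (pA : SA → ℝ) (pX : SX → ℝ) (pY : SY → ℝ) (pG : SG → ℝ)
    (pAX : SA → SX → ℝ) (pAY : SA → SY → ℝ) (pXY : SX → SY → ℝ)
    (pAG : SA → SG → ℝ) (pYG : SY → SG → ℝ) (pGX : SG → SX → ℝ)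
    (pAXY : SA → SX → SY → ℝ) (pAYG : SA → SY → SG → ℝ) (pYGX : SY → SG → SX → ℝ)
    (hAXY0 : ∀ a x y, 0 ≤ pAXY a x y) (hAYG0 : ∀ a y g, 0 ≤ pAYG a y g)
    (hYGX0 : ∀ y g x, 0 ≤ pYGX y g x)
    (hXY0 : ∀ x y, 0 ≤ pXY x y) (hAY0 : ∀ a y, 0 ≤ pAY a y) (hAG0 : ∀ a g, 0 ≤ pAG a g)
    (hYG0 : ∀ y g, 0 ≤ pYG y g) (hGX0 : ∀ g x, 0 ≤ pGX g x)
    (hY1 : ∑ y, pY y = 1)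
    (hYsum : ∀ y, pY y = ∑ a, pAY a y)
    (hYsum3 : ∀ y, pY y = ∑ x, pXY x y)
    (hXsum2 : ∀ x, pX x = ∑ y, pXY x y)
    (hXsum3 : ∀ x, pX x = ∑ g, pGX g x)
    (hGXsum : ∀ g x, pGX g x = ∑ y, pYGX y g x)
    (hYGsum : ∀ y g, pYG y g = ∑ x, pYGX y g x)
    (hYGsum2 : ∀ y g, pYG y g = ∑ a, pAYG a y g)
    (hAYsum : ∀ a y, pAY a y = ∑ g, pAYG a y g)
    (hAYsum2 : ∀ a y, pAY a y = ∑ x, pAXY a x y)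
    (hGsum : ∀ g, pG g = ∑ y, pYG y g)
    (hAsum : ∀ a, pA a = ∑ y, pAY a y)
    (hAXsum : ∀ a x, pAX a x = ∑ y, pAXY a x y)
    (h1 : ∀ a x, pAX a x = pA a * pX x)
    (h2 : ∀ a x y, pAXY a x y * pY y = pAY a y * pXY x y)
    (hE1 : ∀ a y g, pAYG a y g * pG g = pAG a g * pYG y g)
    (hE3 : ∀ y g x, pYGX y g x * pX x = pXY x y * pGX g x) :
    ∀ a x y, pAXY a x y = pA a * pXY x y := by
  have hY0 : ∀ y, 0 ≤ pY y := fun y => (hYsum y) ▸ Finset.sum_nonneg fun a _ => hAY0 a y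
  have hX0 : ∀ x, 0 ≤ pX x := fun x => (hXsum2 x) ▸ Finset.sum_nonneg fun y _ => hXY0 x y
  have hG0 : ∀ g, 0 ≤ pG g := fun g => (hGsum g) ▸ Finset.sum_nonneg fun y _ => hYG0 y g
  have hbAY : ∀ a y, pAY a y ≤ pY y := fun a y =>
    (hYsum y) ▸ Finset.single_le_sum (fun i _ => hAY0 i y) (mem_univ a)
  have hbXY : ∀ x y, pXY x y ≤ pY y := fun x y =>
    (hYsum3 y) ▸ Finset.single_le_sum (fun i _ => hXY0 i y) (mem_univ x)
  have hbAXY : ∀ a x y, pAXY a x y ≤ pAY a y := fun a x y =>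
    (hAYsum2 a y) ▸ Finset.single_le_sum (fun i _ => hAXY0 a i y) (mem_univ x)
  have hbAYG : ∀ a y g, pAYG a y g ≤ pYG y g := fun a y g =>
    (hYGsum2 y g) ▸ Finset.single_le_sum (fun i _ => hAYG0 i y g) (mem_univ a)
  have hbYG : ∀ y g, pYG y g ≤ pG g := fun y g =>
    (hGsum g) ▸ Finset.single_le_sum (fun i _ => hYG0 i g) (mem_univ y)
  have hbGX : ∀ g x, pGX g x ≤ pX x := fun g x =>
    (hXsum3 x) ▸ Finset.single_le_sum (fun i _ => hGX0 i x) (mem_univ g)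
  have hbYGX : ∀ y g x, pYGX y g x ≤ pGX g x := fun y g x =>
    (hGXsum g x) ▸ Finset.single_le_sum (fun i _ => hYGX0 i g x) (mem_univ y)
  -- zero propagation
  have hYzAXY : ∀ a x y, pY y = 0 → pAXY a x y = 0 := fun a x y hy =>
    le_antisymm ((hbAXY a x y).trans ((hbAY a y).trans hy.le)) (hAXY0 a x y)
  have hYzAY : ∀ a y, pY y = 0 → pAY a y = 0 := fun a y hy =>
    le_antisymm ((hbAY a y).trans hy.le) (hAY0 a y)
  have hYzXY : ∀ x y, pY y = 0 → pXY x y = 0 := fun x y hy =>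
    le_antisymm ((hbXY x y).trans hy.le) (hXY0 x y)
  -- S1
  have S1 : ∀ a x y, pAXY a x y = pAY a y * pXY x y / pY y := by
    intro a x y
    by_cases hy : pY y = 0
    · rw [hy, div_zero]; exact hYzAXY a x y hy
    · rw [eq_div_iff hy]; exact h2 a x y
  -- S2
  have S2 : ∀ a y g, pAYG a y g = pAG a g * pYG y g / pG g := by
    intro a y g
    by_cases hg : pG g = 0
    · rw [hg, div_zero]
      exact le_antisymm ((hbAYG a y g).trans ((hbYG y g).trans hg.le)) (hAYG0 a y g)
    · rw [eq_div_iff hg]; exact hE1 a y g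
  -- S3
  have S3 : ∀ y g x, pYGX y g x = pXY x y * pGX g x / pX x := by
    intro y g x
    by_cases hx : pX x = 0
    · rw [hx, div_zero]
      exact le_antisymm ((hbYGX y g x).trans ((hbGX g x).trans hx.le)) (hYGX0 y g x)
    · rw [eq_div_iff hx]; exact hE3 y g x
  have S3' : ∀ y g, pYG y g = ∑ x, pXY x y * pGX g x / pX x := fun y g => by
    rw [hYGsum y g]; exact Finset.sum_congr rfl fun x _ => S3 y g x
  set K : SA → SX → ℝ := fun a x => ∑ g, pAG a g * pGX g x / pG g with hK
  -- S5
  have S5 : ∀ a y, pAY a y = ∑ x, pXY x y * K a x / pX x := by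
    intro a y
    rw [hAYsum a y]
    calc ∑ g, pAYG a y g
        = ∑ g, pAG a g * (∑ x, pXY x y * pGX g x / pX x) / pG g := by
          refine Finset.sum_congr rfl fun g _ => ?_
          rw [S2 a y g, S3' y g]
      _ = ∑ g, ∑ x, pAG a g * (pXY x y * pGX g x / pX x) / pG g := by
          refine Finset.sum_congr rfl fun g _ => ?_
          rw [Finset.mul_sum, Finset.sum_div]
      _ = ∑ x, ∑ g, pAG a g * (pXY x y * pGX g x / pX x) / pG g := Finset.sum_comm
      _ = ∑ x, pXY x y * K a x / pX x := by
          refine Finset.sum_congr rfl fun x _ => ?_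
          simp only [hK]
          rw [Finset.mul_sum, Finset.sum_div]
          exact Finset.sum_congr rfl fun g _ => by ring
  -- S7
  have S7 : ∀ a x, ∑ y, pXY x y * pAY a y / pY y = pA a * pX x := by
    intro a x
    have hpt : ∀ y, pXY x y * pAY a y / pY y = pAXY a x y := fun y => by
      rw [S1 a x y]; ring
    rw [Finset.sum_congr rfl fun y _ => hpt y, ← hAXsum a x, h1 a x]
  set T : SA → SY → ℝ := fun a y => pAY a y - pA a * pY y with hT
  have hTzero_of : ∀ a y, pY y = 0 → T a y = 0 := fun a y hy => by
    simp only [hT]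
    rw [hYzAY a y hy, hy, mul_zero, sub_zero]
  have hTsum : ∀ a, ∑ y, T a y = 0 := by
    intro a
    simp only [hT]
    rw [Finset.sum_sub_distrib, ← Finset.mul_sum, hY1, ← hAsum a, mul_one, sub_self]
  have main : ∀ a, ∑ y, T a y ^ 2 / pY y = 0 := by
    intro a
    have hpt : ∀ y, T a y ^ 2 / pY y
        = T a y * pAY a y / pY y - pA a * (T a y * (pY y / pY y)) := by
      intro y
      by_cases hy : pY y = 0
      · simp [hy, hTzero_of a y hy]
      · field_simp
        ring
    rw [Finset.sum_congr rfl fun y _ => hpt y, Finset.sum_sub_distrib]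
    have h2nd : ∀ y, pA a * (T a y * (pY y / pY y)) = pA a * T a y := by
      intro y
      by_cases hy : pY y = 0
      · rw [hTzero_of a y hy]; simp
      · rw [div_self hy, mul_one]
    have h2nd' : ∑ y, pA a * (T a y * (pY y / pY y)) = 0 := by
      rw [Finset.sum_congr rfl fun y _ => h2nd y, ← Finset.mul_sum, hTsum a, mul_zero]
    have h1st : ∑ y, T a y * pAY a y / pY y = 0 := by
      have step : ∑ y, T a y * pAY a y / pY y
          = ∑ x, ∑ y, T a y * (pXY x y * K a x / pX x) / pY y := by
        rw [← Finset.sum_comm]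
        refine Finset.sum_congr rfl fun y _ => ?_
        rw [show T a y * pAY a y / pY y
            = T a y * (∑ x, pXY x y * K a x / pX x) / pY y by rw [← S5 a y]]
        rw [Finset.mul_sum, Finset.sum_div]
      rw [step]
      have hinner : ∀ x, ∑ y, T a y * (pXY x y * K a x / pX x) / pY y = 0 := by
        intro x
        have hpt2 : ∀ y, T a y * (pXY x y * K a x / pX x) / pY y
            = (K a x / pX x) * (pXY x y * pAY a y / pY y - pA a * (pXY x y * (pY y / pY y))) := by
          intro y
          simp only [hT]
          ring
        rw [Finset.sum_congr rfl fun y _ => hpt2 y, ← Finset.mul_sum]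
        have : ∑ y, (pXY x y * pAY a y / pY y - pA a * (pXY x y * (pY y / pY y))) = 0 := by
          rw [Finset.sum_sub_distrib, S7 a x]
          have hfix : ∀ y, pA a * (pXY x y * (pY y / pY y)) = pA a * pXY x y := by
            intro y
            by_cases hy : pY y = 0
            · rw [hYzXY x y hy]; simp
            · rw [div_self hy, mul_one]
          rw [Finset.sum_congr rfl fun y _ => hfix y, ← Finset.mul_sum, ← hXsum2 x, sub_self]
        rw [this, mul_zero]
      rw [Finset.sum_congr rfl fun x _ => hinner x, Finset.sum_const_zero]
    rw [h1st, h2nd', sub_self]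
  have hTzero : ∀ a y, T a y = 0 := by
    intro a y
    have hnn : ∀ y, 0 ≤ T a y ^ 2 / pY y := fun y => div_nonneg (sq_nonneg _) (hY0 y)
    have hterm := (Finset.sum_eq_zero_iff_of_nonneg (fun i _ => hnn i)).mp (main a) y (mem_univ y)
    by_cases hy : pY y = 0
    · exact hTzero_of a y hy
    · have : T a y ^ 2 = 0 := by
        rcases div_eq_zero_iff.mp hterm with h' | h'
        · exact h'
        · exact absurd h' hy
      exact pow_eq_zero_iff (n := 2) (by norm_num) |>.mp this
  have hAYfac : ∀ a y, pAY a y = pA a * pY y := by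
    intro a y
    have := hTzero a y
    simp only [hT] at this
    linarith
  intro a x y
  rw [S1 a x y, hAYfac a y]
  by_cases hy : pY y = 0
  · rw [hYzXY x y hy, hy]
    simp
  · field_simp
end keyalg

/-- **Criterion for the third implication.** If there exists a finite-valued random
variable `G` with `I[A : Y | G] = 0` and `I[Y : G | X] = 0`, then `I[A : X] = 0` and
`I[A : X | Y] = 0` imply `I[A : (X, Y)] = 0`. -/
theorem third_implication_criterion
    {Ω : Type*} [MeasurableSpace Ω] (μ : Measure Ω) [IsProbabilityMeasure μ]
    {SA SX SY : Type*}
    [Fintype SA] [Nonempty SA] [MeasurableSpace SA] [MeasurableSingletonClass SA]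
    [Fintype SX] [Nonempty SX] [MeasurableSpace SX] [MeasurableSingletonClass SX]
    [Fintype SY] [Nonempty SY] [MeasurableSpace SY] [MeasurableSingletonClass SY]
    (A : Ω → SA) (X : Ω → SX) (Y : Ω → SY)
    (hA : Measurable A) (hX : Measurable X) (hY : Measurable Y)
    (hG : ∃ (SG : Type) (_ : Fintype SG) (_ : MeasurableSpace SG)
      (_ : MeasurableSingletonClass SG) (G : Ω → SG),
        Measurable G ∧ cmi μ A Y G = 0 ∧ cmi μ Y G X = 0)
    (h1 : mutInfo μ A X = 0) (h2 : cmi μ A X Y = 0) :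
    mutInfo μ A (fun ω => (X ω, Y ω)) = 0 := by
  obtain ⟨SG, _, _, _, G, hGm, hc1, hc2⟩ := hG
  have F1 := mutInfo_zero_factor A X hA hX h1
  have F2 := cmi_zero_factor A X Y hA hX hY h2
  have F3 := cmi_zero_factor A Y G hA hY hGm hc1
  have F4 := cmi_zero_factor Y G X hY hGm hX hc2
  have KEY := key_alg
    (fun a => (μ (A ⁻¹' {a})).toReal) (fun x => (μ (X ⁻¹' {x})).toReal)
    (fun y => (μ (Y ⁻¹' {y})).toReal) (fun g => (μ (G ⁻¹' {g})).toReal)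
    (fun a x => (μ ((fun ω => (A ω, X ω)) ⁻¹' {(a, x)})).toReal)
    (fun a y => (μ ((fun ω => (A ω, Y ω)) ⁻¹' {(a, y)})).toReal)
    (fun x y => (μ ((fun ω => (X ω, Y ω)) ⁻¹' {(x, y)})).toReal)
    (fun a g => (μ ((fun ω => (A ω, G ω)) ⁻¹' {(a, g)})).toReal)
    (fun y g => (μ ((fun ω => (Y ω, G ω)) ⁻¹' {(y, g)})).toReal)
    (fun g x => (μ ((fun ω => (G ω, X ω)) ⁻¹' {(g, x)})).toReal)
    (fun a x y => (μ ((fun ω => (A ω, X ω, Y ω)) ⁻¹' {(a, x, y)})).toReal)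
    (fun a y g => (μ ((fun ω => (A ω, Y ω, G ω)) ⁻¹' {(a, y, g)})).toReal)
    (fun y g x => (μ ((fun ω => (Y ω, G ω, X ω)) ⁻¹' {(y, g, x)})).toReal)
    (fun _ _ _ => ENNReal.toReal_nonneg) (fun _ _ _ => ENNReal.toReal_nonneg)
    (fun _ _ _ => ENNReal.toReal_nonneg)
    (fun _ _ => ENNReal.toReal_nonneg) (fun _ _ => ENNReal.toReal_nonneg)
    (fun _ _ => ENNReal.toReal_nonneg) (fun _ _ => ENNReal.toReal_nonneg)
    (fun _ _ => ENNReal.toReal_nonneg)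
    (sum_dist_one hY)
    (fun y => marg_snd A Y hA hY y)
    (fun y => marg_snd X Y hX hY y)
    (fun x => marg_fst X Y hX hY x)
    (fun x => marg_snd G X hGm hX x)
    (fun g x => marg3_first Y G X hY hGm hX g x)
    (fun y g => marg3_last Y G X hY hGm hX y g)
    (fun y g => marg3_first A Y G hA hY hGm y g)
    (fun a y => marg3_last A Y G hA hY hGm a y)
    (fun a y => marg3_mid A X Y hA hX hY a y)
    (fun g => marg_snd Y G hY hGm g)
    (fun a => marg_fst A Y hA hY a)
    (fun a x => marg3_last A X Y hA hX hY a x)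
    F1 F2 F3
    (fun y g x => by
      have hh := F4 y g x
      rw [dist_swap X Y x y] at hh
      exact hh)
  apply mutInfo_eq_zero_of_factor A (fun ω => (X ω, Y ω)) hA (hX.prodMk hY)
  intro a t
  obtain ⟨x, y⟩ := t
  exact KEY a x y
end

section
/- Let M be a simple matroid on a finite ground set N with rank function r. Suppose the conditional independence structure of M satisfies the (elementary) Composition property: for all distinct i, j, k ∈ N and all L ⊆ N \ {i, j, k}, if r({i} ∪ L) + r({j} ∪ L) = r({i, j} ∪ L) + r(L) and r({i} ∪ L) + r({k} ∪ L) = r({i, k} ∪ L) + r(L), then r({i} ∪ {k} ∪ L) + r({j} ∪ {k} ∪ L) = r({i, j, k} ∪ L) + r({k} ∪ L). Then M is the free matroid on N, i.e. r(N) = |N| (equivalently, N is independent in M). -/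
/-- A matroid on the finite ground set `N`, given by its rank function
`r : 2^N → ℕ` satisfying the rank axioms. -/
structure MatroidRank (N : Type*) [Fintype N] [DecidableEq N] where
  r : Finset N → ℕ
  rank_le_card : ∀ S : Finset N, r S ≤ S.card
  mono : ∀ ⦃S T : Finset N⦄, S ⊆ T → r S ≤ r T
  submodular : ∀ S T : Finset N, r (S ∪ T) + r (S ∩ T) ≤ r S + r T

/-- **Simple matroids with Composition are free.** If a simple matroid (every set of at
most two elements is independent) satisfies the elementary Composition property, then it
is the free matroid: `r(N) = |N|`. -/
theorem simple_matroid_composition_free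
    {N : Type*} [Fintype N] [DecidableEq N] (M : MatroidRank N)
    (hsimple : ∀ S : Finset N, S.card ≤ 2 → M.r S = S.card)
    (hcompo : ∀ i j k : N, i ≠ j → i ≠ k → j ≠ k → ∀ L : Finset N,
      L ⊆ Finset.univ \ {i, j, k} →
      M.r (insert i L) + M.r (insert j L) = M.r (insert i (insert j L)) + M.r L →
      M.r (insert i L) + M.r (insert k L) = M.r (insert i (insert k L)) + M.r L →
      M.r (insert i (insert k L)) + M.r (insert j (insert k L)) =
        M.r (insert i (insert j (insert k L))) + M.r (insert k L)) :
    M.r Finset.univ = Fintype.card N := by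
  suffices h : ∀ n : ℕ, ∀ S : Finset N, S.card = n → M.r S = S.card by
    rw [h _ Finset.univ rfl, Finset.card_univ]
  intro n
  induction n using Nat.strong_induction_on with
  | _ n ih =>
  intro S hS
  by_cases hle : S.card ≤ 2
  · exact hsimple S hle
  push_neg at hle
  -- pick three distinct elements of S
  obtain ⟨i, hi⟩ := Finset.card_pos.mp (by omega : 0 < S.card)
  have h1 : 0 < (S.erase i).card := by
    rw [Finset.card_erase_of_mem hi]; omega
  obtain ⟨j, hj⟩ := Finset.card_pos.mp h1
  have hji : j ≠ i := Finset.ne_of_mem_erase hj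
  have hjS : j ∈ S := Finset.mem_of_mem_erase hj
  have h2 : 0 < ((S.erase i).erase j).card := by
    rw [Finset.card_erase_of_mem hj, Finset.card_erase_of_mem hi]; omega
  obtain ⟨k, hk⟩ := Finset.card_pos.mp h2
  have hkj : k ≠ j := Finset.ne_of_mem_erase hk
  have hki : k ≠ i := Finset.ne_of_mem_erase (Finset.mem_of_mem_erase hk)
  have hkS : k ∈ S := Finset.mem_of_mem_erase (Finset.mem_of_mem_erase hk)
  set L : Finset N := S \ {i, j, k} with hLdef
  have hmemL : ∀ x, x ∈ L ↔ x ∈ S ∧ x ≠ i ∧ x ≠ j ∧ x ≠ k := by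
    intro x
    simp [hLdef, Finset.mem_sdiff, and_assoc]
  have hiL : i ∉ L := fun h => ((hmemL i).mp h).2.1 rfl
  have hjL : j ∉ L := fun h => ((hmemL j).mp h).2.2.1 rfl
  have hkL : k ∉ L := fun h => ((hmemL k).mp h).2.2.2 rfl
  have hsub : L ⊆ Finset.univ \ {i, j, k} := by
    intro x hx
    rcases (hmemL x).mp hx with ⟨_, h1, h2, h3⟩
    simp [h1, h2, h3]
  have hS3 : insert i (insert j (insert k L)) = S := by
    ext x
    simp only [Finset.mem_insert, hmemL]
    constructor
    · rintro (rfl | rfl | rfl | ⟨h, _⟩) <;> assumption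
    · intro hx
      by_cases e1 : x = i
      · exact Or.inl e1
      by_cases e2 : x = j
      · exact Or.inr (Or.inl e2)
      by_cases e3 : x = k
      · exact Or.inr (Or.inr (Or.inl e3))
      · exact Or.inr (Or.inr (Or.inr ⟨hx, e1, e2, e3⟩))
  -- cardinalities
  have hLcard : L.card + 3 = S.card := by
    have : S.card = (insert i (insert j (insert k L))).card := by rw [hS3]
    rw [Finset.card_insert_of_notMem (by simp [hiL, hji.symm, hki.symm]),
      Finset.card_insert_of_notMem (by simp [hjL, hkj.symm]),
      Finset.card_insert_of_notMem hkL] at this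
    omega
  -- ranks of small sets by induction hypothesis
  have rank_of_card : ∀ T : Finset N, T.card < n → M.r T = T.card := fun T hT => ih T.card hT T rfl
  have hrL : M.r L = L.card := rank_of_card L (by omega)
  have hriL : M.r (insert i L) = L.card + 1 := by
    rw [rank_of_card _ (by rw [Finset.card_insert_of_notMem hiL]; omega),
      Finset.card_insert_of_notMem hiL]
  have hrjL : M.r (insert j L) = L.card + 1 := by
    rw [rank_of_card _ (by rw [Finset.card_insert_of_notMem hjL]; omega),
      Finset.card_insert_of_notMem hjL]
  have hrkL : M.r (insert k L) = L.card + 1 := by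
    rw [rank_of_card _ (by rw [Finset.card_insert_of_notMem hkL]; omega),
      Finset.card_insert_of_notMem hkL]
  have cij : (insert i (insert j L)).card = L.card + 2 := by
    rw [Finset.card_insert_of_notMem (by simp [hiL, hji.symm]),
      Finset.card_insert_of_notMem hjL]
  have cik : (insert i (insert k L)).card = L.card + 2 := by
    rw [Finset.card_insert_of_notMem (by simp [hiL, hki.symm]),
      Finset.card_insert_of_notMem hkL]
  have cjk : (insert j (insert k L)).card = L.card + 2 := by
    rw [Finset.card_insert_of_notMem (by simp [hjL, hkj.symm]),
      Finset.card_insert_of_notMem hkL]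
  have hrij : M.r (insert i (insert j L)) = L.card + 2 := by
    rw [rank_of_card _ (by rw [cij]; omega), cij]
  have hrik : M.r (insert i (insert k L)) = L.card + 2 := by
    rw [rank_of_card _ (by rw [cik]; omega), cik]
  have hrjk : M.r (insert j (insert k L)) = L.card + 2 := by
    rw [rank_of_card _ (by rw [cjk]; omega), cjk]
  have key := hcompo i j k (Ne.symm hji) (Ne.symm hki) (Ne.symm hkj) L hsub
    (by rw [hriL, hrjL, hrij, hrL]; omega) (by rw [hriL, hrkL, hrik, hrL]; omega)
  rw [hS3, hrik, hrjk, hrkL] at key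
  omega
end

section
/- Let N be a finite index set and let (X_n)_{n ∈ N} be jointly distributed random variables on a probability space, each taking values in a finite nonempty set; for S ⊆ N write X_S for the joint random variable (X_n)_{n ∈ S}. For pairwise disjoint subsets I, J, K ⊆ N, the conditional independence I[X_I : X_J | X_K] = 0 holds if and only if for every i ∈ I, every j ∈ J, and every set L with K ⊆ L ⊆ (I ∪ J ∪ K) \ {i, j}, the elementary conditional independence I[X_i : X_j | X_L] = 0 holds. -/
open MeasureTheory ProbabilityTheory

section Basic
variable {Ω : Type*} [MeasurableSpace Ω] (μ : Measure Ω)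

lemma Hshannon_comp_inj {S T : Type*} [Fintype T] [Fintype S] (X : Ω → S)
    (f : S → T) (hf : Function.Injective f) :
    Hshannon μ (fun ω => f (X ω)) = Hshannon μ X := by
  classical
  unfold Hshannon
  calc ∑ t : T, Real.negMulLog (μ ((fun ω => f (X ω)) ⁻¹' {t})).toReal
      = ∑ t ∈ Finset.univ.image f, Real.negMulLog (μ ((fun ω => f (X ω)) ⁻¹' {t})).toReal := by
        refine (Finset.sum_subset (Finset.subset_univ _) ?_).symm
        intro t _ ht
        have : (fun ω => f (X ω)) ⁻¹' {t} = ∅ := by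
          ext ω
          simp only [Set.mem_preimage, Set.mem_singleton_iff, Set.mem_empty_iff_false, iff_false]
          intro h
          exact ht (Finset.mem_image.2 ⟨X ω, Finset.mem_univ _, h⟩)
        simp [this, Real.negMulLog_zero]
    _ = ∑ s : S, Real.negMulLog (μ ((fun ω => f (X ω)) ⁻¹' {f s})).toReal :=
        Finset.sum_image (fun a _ b _ h => hf h)
    _ = ∑ s : S, Real.negMulLog (μ (X ⁻¹' {s})).toReal := by
        apply Finset.sum_congr rfl
        intro s _
        have : (fun ω => f (X ω)) ⁻¹' {f s} = X ⁻¹' {s} := by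
          ext ω; simp [hf.eq_iff]
        rw [this]

/-- Entropy congruence: if `Y = f ∘ X` pointwise with `f` injective, entropies agree. -/
lemma Hshannon_congr {S T : Type*} [Fintype T] [Fintype S] {X : Ω → S} {Y : Ω → T}
    (f : S → T) (hf : Function.Injective f) (h : ∀ ω, Y ω = f (X ω)) :
    Hshannon μ Y = Hshannon μ X := by
  have : Y = fun ω => f (X ω) := funext h
  rw [this, Hshannon_comp_inj μ X f hf]

variable {S T U S' T' U' : Type*} [Fintype S] [Fintype T] [Fintype U]
  [Fintype S'] [Fintype T'] [Fintype U']

lemma cmi_comp_inj (X : Ω → S) (Y : Ω → T) (Z : Ω → U)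
    (f : S → S') (g : T → T') (e : U → U')
    (hf : Function.Injective f) (hg : Function.Injective g) (he : Function.Injective e) :
    cmi μ (fun ω => f (X ω)) (fun ω => g (Y ω)) (fun ω => e (Z ω)) = cmi μ X Y Z := by
  have hXZ : Hshannon μ (fun ω => (f (X ω), e (Z ω))) = Hshannon μ (fun ω => (X ω, Z ω)) :=
    Hshannon_congr μ (Prod.map f e) (hf.prodMap he) (fun ω => rfl)
  have hYZ : Hshannon μ (fun ω => (g (Y ω), e (Z ω))) = Hshannon μ (fun ω => (Y ω, Z ω)) :=
    Hshannon_congr μ (Prod.map g e) (hg.prodMap he) (fun ω => rfl)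
  have hXYZ : Hshannon μ (fun ω => (f (X ω), g (Y ω), e (Z ω)))
      = Hshannon μ (fun ω => (X ω, Y ω, Z ω)) :=
    Hshannon_congr μ (Prod.map f (Prod.map g e)) (hf.prodMap (hg.prodMap he)) (fun ω => rfl)
  have hZ : Hshannon μ (fun ω => e (Z ω)) = Hshannon μ Z := Hshannon_comp_inj μ Z e he
  unfold cmi
  beta_reduce
  rw [hXZ, hYZ, hXYZ, hZ]

/-- Symmetry of conditional mutual information. -/
lemma cmi_comm (X : Ω → S) (Y : Ω → T) (Z : Ω → U) :
    cmi μ X Y Z = cmi μ Y X Z := by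
  unfold cmi
  have h : Hshannon μ (fun ω => (X ω, Y ω, Z ω)) = Hshannon μ (fun ω => (Y ω, X ω, Z ω)) :=
    Hshannon_congr μ (fun p => (p.2.1, p.1, p.2.2))
      (fun a b hp => by
        obtain ⟨a1, a2, a3⟩ := a; obtain ⟨b1, b2, b3⟩ := b
        simp only [Prod.mk.injEq] at hp ⊢; tauto)
      (fun ω => rfl) (X := fun ω => (Y ω, X ω, Z ω))
  rw [h]; ring

/-- Chain rule for conditional mutual information. -/
lemma cmi_chain (X : Ω → S) (X' : Ω → S') (Y : Ω → T) (Z : Ω → U) :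
    cmi μ (fun ω => (X ω, X' ω)) Y Z
      = cmi μ X Y Z + cmi μ X' Y (fun ω => (X ω, Z ω)) := by
  unfold cmi
  have h1 : Hshannon μ (fun ω => ((X ω, X' ω), Z ω))
      = Hshannon μ (fun ω => (X' ω, (X ω, Z ω))) :=
    Hshannon_congr μ (fun p : S' × S × U => ((p.2.1, p.1), p.2.2))
      (fun a b hp => by
        obtain ⟨a1, a2, a3⟩ := a; obtain ⟨b1, b2, b3⟩ := b
        simp only [Prod.mk.injEq] at hp ⊢; tauto)
      (fun ω => rfl)
  have h2 : Hshannon μ (fun ω => ((X ω, X' ω), Y ω, Z ω))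
      = Hshannon μ (fun ω => (X' ω, Y ω, (X ω, Z ω))) :=
    Hshannon_congr μ (fun p : S' × T × S × U => ((p.2.2.1, p.1), p.2.1, p.2.2.2))
      (fun a b hp => by
        obtain ⟨a1, a2, a3, a4⟩ := a; obtain ⟨b1, b2, b3, b4⟩ := b
        simp only [Prod.mk.injEq] at hp ⊢; tauto)
      (fun ω => rfl)
  have h3 : Hshannon μ (fun ω => (X ω, Y ω, Z ω))
      = Hshannon μ (fun ω => (Y ω, (X ω, Z ω))) :=
    Hshannon_congr μ (fun p : T × S × U => (p.2.1, p.1, p.2.2))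
      (fun a b hp => by
        obtain ⟨a1, a2, a3⟩ := a; obtain ⟨b1, b2, b3⟩ := b
        simp only [Prod.mk.injEq] at hp ⊢; tauto)
      (fun ω => rfl)
  rw [h1, h2, h3]; ring

/-- CMI vanishes when the first variable takes values in a subsingleton type. -/
lemma cmi_const_left [Unique S] (X : Ω → S) (Y : Ω → T) (Z : Ω → U) :
    cmi μ X Y Z = 0 := by
  have h1 : Hshannon μ (fun ω => (X ω, Z ω)) = Hshannon μ Z :=
    Hshannon_congr μ (fun z : U => ((default : S), z))
      (fun a b hp => by simpa using hp)
      (fun ω => by rw [Subsingleton.elim (X ω) default])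
  have h2 : Hshannon μ (fun ω => (X ω, Y ω, Z ω)) = Hshannon μ (fun ω => (Y ω, Z ω)) :=
    Hshannon_congr μ (fun p : T × U => ((default : S), p))
      (fun a b hp => by simpa using hp)
      (fun ω => by rw [Subsingleton.elim (X ω) default])
  unfold cmi
  rw [h1, h2]; ring

/-- CMI vanishes when the second variable takes values in a subsingleton type. -/
lemma cmi_const_mid [Unique T] (X : Ω → S) (Y : Ω → T) (Z : Ω → U) :
    cmi μ X Y Z = 0 := by
  rw [cmi_comm]; exact cmi_const_left μ Y X Z
end Basic

section Basic2
variable {Ω : Type*} [MeasurableSpace Ω] (μ : Measure Ω)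
variable {S T U S' U' : Type*} [Fintype S] [Fintype T] [Fintype U] [Fintype S'] [Fintype U']

lemma cmi_comp_inj_fst (X : Ω → S) (Y : Ω → T) (Z : Ω → U) (f : S → S')
    (hf : Function.Injective f) :
    cmi μ (fun ω => f (X ω)) Y Z = cmi μ X Y Z := by
  have hXZ : Hshannon μ (fun ω => (f (X ω), Z ω)) = Hshannon μ (fun ω => (X ω, Z ω)) :=
    Hshannon_congr μ (Prod.map f id) (hf.prodMap Function.injective_id) (fun ω => rfl)
  have hXYZ : Hshannon μ (fun ω => (f (X ω), Y ω, Z ω))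
      = Hshannon μ (fun ω => (X ω, Y ω, Z ω)) :=
    Hshannon_congr μ (Prod.map f id) (hf.prodMap Function.injective_id) (fun ω => rfl)
  unfold cmi
  beta_reduce
  rw [hXZ, hXYZ]

lemma cmi_comp_inj_thd (X : Ω → S) (Y : Ω → T) (Z : Ω → U) (e : U → U')
    (he : Function.Injective e) :
    cmi μ X Y (fun ω => e (Z ω)) = cmi μ X Y Z := by
  have hXZ : Hshannon μ (fun ω => (X ω, e (Z ω))) = Hshannon μ (fun ω => (X ω, Z ω)) :=
    Hshannon_congr μ (Prod.map id e) (Function.injective_id.prodMap he) (fun ω => rfl)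
  have hYZ : Hshannon μ (fun ω => (Y ω, e (Z ω))) = Hshannon μ (fun ω => (Y ω, Z ω)) :=
    Hshannon_congr μ (Prod.map id e) (Function.injective_id.prodMap he) (fun ω => rfl)
  have hXYZ : Hshannon μ (fun ω => (X ω, Y ω, e (Z ω)))
      = Hshannon μ (fun ω => (X ω, Y ω, Z ω)) :=
    Hshannon_congr μ (Prod.map id (Prod.map id e))
      (Function.injective_id.prodMap (Function.injective_id.prodMap he)) (fun ω => rfl)
  have hZ : Hshannon μ (fun ω => e (Z ω)) = Hshannon μ Z := Hshannon_comp_inj μ Z e he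
  unfold cmi
  beta_reduce
  rw [hXZ, hYZ, hXYZ, hZ]
end Basic2

section NN
variable {Ω : Type*} [MeasurableSpace Ω] (μ : Measure Ω) [IsProbabilityMeasure μ]

lemma toReal_measure_iUnion_fin {ι : Type*} [Fintype ι] (f : ι → Set Ω)
    (hd : Pairwise (Function.onFun Disjoint f)) (hm : ∀ i, MeasurableSet (f i)) :
    (μ (⋃ i, f i)).toReal = ∑ i, (μ (f i)).toReal := by
  rw [measure_iUnion hd hm, tsum_fintype,
    ENNReal.toReal_sum (fun i _ => measure_ne_top μ _)]

variable {S T U : Type*} [Fintype S] [Fintype T] [Fintype U]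

lemma hexp {ι : Type*} [Fintype ι] (g : ι → ℝ) (c : ℝ) :
    (-(∑ i, g i)) * c = ∑ i, -(g i) * c := by
  rw [← Finset.sum_neg_distrib, Finset.sum_mul]

lemma cmi_nonneg (X : Ω → S) (Y : Ω → T) (Z : Ω → U)
    (hX : ∀ s, MeasurableSet (X ⁻¹' {s})) (hY : ∀ t, MeasurableSet (Y ⁻¹' {t}))
    (hZ : ∀ u, MeasurableSet (Z ⁻¹' {u})) :
    0 ≤ cmi μ X Y Z := by
  classical
  set p : S → T → U → ℝ := fun x y z => (μ (X ⁻¹' {x} ∩ Y ⁻¹' {y} ∩ Z ⁻¹' {z})).toReal with hpdef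
  set r : S → U → ℝ := fun x z => (μ (X ⁻¹' {x} ∩ Z ⁻¹' {z})).toReal with hrdef
  set w : T → U → ℝ := fun y z => (μ (Y ⁻¹' {y} ∩ Z ⁻¹' {z})).toReal with hwdef
  set q : U → ℝ := fun z => (μ (Z ⁻¹' {z})).toReal with hqdef
  have mono : ∀ {A B : Set Ω}, A ⊆ B → (μ A).toReal ≤ (μ B).toReal := fun h =>
    ENNReal.toReal_mono (measure_ne_top μ _) (measure_mono h)
  have hp0 : ∀ x y z, 0 ≤ p x y z := fun _ _ _ => ENNReal.toReal_nonneg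
  have hr0 : ∀ x z, 0 ≤ r x z := fun _ _ => ENNReal.toReal_nonneg
  have hw0 : ∀ y z, 0 ≤ w y z := fun _ _ => ENNReal.toReal_nonneg
  have hq0 : ∀ z, 0 ≤ q z := fun _ => ENNReal.toReal_nonneg
  have hpr : ∀ x y z, p x y z ≤ r x z := fun x y z =>
    mono (fun ω hω => ⟨hω.1.1, hω.2⟩)
  have hpw : ∀ x y z, p x y z ≤ w y z := fun x y z =>
    mono (fun ω hω => ⟨hω.1.2, hω.2⟩)
  have hpq : ∀ x y z, p x y z ≤ q z := fun x y z => mono (fun ω hω => hω.2)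
  -- marginals
  have hr' : ∀ x z, r x z = ∑ y, p x y z := by
    intro x z
    have hU : X ⁻¹' {x} ∩ Z ⁻¹' {z} = ⋃ y, (X ⁻¹' {x} ∩ Y ⁻¹' {y} ∩ Z ⁻¹' {z}) := by
      ext ω; simp only [Set.mem_inter_iff, Set.mem_preimage, Set.mem_singleton_iff,
        Set.mem_iUnion]
      constructor
      · rintro ⟨h1, h2⟩; exact ⟨Y ω, ⟨h1, rfl⟩, h2⟩
      · rintro ⟨y, ⟨h1, _⟩, h2⟩; exact ⟨h1, h2⟩
    show (μ (X ⁻¹' {x} ∩ Z ⁻¹' {z})).toReal = _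
    rw [hU]
    exact toReal_measure_iUnion_fin μ _
      (fun y y' hyy => Set.disjoint_left.2 (fun ω h1 h2 => hyy (h1.1.2.symm.trans h2.1.2)))
      (fun y => ((hX x).inter (hY y)).inter (hZ z))
  have hw' : ∀ y z, w y z = ∑ x, p x y z := by
    intro y z
    have hU : Y ⁻¹' {y} ∩ Z ⁻¹' {z} = ⋃ x, (X ⁻¹' {x} ∩ Y ⁻¹' {y} ∩ Z ⁻¹' {z}) := by
      ext ω; simp only [Set.mem_inter_iff, Set.mem_preimage, Set.mem_singleton_iff,
        Set.mem_iUnion]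
      constructor
      · rintro ⟨h1, h2⟩; exact ⟨X ω, ⟨rfl, h1⟩, h2⟩
      · rintro ⟨x, ⟨_, h1⟩, h2⟩; exact ⟨h1, h2⟩
    show (μ (Y ⁻¹' {y} ∩ Z ⁻¹' {z})).toReal = _
    rw [hU]
    exact toReal_measure_iUnion_fin μ _
      (fun x x' hxx => Set.disjoint_left.2 (fun ω h1 h2 => hxx (h1.1.1.symm.trans h2.1.1)))
      (fun x => ((hX x).inter (hY y)).inter (hZ z))
  have hq' : ∀ z, q z = ∑ x, r x z := by
    intro z
    have hU : Z ⁻¹' {z} = ⋃ x, (X ⁻¹' {x} ∩ Z ⁻¹' {z}) := by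
      ext ω; simp only [Set.mem_inter_iff, Set.mem_preimage, Set.mem_singleton_iff,
        Set.mem_iUnion]
      constructor
      · intro h; exact ⟨X ω, rfl, h⟩
      · rintro ⟨x, _, h⟩; exact h
    show (μ (Z ⁻¹' {z})).toReal = _
    rw [hU]
    exact toReal_measure_iUnion_fin μ _
      (fun x x' hxx => Set.disjoint_left.2 (fun ω h1 h2 => hxx (h1.1.symm.trans h2.1)))
      (fun x => (hX x).inter (hZ z))
  have hq'' : ∀ z, q z = ∑ y, w y z := by
    intro z
    have hU : Z ⁻¹' {z} = ⋃ y, (Y ⁻¹' {y} ∩ Z ⁻¹' {z}) := by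
      ext ω; simp only [Set.mem_inter_iff, Set.mem_preimage, Set.mem_singleton_iff,
        Set.mem_iUnion]
      constructor
      · intro h; exact ⟨Y ω, rfl, h⟩
      · rintro ⟨y, _, h⟩; exact h
    show (μ (Z ⁻¹' {z})).toReal = _
    rw [hU]
    exact toReal_measure_iUnion_fin μ _
      (fun y y' hyy => Set.disjoint_left.2 (fun ω h1 h2 => hyy (h1.1.symm.trans h2.1)))
      (fun y => (hY y).inter (hZ z))
  -- entropy formulas
  have HXYZ : Hshannon μ (fun ω => (X ω, Y ω, Z ω))
      = ∑ z, ∑ x, ∑ y, Real.negMulLog (p x y z) := by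
    unfold Hshannon
    rw [Fintype.sum_prod_type]
    have : ∀ x : S, ∑ v : T × U, Real.negMulLog
        (μ ((fun ω => (X ω, Y ω, Z ω)) ⁻¹' {(x, v)})).toReal
        = ∑ y, ∑ z, Real.negMulLog (p x y z) := by
      intro x
      rw [Fintype.sum_prod_type]
      refine Finset.sum_congr rfl fun y _ => Finset.sum_congr rfl fun z _ => ?_
      rw [show (fun ω => (X ω, Y ω, Z ω)) ⁻¹' {(x, y, z)}
          = X ⁻¹' {x} ∩ Y ⁻¹' {y} ∩ Z ⁻¹' {z} by
        ext ω; simp [Prod.ext_iff, and_assoc]]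
    rw [Finset.sum_congr rfl fun x _ => this x]
    rw [show (∑ x, ∑ y, ∑ z, Real.negMulLog (p x y z))
        = ∑ x, ∑ z, ∑ y, Real.negMulLog (p x y z) from
      Finset.sum_congr rfl fun x _ => Finset.sum_comm, Finset.sum_comm]
  have HXZ : Hshannon μ (fun ω => (X ω, Z ω)) = ∑ z, ∑ x, Real.negMulLog (r x z) := by
    unfold Hshannon
    rw [Fintype.sum_prod_type]
    rw [Finset.sum_congr rfl fun (x : S) _ => Finset.sum_congr rfl fun (z : U) _ =>
      (by rw [show (fun ω => (X ω, Z ω)) ⁻¹' {(x, z)} = X ⁻¹' {x} ∩ Z ⁻¹' {z} by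
            ext ω; simp [Prod.ext_iff]] :
        Real.negMulLog (μ ((fun ω => (X ω, Z ω)) ⁻¹' {(x, z)})).toReal
          = Real.negMulLog (r x z))]
    exact Finset.sum_comm
  have HYZ : Hshannon μ (fun ω => (Y ω, Z ω)) = ∑ z, ∑ y, Real.negMulLog (w y z) := by
    unfold Hshannon
    rw [Fintype.sum_prod_type]
    rw [Finset.sum_congr rfl fun (y : T) _ => Finset.sum_congr rfl fun (z : U) _ =>
      (by rw [show (fun ω => (Y ω, Z ω)) ⁻¹' {(y, z)} = Y ⁻¹' {y} ∩ Z ⁻¹' {z} by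
            ext ω; simp [Prod.ext_iff]] :
        Real.negMulLog (μ ((fun ω => (Y ω, Z ω)) ⁻¹' {(y, z)})).toReal
          = Real.negMulLog (w y z))]
    exact Finset.sum_comm
  have HZ : Hshannon μ Z = ∑ z, Real.negMulLog (q z) := rfl
  have EA : (∑ z, ∑ x, Real.negMulLog (r x z))
      = ∑ z, ∑ x, ∑ y, (-(p x y z) * Real.log (r x z)) := by
    refine Finset.sum_congr rfl fun z _ => Finset.sum_congr rfl fun x _ => ?_
    show -(r x z) * Real.log (r x z) = _
    rw [hr' x z, hexp]
  have EB : (∑ z, ∑ y, Real.negMulLog (w y z))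
      = ∑ z, ∑ x, ∑ y, (-(p x y z) * Real.log (w y z)) := by
    refine Finset.sum_congr rfl fun z _ => ?_
    rw [show (∑ x, ∑ y, (-(p x y z) * Real.log (w y z)))
        = ∑ y, ∑ x, (-(p x y z) * Real.log (w y z)) from Finset.sum_comm]
    refine Finset.sum_congr rfl fun y _ => ?_
    show -(w y z) * Real.log (w y z) = _
    rw [hw' y z, hexp]
  have EC : (∑ z, Real.negMulLog (q z))
      = ∑ z, ∑ x, ∑ y, (-(p x y z) * Real.log (q z)) := by
    refine Finset.sum_congr rfl fun z _ => ?_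
    show -(q z) * Real.log (q z) = _
    rw [show q z = ∑ x, ∑ y, p x y z from by
        rw [hq' z]; exact Finset.sum_congr rfl fun x _ => hr' x z, hexp]
    exact Finset.sum_congr rfl fun x _ => by rw [hexp]
  have hcmi : cmi μ X Y Z = ∑ z, ∑ x, ∑ y, p x y z *
      (Real.log (p x y z) + Real.log (q z) - Real.log (r x z) - Real.log (w y z)) := by
    unfold cmi
    rw [HXZ, HYZ, HXYZ, HZ, EA, EB, EC]
    simp only [← Finset.sum_add_distrib, ← Finset.sum_sub_distrib]
    refine Finset.sum_congr rfl fun z _ => Finset.sum_congr rfl fun x _ =>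
      Finset.sum_congr rfl fun y _ => ?_
    rw [show Real.negMulLog (p x y z) = -(p x y z) * Real.log (p x y z) from rfl]
    ring
  have bound : ∀ x y z, -(p x y z * (Real.log (p x y z) + Real.log (q z)
        - Real.log (r x z) - Real.log (w y z)))
      ≤ (if q z = 0 then 0 else r x z * w y z / q z) - p x y z := by
    intro x y z
    by_cases hp : p x y z = 0
    · rw [hp]
      simp only [zero_mul, neg_zero, sub_zero]
      split
      · exact le_refl 0
      · have := hr0 x z; have := hw0 y z; have := hq0 z; positivity
    · have hppos : 0 < p x y z := lt_of_le_of_ne (hp0 x y z) (Ne.symm hp)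
      have hrpos : 0 < r x z := lt_of_lt_of_le hppos (hpr x y z)
      have hwpos : 0 < w y z := lt_of_lt_of_le hppos (hpw x y z)
      have hqpos : 0 < q z := lt_of_lt_of_le hppos (hpq x y z)
      rw [if_neg (ne_of_gt hqpos)]
      have hratio : 0 < r x z * w y z / (p x y z * q z) := by positivity
      have hlog : Real.log (r x z * w y z / (p x y z * q z))
          = Real.log (r x z) + Real.log (w y z) - Real.log (p x y z) - Real.log (q z) := by
        rw [Real.log_div (by positivity) (by positivity),
          Real.log_mul (ne_of_gt hrpos) (ne_of_gt hwpos),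
          Real.log_mul hp (ne_of_gt hqpos)]
        ring
      have h1 : -(p x y z * (Real.log (p x y z) + Real.log (q z)
            - Real.log (r x z) - Real.log (w y z)))
          = p x y z * Real.log (r x z * w y z / (p x y z * q z)) := by rw [hlog]; ring
      rw [h1]
      have h3 : p x y z * Real.log (r x z * w y z / (p x y z * q z))
          ≤ p x y z * (r x z * w y z / (p x y z * q z) - 1) :=
        mul_le_mul_of_nonneg_left (Real.log_le_sub_one_of_pos hratio) (le_of_lt hppos)
      refine h3.trans (le_of_eq ?_)
      field_simp
  have hzsum : ∀ z, (∑ x, ∑ y, ((if q z = 0 then 0 else r x z * w y z / q z) - p x y z)) = 0 := by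
    intro z
    have h1 : ∑ x, ∑ y, (if q z = 0 then (0:ℝ) else r x z * w y z / q z) = q z := by
      by_cases hq : q z = 0
      · simp [hq]
      · simp only [if_neg hq]
        calc ∑ x, ∑ y, r x z * w y z / q z = ∑ x, r x z * (∑ y, w y z) / q z := by
              refine Finset.sum_congr rfl fun x _ => ?_
              rw [← Finset.sum_div, ← Finset.mul_sum]
          _ = ∑ x, r x z * q z / q z := by rw [← hq'' z]
          _ = ∑ x, r x z := Finset.sum_congr rfl fun x _ => by field_simp
          _ = q z := (hq' z).symm
    have h2 : ∑ x, ∑ y, p x y z = q z := by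
      rw [hq' z]
      exact Finset.sum_congr rfl fun x _ => (hr' x z).symm
    simp only [Finset.sum_sub_distrib]
    rw [h1, h2, sub_self]
  have hfin : -cmi μ X Y Z ≤ 0 := by
    rw [hcmi]
    calc -(∑ z, ∑ x, ∑ y, p x y z * (Real.log (p x y z) + Real.log (q z)
            - Real.log (r x z) - Real.log (w y z)))
        = ∑ z, ∑ x, ∑ y, -(p x y z * (Real.log (p x y z) + Real.log (q z)
            - Real.log (r x z) - Real.log (w y z))) := by
          simp only [← Finset.sum_neg_distrib]
      _ ≤ ∑ z, ∑ x, ∑ y, ((if q z = 0 then 0 else r x z * w y z / q z) - p x y z) :=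
          Finset.sum_le_sum (fun z _ => Finset.sum_le_sum (fun x _ =>
            Finset.sum_le_sum (fun y _ => bound x y z)))
      _ = ∑ z : U, (0:ℝ) := Finset.sum_congr rfl fun z _ => hzsum z
      _ = 0 := by simp
  linarith
end NN

section Tuples
variable {Ω : Type*} [MeasurableSpace Ω] (μ : Measure Ω)
variable {N : Type*} [DecidableEq N] {S : N → Type*} [∀ n, Fintype (S n)]
variable (X : ∀ n, Ω → S n)

/-- The joint random variable indexed by a finset. -/
def XT (A : Finset N) : Ω → ∀ i : A, S i := fun ω i => X i ω

/-- Splitting off the distinguished element of `insert a A`, element first. -/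
def insFront (a : N) (A : Finset N) (f : ∀ i : (insert a A : Finset N), S i) :
    S a × ∀ i : A, S i :=
  (f ⟨a, Finset.mem_insert_self a A⟩, fun i => f ⟨i, Finset.mem_insert_of_mem i.2⟩)

/-- Splitting off the distinguished element of `insert a A`, element last. -/
def insBack (a : N) (A : Finset N) (f : ∀ i : (insert a A : Finset N), S i) :
    (∀ i : A, S i) × S a :=
  (fun i => f ⟨i, Finset.mem_insert_of_mem i.2⟩, f ⟨a, Finset.mem_insert_self a A⟩)

/-- Splitting a union tuple into its two (possibly overlapping) pieces. -/
def unSplit (A C : Finset N) (f : ∀ i : (A ∪ C : Finset N), S i) :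
    (∀ i : A, S i) × ∀ i : C, S i :=
  (fun i => f ⟨i, Finset.mem_union_left _ i.2⟩, fun i => f ⟨i, Finset.mem_union_right _ i.2⟩)

lemma insFront_inj (a : N) (A : Finset N) : Function.Injective (insFront (S := S) a A) := by
  intro f g h
  have h1 := congrArg Prod.fst h
  have h2 := congrArg Prod.snd h
  simp only [insFront] at h1 h2
  funext i
  obtain ⟨i, hi⟩ := i
  rcases Finset.mem_insert.1 hi with h' | h'
  · subst h'
    exact h1
  · exact congrFun h2 ⟨i, h'⟩

lemma insBack_inj (a : N) (A : Finset N) : Function.Injective (insBack (S := S) a A) := by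
  intro f g h
  have h1 := congrArg Prod.fst h
  have h2 := congrArg Prod.snd h
  simp only [insBack] at h1 h2
  funext i
  obtain ⟨i, hi⟩ := i
  rcases Finset.mem_insert.1 hi with h' | h'
  · subst h'
    exact h2
  · exact congrFun h1 ⟨i, h'⟩

lemma unSplit_inj (A C : Finset N) : Function.Injective (unSplit (S := S) A C) := by
  intro f g h
  have h1 := congrArg Prod.fst h
  have h2 := congrArg Prod.snd h
  simp only [unSplit] at h1 h2
  funext i
  obtain ⟨i, hi⟩ := i
  rcases Finset.mem_union.1 hi with h' | h'
  · exact congrFun h1 ⟨i, h'⟩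
  · exact congrFun h2 ⟨i, h'⟩

instance : IsEmpty ((∅ : Finset N) : Type _) := ⟨fun i => Finset.notMem_empty i.1 i.2⟩

variable {T U : Type*} [Fintype T] [Fintype U]

/-- Peel the distinguished element off the front; it joins nothing. -/
lemma cmi_peel_front (a : N) (A C : Finset N) (Y : Ω → T) :
    cmi μ (XT X (insert a A)) Y (XT X C)
      = cmi μ (X a) Y (XT X C) + cmi μ (XT X A) Y (XT X (insert a C)) := by
  have h1 : cmi μ (fun ω => insFront (S := S) a A (XT X (insert a A) ω)) Y (XT X C)
      = cmi μ (XT X (insert a A)) Y (XT X C) :=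
    cmi_comp_inj_fst μ _ Y _ _ (insFront_inj a A)
  have h2 : cmi μ (fun ω => (X a ω, XT X A ω)) Y (XT X C)
      = cmi μ (X a) Y (XT X C) + cmi μ (XT X A) Y (fun ω => (X a ω, XT X C ω)) :=
    cmi_chain μ (X a) (XT X A) Y (XT X C)
  have h3 : cmi μ (XT X A) Y (fun ω => insFront (S := S) a C (XT X (insert a C) ω))
      = cmi μ (XT X A) Y (XT X (insert a C)) :=
    cmi_comp_inj_thd μ _ Y _ _ (insFront_inj a C)
  calc cmi μ (XT X (insert a A)) Y (XT X C)
      = cmi μ (fun ω => (X a ω, XT X A ω)) Y (XT X C) := h1.symm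
    _ = cmi μ (X a) Y (XT X C) + cmi μ (XT X A) Y (fun ω => (X a ω, XT X C ω)) := h2
    _ = cmi μ (X a) Y (XT X C) + cmi μ (XT X A) Y (XT X (insert a C)) := by rw [← h3]; rfl

/-- Peel the distinguished element off the back; the rest joins the conditioning. -/
lemma cmi_peel_back (a : N) (A C : Finset N) (Y : Ω → T) :
    cmi μ (XT X (insert a A)) Y (XT X C)
      = cmi μ (XT X A) Y (XT X C) + cmi μ (X a) Y (XT X (A ∪ C)) := by
  have h1 : cmi μ (fun ω => insBack (S := S) a A (XT X (insert a A) ω)) Y (XT X C)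
      = cmi μ (XT X (insert a A)) Y (XT X C) :=
    cmi_comp_inj_fst μ _ Y _ _ (insBack_inj a A)
  have h2 : cmi μ (fun ω => (XT X A ω, X a ω)) Y (XT X C)
      = cmi μ (XT X A) Y (XT X C) + cmi μ (X a) Y (fun ω => (XT X A ω, XT X C ω)) :=
    cmi_chain μ (XT X A) (X a) Y (XT X C)
  have h3 : cmi μ (X a) Y (fun ω => unSplit (S := S) A C (XT X (A ∪ C) ω))
      = cmi μ (X a) Y (XT X (A ∪ C)) :=
    cmi_comp_inj_thd μ _ Y _ _ (unSplit_inj A C)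
  calc cmi μ (XT X (insert a A)) Y (XT X C)
      = cmi μ (fun ω => (XT X A ω, X a ω)) Y (XT X C) := h1.symm
    _ = cmi μ (XT X A) Y (XT X C) + cmi μ (X a) Y (fun ω => (XT X A ω, XT X C ω)) := h2
    _ = cmi μ (XT X A) Y (XT X C) + cmi μ (X a) Y (XT X (A ∪ C)) := by rw [← h3]; rfl

lemma cmi_empty_left (Y : Ω → T) (Z : Ω → U) : cmi μ (XT X ∅) Y Z = 0 :=
  cmi_const_left μ _ Y Z

lemma cmi_empty_mid (Y : Ω → T) (Z : Ω → U) : cmi μ Y (XT X ∅) Z = 0 :=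
  cmi_const_mid μ Y _ Z

variable [∀ n, MeasurableSpace (S n)] [∀ n, MeasurableSingletonClass (S n)]

lemma XT_fiber_measurable (hX : ∀ n, Measurable (X n)) (A : Finset N) :
    ∀ f, MeasurableSet ((XT X A) ⁻¹' {f}) := by
  intro f
  have : (XT X A) ⁻¹' {f} = ⋂ i : A, (X i) ⁻¹' {f i} := by
    ext ω
    simp only [Set.mem_preimage, Set.mem_singleton_iff, Set.mem_iInter, XT, funext_iff]
  rw [this]
  exact MeasurableSet.iInter fun i => hX i (measurableSet_singleton _)

lemma X_fiber_measurable (hX : ∀ n, Measurable (X n)) (n : N) :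
    ∀ s, MeasurableSet ((X n) ⁻¹' {s}) :=
  fun s => hX n (measurableSet_singleton s)

variable [IsProbabilityMeasure μ]

lemma cmi_mono_union (hX : ∀ n, Measurable (X n)) (A D C : Finset N)
    (Y : Ω → T) (hY : ∀ t, MeasurableSet (Y ⁻¹' {t})) :
    cmi μ (XT X A) Y (XT X C) ≤ cmi μ (XT X (A ∪ D)) Y (XT X C) := by
  classical
  induction D using Finset.induction with
  | empty => rw [Finset.union_empty]
  | @insert d D hd ih =>
      rw [Finset.union_insert, cmi_peel_back μ X d (A ∪ D) C Y]
      refine ih.trans (le_add_of_nonneg_right ?_)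
      exact cmi_nonneg μ _ _ _ (X_fiber_measurable X hX d) hY
        (XT_fiber_measurable X hX (A ∪ D ∪ C))

lemma cmi_mono_subset (hX : ∀ n, Measurable (X n)) {A A' : Finset N} (h : A ⊆ A')
    (C : Finset N) (Y : Ω → T) (hY : ∀ t, MeasurableSet (Y ⁻¹' {t})) :
    cmi μ (XT X A) Y (XT X C) ≤ cmi μ (XT X A') Y (XT X C) := by
  rw [← Finset.union_sdiff_of_subset h]
  exact cmi_mono_union μ X hX A (A' \ A) C Y hY

end Tuples

section Main
variable {Ω : Type*} [MeasurableSpace Ω] (μ : Measure Ω)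
variable {N : Type*} [DecidableEq N] {S : N → Type*} [∀ n, Fintype (S n)]
variable (X : ∀ n, Ω → S n)

lemma inner_zero (a : N) (B : Finset N) : ∀ (C : Finset N), Disjoint B C →
    (∀ j ∈ B, ∀ L, C ⊆ L → L ⊆ (B ∪ C) \ {j} → cmi μ (X a) (X j) (XT X L) = 0) →
    cmi μ (X a) (XT X B) (XT X C) = 0 := by
  classical
  induction B using Finset.induction with
  | empty => intro C _ _; exact cmi_empty_mid μ X _ _
  | @insert b B hb ih =>
    intro C hBC h
    have hbC : b ∉ C := Finset.disjoint_left.1 hBC (Finset.mem_insert_self b B)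
    rw [cmi_comm μ (X a) (XT X (insert b B)) (XT X C), cmi_peel_front μ X b B C (X a)]
    have e1 : cmi μ (X b) (X a) (XT X C) = 0 := by
      rw [cmi_comm μ (X b) (X a) (XT X C)]
      refine h b (Finset.mem_insert_self b B) C (subset_refl C) ?_
      intro x hx
      rw [Finset.mem_sdiff]
      refine ⟨Finset.mem_union_right _ hx, ?_⟩
      rw [Finset.mem_singleton]
      rintro rfl
      exact hbC hx
    have e2 : cmi μ (XT X B) (X a) (XT X (insert b C)) = 0 := by
      rw [← cmi_comm μ (X a) (XT X B) (XT X (insert b C))]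
      refine ih (insert b C) ?_ ?_
      · rw [Finset.disjoint_insert_right]
        exact ⟨hb, hBC.mono_left (Finset.subset_insert b B)⟩
      · intro j hj L hCL hLsub
        refine h j (Finset.mem_insert_of_mem hj) L
          ((Finset.subset_insert b C).trans hCL) ?_
        have hset : B ∪ insert b C = insert b B ∪ C := by
          rw [Finset.union_insert, Finset.insert_union]
        rw [hset] at hLsub
        exact hLsub
    rw [e1, e2, add_zero]

lemma outer_zero (B : Finset N) (A : Finset N) : ∀ (C : Finset N), Disjoint A B →
    Disjoint A C → Disjoint B C →
    (∀ i ∈ A, ∀ j ∈ B, ∀ L, C ⊆ L → L ⊆ (A ∪ B ∪ C) \ {i, j} →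
      cmi μ (X i) (X j) (XT X L) = 0) →
    cmi μ (XT X A) (XT X B) (XT X C) = 0 := by
  classical
  induction A using Finset.induction with
  | empty => intro C _ _ _ _; exact cmi_empty_left μ X _ _
  | @insert a A ha ih =>
    intro C hAB hAC hBC h
    have haB : a ∉ B := Finset.disjoint_left.1 hAB (Finset.mem_insert_self a A)
    have haC : a ∉ C := Finset.disjoint_left.1 hAC (Finset.mem_insert_self a A)
    rw [cmi_peel_front μ X a A C (XT X B)]
    have e1 : cmi μ (X a) (XT X B) (XT X C) = 0 := by
      refine inner_zero μ X a B C hBC ?_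
      intro j hj L hCL hLsub
      refine h a (Finset.mem_insert_self a A) j hj L hCL ?_
      intro x hx
      have hx' := hLsub hx
      rw [Finset.mem_sdiff] at hx' ⊢
      obtain ⟨hxu, hxj⟩ := hx'
      rw [Finset.mem_singleton] at hxj
      constructor
      · rcases Finset.mem_union.1 hxu with h' | h'
        · exact Finset.mem_union_left _ (Finset.mem_union_right _ h')
        · exact Finset.mem_union_right _ h'
      · rw [Finset.mem_insert, Finset.mem_singleton]
        rintro (rfl | rfl)
        · rcases Finset.mem_union.1 hxu with h' | h'
          · exact haB h'
          · exact haC h'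
        · exact hxj rfl
    have e2 : cmi μ (XT X A) (XT X B) (XT X (insert a C)) = 0 := by
      refine ih (insert a C) (hAB.mono_left (Finset.subset_insert a A)) ?_ ?_ ?_
      · rw [Finset.disjoint_insert_right]
        exact ⟨ha, hAC.mono_left (Finset.subset_insert a A)⟩
      · rw [Finset.disjoint_insert_right]
        exact ⟨haB, hBC⟩
      · intro i hi j hj L hCL hLsub
        refine h i (Finset.mem_insert_of_mem hi) j hj L
          ((Finset.subset_insert a C).trans hCL) ?_
        have hset : A ∪ B ∪ insert a C = insert a A ∪ B ∪ C := by
          ext x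
          simp only [Finset.mem_union, Finset.mem_insert]
          tauto
        rw [hset] at hLsub
        exact hLsub
    rw [e1, e2, add_zero]

end Main

/-- **Reduction to elementary CI statements.** For pairwise disjoint `I, J, K ⊆ N`,
`I[X_I : X_J | X_K] = 0` holds iff for all `i ∈ I`, `j ∈ J` and all `L` with
`K ⊆ L ⊆ (I ∪ J ∪ K) \ {i, j}`, the elementary statement `I[X_i : X_j | X_L] = 0` holds. -/
theorem ci_iff_elementary_ci
    {Ω : Type*} [MeasurableSpace Ω] (μ : Measure Ω) [IsProbabilityMeasure μ]
    {N : Type*} [Fintype N] [DecidableEq N]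
    {S : N → Type*} [∀ n, Fintype (S n)] [∀ n, Nonempty (S n)]
    [∀ n, MeasurableSpace (S n)] [∀ n, MeasurableSingletonClass (S n)]
    (X : ∀ n, Ω → S n) (hX : ∀ n, Measurable (X n))
    (I J K : Finset N) (hIJ : Disjoint I J) (hIK : Disjoint I K) (hJK : Disjoint J K) :
    cmi μ (fun ω => fun i : I => X i ω) (fun ω => fun j : J => X j ω)
        (fun ω => fun k : K => X k ω) = 0 ↔
      ∀ i ∈ I, ∀ j ∈ J, ∀ L : Finset N, K ⊆ L → L ⊆ (I ∪ J ∪ K) \ {i, j} →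
        cmi μ (X i) (X j) (fun ω => fun l : L => X l ω) = 0 := by
  constructor
  · intro h0 i hi j hj L hKL hLsub
    have hI0 : cmi μ (XT X I) (XT X J) (XT X K) = 0 := h0
    have hiL : i ∉ L := fun hmem => by
      have := hLsub hmem
      rw [Finset.mem_sdiff] at this
      exact this.2 (Finset.mem_insert_self i {j})
    have hjL : j ∉ L := fun hmem => by
      have := hLsub hmem
      rw [Finset.mem_sdiff] at this
      exact this.2 (Finset.mem_insert_of_mem (Finset.mem_singleton_self j))
    have hLU : ∀ x ∈ L, x ∈ I ∪ J ∪ K := fun x hx => (Finset.mem_sdiff.1 (hLsub hx)).1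
    have hL : L ∩ J ∪ (L ∩ I ∪ K) = L := by
      ext x
      simp only [Finset.mem_union, Finset.mem_inter]
      constructor
      · rintro ((⟨h1, _⟩) | (⟨h1, _⟩ | h1))
        · exact h1
        · exact h1
        · exact hKL h1
      · intro hx
        have := hLU x hx
        rw [Finset.mem_union, Finset.mem_union] at this
        tauto
    have step1 : cmi μ (X i) (X j) (XT X L)
        ≤ cmi μ (XT X (insert j (L ∩ J))) (X i) (XT X (L ∩ I ∪ K)) := by
      rw [cmi_peel_back μ X j (L ∩ J) (L ∩ I ∪ K) (X i), hL]
      have hnn := cmi_nonneg μ (XT X (L ∩ J)) (X i) (XT X (L ∩ I ∪ K))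
        (XT_fiber_measurable X hX _) (X_fiber_measurable X hX i)
        (XT_fiber_measurable X hX _)
      have hc := cmi_comm μ (X j) (X i) (XT X L)
      linarith
    have step2 : cmi μ (XT X (insert j (L ∩ J))) (X i) (XT X (L ∩ I ∪ K))
        ≤ cmi μ (XT X (insert i (L ∩ I))) (XT X (insert j (L ∩ J))) (XT X K) := by
      rw [cmi_peel_back μ X i (L ∩ I) K (XT X (insert j (L ∩ J)))]
      have hc := cmi_comm μ (X i) (XT X (insert j (L ∩ J))) (XT X (L ∩ I ∪ K))
      have hnn := cmi_nonneg μ (XT X (L ∩ I)) (XT X (insert j (L ∩ J))) (XT X K)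
        (XT_fiber_measurable X hX _) (XT_fiber_measurable X hX _)
        (XT_fiber_measurable X hX _)
      linarith
    have hsubI : insert i (L ∩ I) ⊆ I :=
      Finset.insert_subset_iff.2 ⟨hi, Finset.inter_subset_right⟩
    have hsubJ : insert j (L ∩ J) ⊆ J :=
      Finset.insert_subset_iff.2 ⟨hj, Finset.inter_subset_right⟩
    have step3 : cmi μ (XT X (insert i (L ∩ I))) (XT X (insert j (L ∩ J))) (XT X K)
        ≤ cmi μ (XT X I) (XT X J) (XT X K) := by
      have m1 : cmi μ (XT X (insert i (L ∩ I))) (XT X (insert j (L ∩ J))) (XT X K)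
          ≤ cmi μ (XT X I) (XT X (insert j (L ∩ J))) (XT X K) :=
        cmi_mono_subset μ X hX hsubI K _ (XT_fiber_measurable X hX _)
      have m2 : cmi μ (XT X (insert j (L ∩ J))) (XT X I) (XT X K)
          ≤ cmi μ (XT X J) (XT X I) (XT X K) :=
        cmi_mono_subset μ X hX hsubJ K _ (XT_fiber_measurable X hX _)
      have c1 := cmi_comm μ (XT X I) (XT X (insert j (L ∩ J))) (XT X K)
      have c2 := cmi_comm μ (XT X I) (XT X J) (XT X K)
      linarith
    have hnnL : 0 ≤ cmi μ (X i) (X j) (XT X L) :=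
      cmi_nonneg μ (X i) (X j) (XT X L) (X_fiber_measurable X hX i)
        (X_fiber_measurable X hX j) (XT_fiber_measurable X hX L)
    show cmi μ (X i) (X j) (XT X L) = 0
    linarith
  · intro h
    show cmi μ (XT X I) (XT X J) (XT X K) = 0
    exact outer_zero μ X J I K hIJ hIK hJK h
end

section
/- For every real λ > 0 and every real α with 0 < α < log 2, there exist jointly distributed random variables A, X, Y on some probability space, each taking values in a finite nonempty set, such that H[X | (A, Y)] = 0, H[Y | (A, X)] = 0, I[A : X] = 0, I[A : Y] = 0, H[X] = H[Y] = α, H[A | (X, Y)] > 0, and α + λ · H[A | (X, Y)] < log⌈exp(H[A])⌉. In particular, the tightness assumption H[A | (X, Y)] = 0 is essential in Matúš's piecewise linear conditional information inequality: its conclusion H[X] ≥ log⌈exp(H[A])⌉ fails by a fixed amount even when H[A | (X, Y)] is arbitrarily small. -/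
open MeasureTheory ProbabilityTheory

/-- Existence of a Bernoulli parameter achieving any entropy value in `[0, log 2]`. -/
lemma exists_bern_aux (t : ℝ) (ht0 : 0 ≤ t) (ht : t ≤ Real.log 2) :
    ∃ p : ℝ, 0 ≤ p ∧ p ≤ 1 ∧ Real.negMulLog p + Real.negMulLog (1 - p) = t := by
  have hc : ContinuousOn (fun x : ℝ => Real.negMulLog x + Real.negMulLog (1 - x))
      (Set.Icc 0 (1/2)) := by fun_prop
  have h0 : Real.negMulLog (0:ℝ) + Real.negMulLog (1 - 0) = 0 := by
    norm_num [Real.negMulLog]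
  have hhalf : Real.negMulLog (1/2 : ℝ) + Real.negMulLog (1 - 1/2) = Real.log 2 := by
    rw [show (1:ℝ) - 1/2 = 1/2 by norm_num, show (1:ℝ)/2 = 2⁻¹ by norm_num]
    simp [Real.negMulLog, Real.log_inv]; ring
  have hmem : t ∈ Set.Icc (Real.negMulLog (0:ℝ) + Real.negMulLog (1 - 0))
      (Real.negMulLog (1/2:ℝ) + Real.negMulLog (1 - 1/2)) := by
    rw [h0, hhalf]; exact ⟨ht0, ht⟩
  obtain ⟨p, hp, hfp⟩ := intermediate_value_Icc (by norm_num : (0:ℝ) ≤ 1/2) hc hmem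
  exact ⟨p, hp.1, by linarith [hp.2], hfp⟩

/-- **Tightness is essential in Matúš's piecewise linear conditional information
inequality.** For every `λ > 0` and every `0 < α < log 2` there are finite-valued random
variables `A, X, Y` with `H[X|(A,Y)] = H[Y|(A,X)] = I[A:X] = I[A:Y] = 0`,
`H[X] = H[Y] = α` and `H[A|(X,Y)] > 0`, while
`α + λ·H[A|(X,Y)] < log⌈exp H[A]⌉`. -/
theorem matus_tightness_essential (lam α : ℝ) (hlam : 0 < lam)
    (hα0 : 0 < α) (hα2 : α < Real.log 2) :
    ∃ (Ω : Type) (_ : MeasurableSpace Ω) (μ : Measure Ω) (_ : IsProbabilityMeasure μ)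
      (SA SX SY : Type)
      (_ : Fintype SA) (_ : Nonempty SA) (_ : MeasurableSpace SA)
      (_ : MeasurableSingletonClass SA)
      (_ : Fintype SX) (_ : Nonempty SX) (_ : MeasurableSpace SX)
      (_ : MeasurableSingletonClass SX)
      (_ : Fintype SY) (_ : Nonempty SY) (_ : MeasurableSpace SY)
      (_ : MeasurableSingletonClass SY)
      (A : Ω → SA) (X : Ω → SX) (Y : Ω → SY),
      Measurable A ∧ Measurable X ∧ Measurable Y ∧
      condH μ X (fun ω => (A ω, Y ω)) = 0 ∧
      condH μ Y (fun ω => (A ω, X ω)) = 0 ∧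
      mutInfo μ A X = 0 ∧ mutInfo μ A Y = 0 ∧
      Hshannon μ X = α ∧ Hshannon μ Y = α ∧
      0 < condH μ A (fun ω => (X ω, Y ω)) ∧
      α + lam * condH μ A (fun ω => (X ω, Y ω)) <
        Real.log (⌈Real.exp (Hshannon μ A)⌉ : ℝ) := by
  classical
  have hlog2 : 0 < Real.log 2 := Real.log_pos (by norm_num)
  set ε : ℝ := min ((Real.log 2 - α) / (2 * lam)) (Real.log 2) with hεdef
  have hε0 : 0 < ε := lt_min (div_pos (by linarith) (by linarith)) hlog2
  have hε2 : ε ≤ Real.log 2 := min_le_right _ _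
  have hε1 : ε ≤ (Real.log 2 - α) / (2 * lam) := min_le_left _ _
  obtain ⟨p, hp0, hp1, hp⟩ := exists_bern_aux α hα0.le hα2.le
  obtain ⟨q, hq0, hq1, hq⟩ := exists_bern_aux ε hε0.le hε2
  set P : Bool → ℝ := fun b => bif b then p else 1 - p with hPdef
  set Q : Bool → ℝ := fun b => bif b then q else 1 - q with hQdef
  have hPn : ∀ b, 0 ≤ P b := by rintro (_|_) <;> simp [P] <;> linarith
  have hQn : ∀ b, 0 ≤ Q b := by rintro (_|_) <;> simp [Q] <;> linarith
  set w : Bool × Bool → ENNReal := fun z => ENNReal.ofReal (P z.1 * Q z.2) with hwdef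
  have hw : ∑ z, w z = 1 := by
    rw [Fintype.sum_prod_type, Fintype.sum_bool]
    rw [Fintype.sum_bool, Fintype.sum_bool]
    simp only [w]
    have m : ∀ a b : Bool, 0 ≤ P a * Q b := fun a b => mul_nonneg (hPn a) (hQn b)
    rw [← ENNReal.ofReal_add (m _ _) (m _ _), ← ENNReal.ofReal_add (m _ _) (m _ _),
        ← ENNReal.ofReal_add (by exact add_nonneg (m _ _) (m _ _))
          (by exact add_nonneg (m _ _) (m _ _))]
    rw [show P true * Q true + P true * Q false + (P false * Q true + P false * Q false) = 1 by
      simp [P, Q]; ring]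
    exact ENNReal.ofReal_one
  set pm : PMF (Bool × Bool) := PMF.ofFintype w hw with hpm
  set μ : Measure (Bool × Bool) := pm.toMeasure with hμ
  have key : ∀ S : Set (Bool × Bool),
      (μ S).toReal = ∑ z : Bool × Bool, if z ∈ S then P z.1 * Q z.2 else 0 := by
    intro S
    rw [hμ, PMF.toMeasure_apply_fintype, ENNReal.toReal_sum (fun a _ => ?_)]
    · refine Finset.sum_congr rfl fun z _ => ?_
      simp only [Set.indicator_apply, hpm, PMF.ofFintype_apply, apply_ite ENNReal.toReal,
        ENNReal.toReal_ofReal (mul_nonneg (hPn z.1) (hQn z.2)), ENNReal.toReal_zero, w]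
    · simp only [Set.indicator_apply, hpm, PMF.ofFintype_apply, w]
      split <;> simp [ENNReal.ofReal_ne_top]
  set N := Real.negMulLog with hN
  -- entropy computations
  have HX : Hshannon μ (fun z : Bool × Bool => z.1) = N p + N (1 - p) := by
    simp only [Hshannon, key, Fintype.sum_prod_type, Fintype.sum_bool, Set.mem_preimage,
      Set.mem_singleton_iff]
    norm_num [P, Q]
    rw [show p * q + p * (1-q) = p by ring, show (1-p) * q + (1-p) * (1-q) = 1 - p by ring]
  have HA : Hshannon μ (fun z : Bool × Bool => z.2) = N q + N (1 - q) := by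
    simp only [Hshannon, key, Fintype.sum_prod_type, Fintype.sum_bool, Set.mem_preimage,
      Set.mem_singleton_iff]
    norm_num [P, Q]
    rw [show p * q + (1-p) * q = q by ring, show p * (1-q) + (1-p) * (1-q) = 1 - q by ring]
  have H2 : Hshannon μ (fun z : Bool × Bool => (z.2, z.1)) =
      N (p*q) + N (p*(1-q)) + N ((1-p)*q) + N ((1-p)*(1-q)) := by
    simp only [Hshannon, key, Fintype.sum_prod_type, Fintype.sum_bool, Set.mem_preimage,
      Set.mem_singleton_iff, Prod.mk.injEq]
    norm_num [P, Q]
    ring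
  have H3 : Hshannon μ (fun z : Bool × Bool => (z.1, (z.2, z.1))) =
      N (p*q) + N (p*(1-q)) + N ((1-p)*q) + N ((1-p)*(1-q)) := by
    simp only [Hshannon, key, Fintype.sum_prod_type, Fintype.sum_bool, Set.mem_preimage,
      Set.mem_singleton_iff, Prod.mk.injEq]
    norm_num [P, Q]
    ring
  have H4 : Hshannon μ (fun z : Bool × Bool => (z.2, (z.1, z.1))) =
      N (p*q) + N (p*(1-q)) + N ((1-p)*q) + N ((1-p)*(1-q)) := by
    simp only [Hshannon, key, Fintype.sum_prod_type, Fintype.sum_bool, Set.mem_preimage,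
      Set.mem_singleton_iff, Prod.mk.injEq]
    norm_num [P, Q]
    ring
  have H5 : Hshannon μ (fun z : Bool × Bool => (z.1, z.1)) = N p + N (1 - p) := by
    simp only [Hshannon, key, Fintype.sum_prod_type, Fintype.sum_bool, Set.mem_preimage,
      Set.mem_singleton_iff, Prod.mk.injEq]
    norm_num [P, Q]
    rw [show p * q + p * (1-q) = p by ring, show (1-p) * q + (1-p) * (1-q) = 1 - p by ring]
  have hsplit : N (p*q) + N (p*(1-q)) + N ((1-p)*q) + N ((1-p)*(1-q)) =
      (N p + N (1 - p)) + (N q + N (1 - q)) := by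
    simp only [hN, Real.negMulLog_mul]; ring
  refine ⟨Bool × Bool, inferInstance, μ, by rw [hμ]; infer_instance,
    Bool, Bool, Bool, inferInstance, inferInstance, inferInstance, inferInstance,
    inferInstance, inferInstance, inferInstance, inferInstance,
    inferInstance, inferInstance, inferInstance, inferInstance,
    Prod.snd, Prod.fst, Prod.fst,
    measurable_snd, measurable_fst, measurable_fst, ?_, ?_, ?_, ?_, ?_, ?_, ?_, ?_⟩
  · show Hshannon μ (fun z : Bool × Bool => (z.1, (z.2, z.1)))
      - Hshannon μ (fun z : Bool × Bool => (z.2, z.1)) = 0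
    rw [H3, H2]; ring
  · show Hshannon μ (fun z : Bool × Bool => (z.1, (z.2, z.1)))
      - Hshannon μ (fun z : Bool × Bool => (z.2, z.1)) = 0
    rw [H3, H2]; ring
  · show Hshannon μ (fun z : Bool × Bool => z.2) + Hshannon μ (fun z : Bool × Bool => z.1)
      - Hshannon μ (fun z : Bool × Bool => (z.2, z.1)) = 0
    rw [HA, HX, H2, hsplit]; ring
  · show Hshannon μ (fun z : Bool × Bool => z.2) + Hshannon μ (fun z : Bool × Bool => z.1)
      - Hshannon μ (fun z : Bool × Bool => (z.2, z.1)) = 0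
    rw [HA, HX, H2, hsplit]; ring
  · show Hshannon μ (fun z : Bool × Bool => z.1) = α
    rw [HX]; exact hp
  · show Hshannon μ (fun z : Bool × Bool => z.1) = α
    rw [HX]; exact hp
  · show 0 < Hshannon μ (fun z : Bool × Bool => (z.2, (z.1, z.1)))
      - Hshannon μ (fun z : Bool × Bool => (z.1, z.1))
    rw [H4, H5, hsplit, hq]; linarith
  · show α + lam * (Hshannon μ (fun z : Bool × Bool => (z.2, (z.1, z.1)))
      - Hshannon μ (fun z : Bool × Bool => (z.1, z.1))) <
      Real.log (⌈Real.exp (Hshannon μ (fun z : Bool × Bool => z.2))⌉ : ℝ)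
    rw [H4, H5, hsplit, hq, HA, hq,
      show (N p + N (1-p)) + ε - (N p + N (1-p)) = ε by ring]
    have hexple : Real.exp ε ≤ 2 := by
      calc Real.exp ε ≤ Real.exp (Real.log 2) := Real.exp_le_exp.mpr hε2
        _ = 2 := Real.exp_log (by norm_num)
    have hceil : ⌈Real.exp ε⌉ = 2 := by
      rw [Int.ceil_eq_iff]
      constructor
      · push_cast
        linarith [Real.one_lt_exp_iff.2 hε0]
      · push_cast; exact hexple
    rw [hceil]
    rw [show ((2:ℤ):ℝ) = 2 by norm_num]
    have hle : lam * ε ≤ (Real.log 2 - α) / 2 := by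
      rw [show (Real.log 2 - α) / 2 = lam * ((Real.log 2 - α) / (2 * lam)) by
        field_simp]
      exact mul_le_mul_of_nonneg_left hε1 hlam.le
    linarith
end
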